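/- arXiv:math/0006016 — 3 statements merged into one kernel-verified Lean document; each statement's English description precedes it below -/
import Mathlib

section
/- Let a>0, α>0, β≥0, g∈L^∞(0,a), let τ₁,τ₂:[0,a]→[−∞,+∞] be continuous with τ₁≤τ₂, U:={(x,t)∈(0,a)×ℝ : τ₁(x)<t<τ₂(x)}, and let u be piecewise C¹ with finite jump set with graph Γ_u⊂U. Suppose φ=(φ^x,φ^t):U→ℝ×ℝ is a bounded C¹ vector field satisfying conditions (a1), (a2), (b1), (b2), (c1) of the one-dimensional calibration theorem, and in addition the Neumann condition: lim_{(y,s)→(0,t)}φ^x(y,s)=0 for a.e. t∈[τ₁(0),τ₂(0)] and lim_{(y,s)→(a,t)}φ^x(y,s)=0 for a.e. t∈[τ₁(a),τ₂(a)]. Then F(u)≤F(v) for every v piecewise C¹ with finite jump set on (0,a) with graph Γ_v⊂U (no boundary condition on v). -/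
open MeasureTheory Set Filter
open scoped Interval

/-- A piecewise `C¹` function with finite jump set on the interval `(0, a)`:
there is a finite set `S ⊆ (0,a)` such that the function is `C¹` on `(0,a) \ S`,
the function and its derivative extend continuously to the closure of each
connected component of `(0,a) \ S` (i.e. have one-sided limits at `0`, `a` and at
each point of `S`), and the one-sided limits differ exactly at the points of `S`. -/
structure PiecewiseC1 (a : ℝ) where
  /-- the function -/
  f : ℝ → ℝ
  /-- its derivative (off the jump set) -/
  f' : ℝ → ℝ
  /-- the (finite) jump set -/
  S : Finset ℝ
  /-- the left limits `f(x−)` -/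
  limL : ℝ → ℝ
  /-- the right limits `f(x+)` -/
  limR : ℝ → ℝ
  S_sub : ∀ x ∈ S, x ∈ Set.Ioo 0 a
  hasDeriv : ∀ x ∈ Set.Ioo 0 a \ (S : Set ℝ), HasDerivAt f (f' x) x
  derivCont : ContinuousOn f' (Set.Ioo 0 a \ (S : Set ℝ))
  tendsto_limL : ∀ x ∈ Set.Ioc 0 a, Filter.Tendsto f (nhdsWithin x (Set.Iio x)) (nhds (limL x))
  tendsto_limR : ∀ x ∈ Set.Ico 0 a, Filter.Tendsto f (nhdsWithin x (Set.Ioi x)) (nhds (limR x))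
  jump_iff : ∀ x ∈ Set.Ioo 0 a, (limL x ≠ limR x ↔ x ∈ S)
  deriv_limL : ∀ x ∈ Set.Ioc 0 a, ∃ L : ℝ, Filter.Tendsto f' (nhdsWithin x (Set.Iio x)) (nhds L)
  deriv_limR : ∀ x ∈ Set.Ico 0 a, ∃ L : ℝ, Filter.Tendsto f' (nhdsWithin x (Set.Ioi x)) (nhds L)

namespace PiecewiseC1

variable {a : ℝ}

/-- `v⁻(x)`: the smaller one-sided limit at jump points, `v(x)` elsewhere. -/
noncomputable def lower (v : PiecewiseC1 a) (x : ℝ) : ℝ :=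
  if x ∈ v.S then min (v.limL x) (v.limR x) else v.f x

/-- `v⁺(x)`: the larger one-sided limit at jump points, `v(x)` elsewhere. -/
noncomputable def upper (v : PiecewiseC1 a) (x : ℝ) : ℝ :=
  if x ∈ v.S then max (v.limL x) (v.limR x) else v.f x

/-- `ν_v(x) = sign (v(x+) − v(x−))`. -/
noncomputable def nu (v : PiecewiseC1 a) (x : ℝ) : ℝ :=
  Real.sign (v.limR x - v.limL x)

/-- The (complete) graph `Γ_v = {(x,t) : v⁻(x) ≤ t ≤ v⁺(x)}` is contained in `U`. -/
def GraphIn (v : PiecewiseC1 a) (U : Set (ℝ × ℝ)) : Prop :=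
  ∀ x ∈ Set.Ioo 0 a, ∀ t : ℝ, v.lower x ≤ t → t ≤ v.upper x → (x, t) ∈ U

end PiecewiseC1

/-- The one-dimensional Mumford–Shah functional
`F(v) = ∫₀ᵃ |v'|² dx + α card S_v + β ∫₀ᵃ |v − g|² dx`. -/
noncomputable def MS (a α β : ℝ) (g : ℝ → ℝ) (v : PiecewiseC1 a) : ℝ :=
  (∫ x in Set.Ioo 0 a, (v.f' x) ^ 2) + α * (v.S.card : ℝ)
    + β * ∫ x in Set.Ioo 0 a, (v.f x - g x) ^ 2


section MSaux

open MeasureTheory Set Filter Topology Asymptotics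

/-- interval integrability of a bounded measurable function -/
lemma MSaux_intinteg1 {f : ℝ → ℝ} (hm : Measurable f)
    {C : ℝ} (hb : ∀ s, |f s| ≤ C) (c d : ℝ) :
    IntervalIntegrable f MeasureTheory.volume c d := by
  rw [intervalIntegrable_iff]
  exact Measure.integrableOn_of_bounded (by rw [Set.uIoc]; exact measure_Ioc_lt_top.ne)
    hm.aestronglyMeasurable
    (Filter.Eventually.of_forall fun s => by simpa [Real.norm_eq_abs] using hb s)

lemma MSaux_intinteg {Φ : ℝ → ℝ → ℝ} (hm : Measurable (Function.uncurry Φ))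
    {C : ℝ} (hb : ∀ x s, |Φ x s| ≤ C) (x c d : ℝ) :
    IntervalIntegrable (Φ x) MeasureTheory.volume c d :=
  MSaux_intinteg1 hm.of_uncurry_left (hb x) c d

/-- integrability of an a.e.-measurable bounded function on a finite-measure set -/
lemma MSaux_integrableOn {s : Set ℝ} (hfin : volume s < ⊤) {f : ℝ → ℝ}
    (hm : AEMeasurable f (volume.restrict s)) {M : ℝ}
    (hb : ∀ᵐ x ∂(volume.restrict s), |f x| ≤ M) : IntegrableOn f s volume :=
  ⟨hm.aestronglyMeasurable,
    HasFiniteIntegral.restrict_of_bounded (C := M) hfin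
      (by simpa [Real.norm_eq_abs] using hb)⟩

end MSaux

section MSaux2
open MeasureTheory Set Filter Topology Asymptotics



lemma MSaux_tendsto_moving {Φ : ℝ → ℝ → ℝ} (hm : Measurable (Function.uncurry Φ))
    {C : ℝ} (hb : ∀ x s, |Φ x s| ≤ C)
    {l : Filter ℝ} [l.IsCountablyGenerated]
    {uu vv : ℝ → ℝ} {p q : ℝ} (hu : Tendsto uu l (𝓝 p)) (hv : Tendsto vv l (𝓝 q))
    {L : ℝ → ℝ} (hLm : AEStronglyMeasurable L (volume.restrict (Ι p q)))
    (hconv : ∀ᵐ s ∂(volume.restrict (Ι p q)), Tendsto (fun x => Φ x s) l (𝓝 (L s))) :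
    Tendsto (fun x => ∫ s in uu x..vv x, Φ x s) l (𝓝 (∫ s in p..q, L s)) := by
  have hint : ∀ x c d, IntervalIntegrable (Φ x) volume c d := MSaux_intinteg hm hb
  have hsplit : ∀ x, (∫ s in uu x..vv x, Φ x s)
      = (∫ s in p..q, Φ x s) + ((∫ s in q..vv x, Φ x s) - (∫ s in p..uu x, Φ x s)) := by
    intro x
    have h1 : (∫ s in uu x..p, Φ x s) + (∫ s in p..vv x, Φ x s) = ∫ s in uu x..vv x, Φ x s :=
      intervalIntegral.integral_add_adjacent_intervals (hint _ _ _) (hint _ _ _)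
    have h2 : (∫ s in p..q, Φ x s) + (∫ s in q..vv x, Φ x s) = ∫ s in p..vv x, Φ x s :=
      intervalIntegral.integral_add_adjacent_intervals (hint _ _ _) (hint _ _ _)
    have h3 : (∫ s in uu x..p, Φ x s) = - ∫ s in p..uu x, Φ x s :=
      intervalIntegral.integral_symm _ _
    linarith
  have t2 : Tendsto (fun x => ∫ s in p..q, Φ x s) l (𝓝 (∫ s in p..q, L s)) := by
    refine intervalIntegral.tendsto_integral_filter_of_dominated_convergence (fun _ => C)
      (Eventually.of_forall fun x => (hm.of_uncurry_left).aestronglyMeasurable)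
      (Eventually.of_forall fun x => Eventually.of_forall fun s _ => by
        simpa [Real.norm_eq_abs] using hb x s)
      intervalIntegrable_const ?_
    exact (ae_restrict_iff' measurableSet_uIoc).mp hconv
  have tzero : ∀ (r : ℝ) (ww : ℝ → ℝ), Tendsto ww l (𝓝 r) →
      Tendsto (fun x => ∫ s in r..ww x, Φ x s) l (𝓝 0) := by
    intro r ww hww
    have hg : Tendsto (fun x => C * |ww x - r|) l (𝓝 0) := by
      have h1 : Tendsto (fun x => C * |ww x - r|) l (𝓝 (C * |r - r|)) :=
        ((hww.sub_const r).abs).const_mul C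
      simpa using h1
    refine squeeze_zero_norm (fun x => ?_) hg
    simpa [Real.norm_eq_abs] using
      intervalIntegral.norm_integral_le_of_norm_le_const
        (f := Φ x) (a := r) (b := ww x) (C := C)
        (fun s _ => by simpa [Real.norm_eq_abs] using hb x s)
  have total : Tendsto (fun x => (∫ s in p..q, Φ x s)
      + ((∫ s in q..vv x, Φ x s) - (∫ s in p..uu x, Φ x s))) l (𝓝 (∫ s in p..q, L s)) := by
    have := t2.add ((tzero q vv hv).sub (tzero p uu hu))
    simpa using this
  exact total.congr (fun x => (hsplit x).symm)

end MSaux2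

section MSaux2
open MeasureTheory Set Filter Topology Asymptotics


lemma MSaux_bounded {a : ℝ} (ha : 0 < a) (h : ℝ → ℝ)
    (hL : ∀ x ∈ Set.Ioc 0 a, ∃ L, Tendsto h (𝓝[<] x) (𝓝 L))
    (hR : ∀ x ∈ Set.Ico 0 a, ∃ L, Tendsto h (𝓝[>] x) (𝓝 L)) :
    ∃ M, ∀ x ∈ Set.Ioo 0 a, |h x| ≤ M := by
  have key : ∀ x : ℝ, ∃ (s : Set ℝ) (M : ℝ),
      x ∈ Set.Icc 0 a → (s ∈ 𝓝 x ∧ ∀ y ∈ s ∩ Set.Ioo 0 a, |h y| ≤ M) := by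
    intro x
    by_cases hx : x ∈ Set.Icc 0 a
    · have hleft : ∃ (sl : Set ℝ) (Ml : ℝ), sl ∈ 𝓝[<] x ∧ ∀ y ∈ sl ∩ Set.Ioo 0 a, |h y| ≤ Ml := by
        by_cases h0 : 0 < x
        · obtain ⟨L, hLx⟩ := hL x ⟨h0, hx.2⟩
          have hev : ∀ᶠ y in 𝓝[<] x, |h y| ≤ |L| + 1 :=
            (hLx.abs).eventually_le_const (by linarith [abs_nonneg L])
          obtain ⟨sl, hsl, hsl2⟩ := hev.exists_mem
          exact ⟨sl, |L| + 1, hsl, fun y hy => hsl2 y hy.1⟩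
        · refine ⟨Set.Iio x, 0, self_mem_nhdsWithin, fun y hy => absurd ?_ (not_lt.2 hy.2.1.le)⟩
          exact lt_of_lt_of_le hy.1 (not_lt.1 h0)
      have hright : ∃ (sr : Set ℝ) (Mr : ℝ), sr ∈ 𝓝[>] x ∧ ∀ y ∈ sr ∩ Set.Ioo 0 a, |h y| ≤ Mr := by
        by_cases hxa : x < a
        · obtain ⟨L, hLx⟩ := hR x ⟨hx.1, hxa⟩
          have hev : ∀ᶠ y in 𝓝[>] x, |h y| ≤ |L| + 1 :=
            (hLx.abs).eventually_le_const (by linarith [abs_nonneg L])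
          obtain ⟨sr, hsr, hsr2⟩ := hev.exists_mem
          exact ⟨sr, |L| + 1, hsr, fun y hy => hsr2 y hy.1⟩
        · refine ⟨Set.Ioi x, 0, self_mem_nhdsWithin, fun y hy => absurd ?_ (not_lt.2 hy.2.2.le)⟩
          have hxa' : a ≤ x := not_lt.1 hxa
          exact lt_of_le_of_lt hxa' hy.1
      obtain ⟨sl, Ml, hsl, hbl⟩ := hleft
      obtain ⟨sr, Mr, hsr, hbr⟩ := hright
      refine ⟨sl ∪ {x} ∪ sr, max (max Ml Mr) |h x|, fun _ => ⟨?_, ?_⟩⟩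
      · have : 𝓝 x = 𝓝[<] x ⊔ 𝓝[>] x ⊔ pure x := by
          rw [nhdsLT_sup_nhdsGT]
          rw [← nhdsNE_sup_pure x]
        rw [this]
        simp only [Filter.mem_sup]
        refine ⟨⟨mem_of_superset hsl ?_, mem_of_superset hsr ?_⟩, ?_⟩
        · intro y hy; exact Or.inl (Or.inl hy)
        · intro y hy; exact Or.inr hy
        · simp only [Filter.mem_pure]; exact Or.inl (Or.inr rfl)
      · rintro y ⟨(hy | hy) | hy, hyIoo⟩
        · exact le_trans (hbl y ⟨hy, hyIoo⟩) (le_max_of_le_left (le_max_left _ _))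
        · rcases hy with rfl; exact le_max_right _ _
        · exact le_trans (hbr y ⟨hy, hyIoo⟩) (le_max_of_le_left (le_max_right _ _))
    · exact ⟨Set.univ, 0, fun hmem => absurd hmem hx⟩
  choose s M hsM using key
  obtain ⟨t, htmem, hcover⟩ := (isCompact_Icc (a := (0:ℝ)) (b := a)).elim_nhds_subcover s
    (fun x hx => (hsM x hx).1)
  have h0cov : (0:ℝ) ∈ ⋃ x ∈ t, s x := hcover ⟨le_refl 0, ha.le⟩
  obtain ⟨x0, hx0t, _⟩ := Set.mem_iUnion₂.mp h0cov
  have htne : t.Nonempty := ⟨x0, hx0t⟩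
  refine ⟨t.sup' htne M, fun y hy => ?_⟩
  have : y ∈ ⋃ x ∈ t, s x := hcover ⟨hy.1.le, hy.2.le⟩
  obtain ⟨x, hxt, hyx⟩ := Set.mem_iUnion₂.mp this
  exact le_trans ((hsM x (htmem x hxt)).2 y ⟨hyx, hy⟩) (Finset.le_sup' M hxt)

end MSaux2

section MSaux2
open MeasureTheory Set Filter Topology Asymptotics


lemma MSaux_strip {c d : ℝ} (hcd : c < d) {h hD G : ℝ → ℝ}
    (hderiv : ∀ x ∈ Set.Ioo c d, HasDerivAt h (hD x) x)
    (hDint : IntegrableOn hD (Set.Ioo c d))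
    (hGint : IntegrableOn G (Set.Ioo c d))
    (hG0 : 0 ≤ᵐ[volume.restrict (Set.Ioo c d)] G)
    (hle : hD ≤ᵐ[volume.restrict (Set.Ioo c d)] G)
    {Lc Ld : ℝ} (hLc : Tendsto h (𝓝[>] c) (𝓝 Lc)) (hLd : Tendsto h (𝓝[<] d) (𝓝 Ld)) :
    Ld - Lc ≤ ∫ x in Set.Ioo c d, G x := by
  have main : ∀ c' ∈ Set.Ioo c d, ∀ d' ∈ Set.Ioo c d, c' ≤ d' →
      h d' - h c' ≤ ∫ x in Set.Ioo c d, G x := by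
    intro c' hc' d' hd' hcd'
    have hsub : Set.uIcc c' d' ⊆ Set.Ioo c d := by
      rw [Set.uIcc_of_le hcd']
      exact fun y hy => ⟨lt_of_lt_of_le hc'.1 hy.1, lt_of_le_of_lt hy.2 hd'.2⟩
    have hsub2 : Set.Ioc c' d' ⊆ Set.Ioo c d := fun y hy =>
      ⟨lt_trans hc'.1 hy.1, lt_of_le_of_lt hy.2 hd'.2⟩
    have hftc : ∫ y in c'..d', hD y = h d' - h c' := by
      refine intervalIntegral.integral_eq_sub_of_hasDerivAt
        (fun x hx => hderiv x (hsub hx)) ?_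
      exact (hDint.mono_set hsub).intervalIntegrable
    rw [← hftc, intervalIntegral.integral_of_le hcd']
    have step1 : ∫ y in Set.Ioc c' d', hD y ≤ ∫ y in Set.Ioc c' d', G y := by
      apply setIntegral_mono_ae_restrict (hDint.mono_set hsub2) (hGint.mono_set hsub2)
      exact ae_restrict_of_ae_restrict_of_subset hsub2 hle
    have step2 : ∫ y in Set.Ioc c' d', G y ≤ ∫ y in Set.Ioo c d, G y := by
      apply setIntegral_mono_set hGint hG0
      exact HasSubset.Subset.eventuallyLE hsub2
    linarith
  -- now take limits
  have hIoo1 : Set.Ioo c d ∈ 𝓝[>] c := Ioo_mem_nhdsGT_of_mem ⟨le_refl c, hcd⟩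
  have key2 : ∀ c' ∈ Set.Ioo c d, Ld ≤ h c' + ∫ x in Set.Ioo c d, G x := by
    intro c' hc'
    have hIoo : Set.Ioo c' d ∈ 𝓝[<] d := Ioo_mem_nhdsLT_of_mem ⟨hc'.2, le_refl d⟩
    refine le_of_tendsto hLd ?_
    filter_upwards [hIoo] with d' hd'
    have := main c' hc' d' ⟨lt_trans hc'.1 hd'.1, hd'.2⟩ hd'.1.le
    linarith
  have : ∀ᶠ c' in 𝓝[>] c, Ld - ∫ x in Set.Ioo c d, G x ≤ h c' := by
    filter_upwards [hIoo1] with c' hc'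
    linarith [key2 c' hc']
  have := ge_of_tendsto hLc this
  linarith

end MSaux2

section MSaux2
open MeasureTheory Set Filter Topology Asymptotics


lemma MSaux_intinteg' {Φ : ℝ → ℝ → ℝ} (hm : Measurable (Function.uncurry Φ))
    {C : ℝ} (hb : ∀ x s, |Φ x s| ≤ C) (x c d : ℝ) :
    IntervalIntegrable (Φ x) MeasureTheory.volume c d := by
  rw [intervalIntegrable_iff]
  exact Measure.integrableOn_of_bounded (by rw [Set.uIoc]; exact measure_Ioc_lt_top.ne)
    (hm.of_uncurry_left).aestronglyMeasurable
    (Filter.Eventually.of_forall fun s => by simpa [Real.norm_eq_abs] using hb x s)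

lemma MSaux_tail {W : Set (ℝ × ℝ)} (hW : IsOpen W)
    {Φ : ℝ → ℝ → ℝ} (hm : Measurable (Function.uncurry Φ))
    {C : ℝ} (hb : ∀ x s, |Φ x s| ≤ C)
    (hΦc : ContinuousOn (Function.uncurry Φ) W)
    {w : ℝ → ℝ} {x₀ w' : ℝ} (hw : HasDerivAt w w' x₀) (hmem : (x₀, w x₀) ∈ W) :
    HasDerivAt (fun x => ∫ s in w x₀..w x, Φ x s) (Φ x₀ (w x₀) * w') x₀ := by
  have hint : ∀ x c d, IntervalIntegrable (Φ x) volume c d := MSaux_intinteg' hm hb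
  have hcont : ContinuousAt (Function.uncurry Φ) (x₀, w x₀) :=
    hΦc.continuousAt (hW.mem_nhds hmem)
  rw [hasDerivAt_iff_isLittleO]
  have hsplit : ∀ x, (∫ s in w x₀..w x, Φ x s) - (∫ s in w x₀..w x₀, Φ x₀ s)
      - (x - x₀) • (Φ x₀ (w x₀) * w')
      = (∫ s in w x₀..w x, (Φ x s - Φ x₀ (w x₀)))
        + (Φ x₀ (w x₀) * ((w x - w x₀) - (x - x₀) * w')) := by
    intro x
    have h0 : (∫ s in w x₀..w x₀, Φ x₀ s) = 0 := intervalIntegral.integral_same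
    have h1 : (∫ s in w x₀..w x, (Φ x s - Φ x₀ (w x₀)))
        = (∫ s in w x₀..w x, Φ x s) - (∫ s in w x₀..w x, (fun _ => Φ x₀ (w x₀)) s) :=
      intervalIntegral.integral_sub (hint _ _ _) intervalIntegrable_const
    have h2 : (∫ s in w x₀..w x, (fun _ => Φ x₀ (w x₀)) s) = (w x - w x₀) * Φ x₀ (w x₀) := by
      rw [intervalIntegral.integral_const]; simp [smul_eq_mul]
    rw [h0]
    rw [h1, h2]
    simp only [smul_eq_mul]
    ring
  have E2 : (fun x => Φ x₀ (w x₀) * ((w x - w x₀) - (x - x₀) * w'))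
      =o[𝓝 x₀] fun x => x - x₀ := by
    have := hasDerivAt_iff_isLittleO.mp hw
    simpa [smul_eq_mul] using this.const_mul_left (Φ x₀ (w x₀))
  have E1 : (fun x => (∫ s in w x₀..w x, (Φ x s - Φ x₀ (w x₀))))
      =o[𝓝 x₀] fun x => x - x₀ := by
    rw [isLittleO_iff]
    intro c hc
    set c' := c / (|w'| + 1) with hc'def
    have hw1 : 0 < |w'| + 1 := by positivity
    have hc' : 0 < c' := div_pos hc hw1
    have hev : ∀ᶠ p : ℝ × ℝ in 𝓝 (x₀, w x₀),
        dist (Function.uncurry Φ p) (Φ x₀ (w x₀)) < c' :=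
      Metric.tendsto_nhds.mp hcont.tendsto c' hc'
    obtain ⟨δ, hδ0, hδ⟩ := Metric.eventually_nhds_iff.mp hev
    -- eventually estimates in x
    have hwc : ∀ᶠ x in 𝓝 x₀, |w x - w x₀| < δ := by
      have := hw.continuousAt.tendsto
      have := Metric.tendsto_nhds.mp this δ hδ0
      simpa [Real.dist_eq] using this
    have hlin : ∀ᶠ x in 𝓝 x₀, |w x - w x₀| ≤ (|w'| + 1) * |x - x₀| := by
      have hlo := isLittleO_iff.mp (hasDerivAt_iff_isLittleO.mp hw) one_pos
      filter_upwards [hlo] with x hx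
      have : |w x - w x₀ - (x - x₀) * w'| ≤ |x - x₀| := by
        simpa [Real.norm_eq_abs, smul_eq_mul] using hx
      have h2 : |(x - x₀) * w'| = |x - x₀| * |w'| := abs_mul _ _
      calc |w x - w x₀| = |(w x - w x₀ - (x - x₀) * w') + (x - x₀) * w'| := by ring_nf
        _ ≤ |w x - w x₀ - (x - x₀) * w'| + |(x - x₀) * w'| := abs_add_le _ _
        _ ≤ |x - x₀| + |x - x₀| * |w'| := by rw [h2]; linarith
        _ = (|w'| + 1) * |x - x₀| := by ring
    have hxδ : ∀ᶠ x in 𝓝 x₀, |x - x₀| < δ := by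
      have : Tendsto (fun x : ℝ => x) (𝓝 x₀) (𝓝 x₀) := tendsto_id
      have := Metric.tendsto_nhds.mp this δ hδ0
      simpa [Real.dist_eq] using this
    filter_upwards [hwc, hlin, hxδ] with x hx1 hx2 hx3
    have hbound : ∀ s ∈ Set.uIoc (w x₀) (w x), ‖Φ x s - Φ x₀ (w x₀)‖ ≤ c' := by
      intro s hs
      have hs' : |s - w x₀| ≤ |w x - w x₀| := by
        rcases Set.mem_uIoc.mp hs with h | h
        · rw [abs_of_pos (by linarith [h.1]), abs_of_pos (by linarith [h.1, h.2])]
          linarith [h.2]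
        · rw [abs_of_nonpos (by linarith [h.2]), abs_of_neg (by linarith [h.1, h.2])]
          linarith [h.1]
      have hdist : dist ((x, s) : ℝ × ℝ) (x₀, w x₀) < δ := by
        rw [Prod.dist_eq]
        simp only [Real.dist_eq]
        exact max_lt hx3 (lt_of_le_of_lt hs' hx1)
      have := hδ hdist
      simpa [Real.norm_eq_abs, Real.dist_eq, Function.uncurry] using this.le
    have := intervalIntegral.norm_integral_le_of_norm_le_const hbound
    calc ‖∫ s in w x₀..w x, (Φ x s - Φ x₀ (w x₀))‖ ≤ c' * |w x - w x₀| := by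
          simpa [abs_sub_comm] using this
      _ ≤ c' * ((|w'| + 1) * |x - x₀|) := by
          apply mul_le_mul_of_nonneg_left _ hc'.le; exact hx2
      _ = c * |x - x₀| := by
          rw [← mul_assoc, hc'def, div_mul_cancel₀ c hw1.ne']
      _ = c * ‖x - x₀‖ := by rw [Real.norm_eq_abs]
  have := E1.add E2
  refine this.congr' ?_ (EventuallyEq.refl _ _)
  exact Eventually.of_forall fun x => (hsplit x).symm

lemma MSaux_moving {W : Set (ℝ × ℝ)} (hW : IsOpen W)
    {Φ ψ : ℝ → ℝ → ℝ} (hm : Measurable (Function.uncurry Φ))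
    {C : ℝ} (hb : ∀ x s, |Φ x s| ≤ C)
    (hΦc : ContinuousOn (Function.uncurry Φ) W)
    (hψc : ContinuousOn (Function.uncurry ψ) W)
    (hψd : ∀ p ∈ W, HasDerivAt (fun y => Φ y p.2) (ψ p.1 p.2) p.1)
    {uu vv : ℝ → ℝ} {x₀ u' v' : ℝ} (huu : HasDerivAt uu u' x₀) (hvv : HasDerivAt vv v' x₀)
    (hseg : ∀ s ∈ Set.uIcc (uu x₀) (vv x₀), (x₀, s) ∈ W) :
    HasDerivAt (fun x => ∫ s in uu x..vv x, Φ x s)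
      (Φ x₀ (vv x₀) * v' - Φ x₀ (uu x₀) * u' + ∫ s in uu x₀..vv x₀, ψ x₀ s) x₀ := by
  have hint : ∀ x c d, IntervalIntegrable (Φ x) volume c d := MSaux_intinteg' hm hb
  -- the compact segment and a thickening inside W
  set K : Set (ℝ × ℝ) := (fun s => ((x₀ : ℝ), s)) '' Set.uIcc (uu x₀) (vv x₀) with hKdef
  have hKcomp : IsCompact K := (isCompact_uIcc).image (by fun_prop)
  have hKsub : K ⊆ W := by rintro p ⟨s, hs, rfl⟩; exact hseg s hs
  obtain ⟨δ, hδ0, hδ⟩ := hKcomp.exists_thickening_subset_open hW hKsub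
  set ε := δ / 2 with hεdef
  have hε0 : 0 < ε := by positivity
  have hRsub : ∀ x s, |x - x₀| ≤ ε → s ∈ Set.uIcc (uu x₀) (vv x₀) → (x, s) ∈ W := by
    intro x s hx hs
    apply hδ
    apply Metric.mem_thickening_iff.mpr
    refine ⟨(x₀, s), ⟨s, hs, rfl⟩, ?_⟩
    rw [Prod.dist_eq]
    simp only [Real.dist_eq, sub_self, abs_zero]
    have : |x - x₀| < δ := lt_of_le_of_lt hx (by linarith)
    simpa using this
  -- bound for ψ on the compact rectangle
  set R : Set (ℝ × ℝ) := Metric.closedBall x₀ ε ×ˢ Set.uIcc (uu x₀) (vv x₀) with hRdef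
  have hRcomp : IsCompact R := (isCompact_closedBall _ _).prod isCompact_uIcc
  have hRW : R ⊆ W := by
    rintro ⟨x, s⟩ ⟨hx, hs⟩
    exact hRsub x s (by simpa [Real.dist_eq] using hx) hs
  obtain ⟨B, hB⟩ := hRcomp.exists_bound_of_continuousOn (hψc.mono hRW)
  -- T2 : fixed endpoints
  have T2 : HasDerivAt (fun x => ∫ s in uu x₀..vv x₀, Φ x s)
      (∫ s in uu x₀..vv x₀, ψ x₀ s) x₀ := by
    have hmeas : ∀ᶠ x in 𝓝 x₀, AEStronglyMeasurable (Φ x)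
        (volume.restrict (Ι (uu x₀) (vv x₀))) :=
      Eventually.of_forall fun x => (hm.of_uncurry_left).aestronglyMeasurable
    have hψmeas : AEStronglyMeasurable (ψ x₀)
        (volume.restrict (Ι (uu x₀) (vv x₀))) := by
      apply ContinuousOn.aestronglyMeasurable _ measurableSet_uIoc
      intro s hs
      have : ContinuousWithinAt (Function.uncurry ψ) W (x₀, s) :=
        hψc _ (hseg s (Set.uIoc_subset_uIcc hs))
      have hcomp : ContinuousWithinAt (fun s => ((x₀:ℝ), s)) (Ι (uu x₀) (vv x₀)) s :=
        (Continuous.continuousWithinAt (by fun_prop))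
      exact (this.comp hcomp (fun y hy => hseg y (Set.uIoc_subset_uIcc hy)))
    have hbd : ∀ᵐ s ∂volume, s ∈ Ι (uu x₀) (vv x₀) →
        ∀ x ∈ Metric.ball x₀ ε, ‖ψ x s‖ ≤ B := by
      refine Eventually.of_forall fun s hs x hx => ?_
      have : (x, s) ∈ R := ⟨Metric.ball_subset_closedBall hx, Set.uIoc_subset_uIcc hs⟩
      exact hB _ this
    have hdrv : ∀ᵐ s ∂volume, s ∈ Ι (uu x₀) (vv x₀) →
        ∀ x ∈ Metric.ball x₀ ε, HasDerivAt (fun x => Φ x s) (ψ x s) x := by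
      refine Eventually.of_forall fun s hs x hx => ?_
      have hxs : (x, s) ∈ W := hRsub x s (by simp [Real.dist_eq] at hx; linarith [hx.le])
        (Set.uIoc_subset_uIcc hs)
      exact hψd (x, s) hxs
    exact (intervalIntegral.hasDerivAt_integral_of_dominated_loc_of_deriv_le (Metric.ball_mem_nhds x₀ hε0)
      hmeas (hint _ _ _) hψmeas hbd intervalIntegrable_const hdrv).2
  -- tails
  have T3 : HasDerivAt (fun x => ∫ s in vv x₀..vv x, Φ x s) (Φ x₀ (vv x₀) * v') x₀ :=
    MSaux_tail hW hm hb hΦc hvv (hseg _ Set.right_mem_uIcc)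
  have T1 : HasDerivAt (fun x => ∫ s in uu x₀..uu x, Φ x s) (Φ x₀ (uu x₀) * u') x₀ :=
    MSaux_tail hW hm hb hΦc huu (hseg _ Set.left_mem_uIcc)
  have hsplit : ∀ x, (∫ s in uu x..vv x, Φ x s)
      = (∫ s in uu x₀..vv x₀, Φ x s) + ((∫ s in vv x₀..vv x, Φ x s)
        - (∫ s in uu x₀..uu x, Φ x s)) := by
    intro x
    have h1 : (∫ s in uu x..uu x₀, Φ x s) + (∫ s in uu x₀..vv x, Φ x s)
        = ∫ s in uu x..vv x, Φ x s :=
      intervalIntegral.integral_add_adjacent_intervals (hint _ _ _) (hint _ _ _)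
    have h2 : (∫ s in uu x₀..vv x₀, Φ x s) + (∫ s in vv x₀..vv x, Φ x s)
        = ∫ s in uu x₀..vv x, Φ x s :=
      intervalIntegral.integral_add_adjacent_intervals (hint _ _ _) (hint _ _ _)
    have h3 : (∫ s in uu x..uu x₀, Φ x s) = - ∫ s in uu x₀..uu x, Φ x s :=
      intervalIntegral.integral_symm _ _
    linarith
  have htot := T2.add (T3.sub T1)
  have heq : (fun x => (∫ s in uu x₀..vv x₀, Φ x s) + ((∫ s in vv x₀..vv x, Φ x s)
      - (∫ s in uu x₀..uu x, Φ x s))) = (fun x => ∫ s in uu x..vv x, Φ x s) :=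
    funext fun x => (hsplit x).symm
  simp only [Pi.add_def, Pi.sub_def] at htot
  rw [heq] at htot
  refine htot.congr_deriv ?_
  ring

end MSaux2

section MSauxP
open MeasureTheory Set Filter Topology

variable {a : ℝ}

lemma MSaux_Oopen (w : PiecewiseC1 a) : IsOpen (Set.Ioo 0 a \ (↑w.S : Set ℝ)) :=
  isOpen_Ioo.sdiff (w.S.finite_toSet.isClosed)

lemma MSaux_fcont (w : PiecewiseC1 a) : ContinuousOn w.f (Set.Ioo 0 a \ (↑w.S : Set ℝ)) :=
  fun x hx => ((w.hasDeriv x hx).continuousAt).continuousWithinAt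

lemma MSaux_limL_eq (w : PiecewiseC1 a) {x : ℝ} (hx : x ∈ Set.Ioo 0 a) (hxS : x ∉ w.S) :
    w.limL x = w.f x := by
  have hc : ContinuousAt w.f x := (w.hasDeriv x ⟨hx, hxS⟩).continuousAt
  exact tendsto_nhds_unique (w.tendsto_limL x ⟨hx.1, hx.2.le⟩)
    (hc.tendsto.mono_left nhdsWithin_le_nhds)

lemma MSaux_limR_eq (w : PiecewiseC1 a) {x : ℝ} (hx : x ∈ Set.Ioo 0 a) (hxS : x ∉ w.S) :
    w.limR x = w.f x := by
  have hc : ContinuousAt w.f x := (w.hasDeriv x ⟨hx, hxS⟩).continuousAt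
  exact tendsto_nhds_unique (w.tendsto_limR x ⟨hx.1.le, hx.2⟩)
    (hc.tendsto.mono_left nhdsWithin_le_nhds)

lemma MSaux_limL_mem (w : PiecewiseC1 a) {x : ℝ} (hx : x ∈ Set.Ioo 0 a) :
    w.lower x ≤ w.limL x ∧ w.limL x ≤ w.upper x := by
  by_cases hS : x ∈ w.S
  · unfold PiecewiseC1.lower PiecewiseC1.upper
    rw [if_pos hS, if_pos hS]
    exact ⟨min_le_left _ _, le_max_left _ _⟩
  · unfold PiecewiseC1.lower PiecewiseC1.upper
    rw [if_neg hS, if_neg hS, MSaux_limL_eq w hx hS]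
    exact ⟨le_rfl, le_rfl⟩

lemma MSaux_limR_mem (w : PiecewiseC1 a) {x : ℝ} (hx : x ∈ Set.Ioo 0 a) :
    w.lower x ≤ w.limR x ∧ w.limR x ≤ w.upper x := by
  by_cases hS : x ∈ w.S
  · unfold PiecewiseC1.lower PiecewiseC1.upper
    rw [if_pos hS, if_pos hS]
    exact ⟨min_le_right _ _, le_max_right _ _⟩
  · unfold PiecewiseC1.lower PiecewiseC1.upper
    rw [if_neg hS, if_neg hS, MSaux_limR_eq w hx hS]
    exact ⟨le_rfl, le_rfl⟩

lemma MSaux_lower_le_upper (w : PiecewiseC1 a) (x : ℝ) : w.lower x ≤ w.upper x := by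
  unfold PiecewiseC1.lower PiecewiseC1.upper
  by_cases hS : x ∈ w.S
  · rw [if_pos hS, if_pos hS]; exact min_le_max
  · rw [if_neg hS, if_neg hS]

lemma MSaux_lower_eq (w : PiecewiseC1 a) {x : ℝ} (hxS : x ∉ w.S) : w.lower x = w.f x := by
  unfold PiecewiseC1.lower; rw [if_neg hxS]

lemma MSaux_upper_eq (w : PiecewiseC1 a) {x : ℝ} (hxS : x ∉ w.S) : w.upper x = w.f x := by
  unfold PiecewiseC1.upper; rw [if_neg hxS]

lemma MSaux_f_bdd (ha : 0 < a) (w : PiecewiseC1 a) : ∃ M, ∀ x ∈ Set.Ioo 0 a, |w.f x| ≤ M :=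
  MSaux_bounded ha w.f (fun x hx => ⟨_, w.tendsto_limL x hx⟩)
    (fun x hx => ⟨_, w.tendsto_limR x hx⟩)

lemma MSaux_f'_bdd (ha : 0 < a) (w : PiecewiseC1 a) : ∃ M, ∀ x ∈ Set.Ioo 0 a, |w.f' x| ≤ M :=
  MSaux_bounded ha w.f' w.deriv_limL w.deriv_limR

end MSauxP

section MSauxQ
open Set

lemma MSaux_filter_split (F : Finset ℝ) {c d xb : ℝ} (hcx : c < xb) (hxd : xb < d) :
    (F.filter (fun y => y ∈ Set.Ioo c d)).card
      = (F.filter (fun y => y ∈ Set.Ioo c xb)).card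
        + (F.filter (fun y => y ∈ Set.Ioo xb d)).card
        + (if xb ∈ F then 1 else 0) := by
  classical
  have hdisj1 : Disjoint (F.filter (fun y => y ∈ Set.Ioo c xb))
      (F.filter (fun y => y ∈ Set.Ioo xb d)) := by
    rw [Finset.disjoint_left]
    intro y h1 h2
    have h1' := (Finset.mem_filter.mp h1).2.2
    have h2' := (Finset.mem_filter.mp h2).2.1
    exact absurd (lt_trans h1' h2') (lt_irrefl y)
  have hdisj2 : Disjoint ((F.filter (fun y => y ∈ Set.Ioo c xb))
      ∪ (F.filter (fun y => y ∈ Set.Ioo xb d))) (F.filter (fun y => y = xb)) := by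
    rw [Finset.disjoint_left]
    intro y h1 h2
    have h2' := (Finset.mem_filter.mp h2).2
    subst h2'
    rcases Finset.mem_union.mp h1 with h | h
    · exact absurd (Finset.mem_filter.mp h).2.2 (lt_irrefl y)
    · exact absurd (Finset.mem_filter.mp h).2.1 (lt_irrefl y)
  have hunion : F.filter (fun y => y ∈ Set.Ioo c d)
      = ((F.filter (fun y => y ∈ Set.Ioo c xb)) ∪ (F.filter (fun y => y ∈ Set.Ioo xb d)))
        ∪ (F.filter (fun y => y = xb)) := by
    ext y
    simp only [Finset.mem_union, Finset.mem_filter, Set.mem_Ioo]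
    constructor
    · rintro ⟨hF, h1, h2⟩
      rcases lt_trichotomy y xb with h | h | h
      · exact Or.inl (Or.inl ⟨hF, h1, h⟩)
      · exact Or.inr ⟨hF, h⟩
      · exact Or.inl (Or.inr ⟨hF, h, h2⟩)
    · rintro ((⟨hF, h1, h2⟩ | ⟨hF, h1, h2⟩) | ⟨hF, h⟩)
      · exact ⟨hF, h1, lt_trans h2 hxd⟩
      · exact ⟨hF, lt_trans hcx h1, h2⟩
      · subst h; exact ⟨hF, hcx, hxd⟩
  rw [hunion, Finset.card_union_of_disjoint hdisj2, Finset.card_union_of_disjoint hdisj1]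
  congr 1
  by_cases hxF : xb ∈ F
  · rw [if_pos hxF, Finset.filter_eq', if_pos hxF, Finset.card_singleton]
  · rw [if_neg hxF, Finset.filter_eq', if_neg hxF, Finset.card_empty]

end MSauxQ

open Topology Asymptotics in
/-- **Theorem 3.2 (Neumann part), one-dimensional case.**
If `φ = (φˣ, φᵗ)` is a calibration for the Mumford–Shah functional on `U`
adapted to `u` which moreover satisfies the Neumann boundary condition (c2),
then `u` is a `U`-minimizer (no boundary condition on the competitors). -/
theorem statement_1
    (a α β : ℝ) (ha : 0 < a) (hα : 0 < α) (hβ : 0 ≤ β)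
    (g : ℝ → ℝ) (hg_meas : Measurable g) (hg_bdd : ∃ C : ℝ, ∀ x ∈ Set.Ioo 0 a, |g x| ≤ C)
    (τ₁ τ₂ : ℝ → EReal)
    (hτ₁ : ContinuousOn τ₁ (Set.Icc 0 a)) (hτ₂ : ContinuousOn τ₂ (Set.Icc 0 a))
    (hττ : ∀ x ∈ Set.Icc 0 a, τ₁ x ≤ τ₂ x)
    (U : Set (ℝ × ℝ))
    (hU : U = {p : ℝ × ℝ | p.1 ∈ Set.Ioo 0 a ∧ τ₁ p.1 < (p.2 : EReal) ∧ (p.2 : EReal) < τ₂ p.1})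
    (u : PiecewiseC1 a) (hu : u.GraphIn U)
    (φx φt : ℝ → ℝ → ℝ)
    (hφ_C1 : ContDiffOn ℝ 1 (fun p : ℝ × ℝ => (φx p.1 p.2, φt p.1 p.2)) U)
    (hφ_bdd : ∃ C : ℝ, ∀ p ∈ U, |φx p.1 p.2| ≤ C ∧ |φt p.1 p.2| ≤ C)
    -- (a1)
    (ha1 : ∀ᵐ x ∂(volume.restrict (Set.Ioo 0 a)), ∀ t : ℝ,
      τ₁ x < (t : EReal) → (t : EReal) < τ₂ x →
      (1 / 4) * (φx x t) ^ 2 ≤ φt x t + β * (t - g x) ^ 2)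
    -- (a2)
    (ha2 : ∀ᵐ x ∂(volume.restrict (Set.Ioo 0 a)),
      φx x (u.f x) = 2 * u.f' x ∧ φt x (u.f x) = (u.f' x) ^ 2 - β * (u.f x - g x) ^ 2)
    -- (b1)
    (hb1 : ∀ x ∈ Set.Ioo 0 a, ∀ t₁ t₂ : ℝ, τ₁ x < (t₁ : EReal) → t₁ < t₂ →
      (t₂ : EReal) < τ₂ x → |∫ t in t₁..t₂, φx x t| ≤ α)
    -- (b2)
    (hb2 : ∀ x ∈ u.S, (∫ t in u.lower x..u.upper x, φx x t) = α * u.nu x)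
    -- (c1)
    (hc1 : ∀ p ∈ U, deriv (fun y : ℝ => φx y p.2) p.1 + deriv (fun s : ℝ => φt p.1 s) p.2 = 0)
    -- (c2): Neumann condition at both endpoints of (0,a)
    (hc2_left : ∀ᵐ t : ℝ, τ₁ 0 ≤ (t : EReal) → (t : EReal) ≤ τ₂ 0 →
      Filter.Tendsto (fun p : ℝ × ℝ => φx p.1 p.2) (nhdsWithin (0, t) U) (nhds 0))
    (hc2_right : ∀ᵐ t : ℝ, τ₁ a ≤ (t : EReal) → (t : EReal) ≤ τ₂ a →
      Filter.Tendsto (fun p : ℝ × ℝ => φx p.1 p.2) (nhdsWithin (a, t) U) (nhds 0)) :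
    ∀ v : PiecewiseC1 a, v.GraphIn U → MS a α β g u ≤ MS a α β g v := by
  classical
  intro v hvGraph
  obtain ⟨C₀, hC₀⟩ := hφ_bdd
  set C : ℝ := max C₀ 0 with hCdef
  have hC0 : (0:ℝ) ≤ C := le_max_right _ _
  have hUmem : ∀ x t : ℝ, (x, t) ∈ U ↔
      (x ∈ Set.Ioo 0 a ∧ τ₁ x < (t : EReal) ∧ (t : EReal) < τ₂ x) := by
    intro x t; rw [hU]; simp only [Set.mem_setOf_eq]
  -- U is open
  have hUopen : IsOpen U := by
    rw [isOpen_iff_mem_nhds]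
    rintro ⟨x, t⟩ hp
    rw [hUmem] at hp
    obtain ⟨hx, h1, h2⟩ := hp
    have hτ₁x : ContinuousAt τ₁ x := hτ₁.continuousAt (Icc_mem_nhds hx.1 hx.2)
    have hτ₂x : ContinuousAt τ₂ x := hτ₂.continuousAt (Icc_mem_nhds hx.1 hx.2)
    have e0 : ∀ᶠ p : ℝ × ℝ in 𝓝 (x, t), p.1 ∈ Set.Ioo 0 a := by
      have : ContinuousAt (Prod.fst : ℝ × ℝ → ℝ) (x, t) := continuousAt_fst
      exact this.preimage_mem_nhds (isOpen_Ioo.mem_nhds hx)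
    have hopenlt : IsOpen {q : EReal × EReal | q.1 < q.2} :=
      isOpen_lt continuous_fst continuous_snd
    have e1 : ∀ᶠ p : ℝ × ℝ in 𝓝 (x, t), τ₁ p.1 < (p.2 : EReal) := by
      have hco : ContinuousAt (fun p : ℝ × ℝ => ((τ₁ p.1 : EReal), (p.2 : EReal))) (x, t) :=
        ((hτ₁x.comp continuousAt_fst).prodMk
          ((continuous_coe_real_ereal.continuousAt).comp continuousAt_snd))
      exact hco.preimage_mem_nhds (hopenlt.mem_nhds h1)
    have e2 : ∀ᶠ p : ℝ × ℝ in 𝓝 (x, t), (p.2 : EReal) < τ₂ p.1 := by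
      have hco : ContinuousAt (fun p : ℝ × ℝ => ((p.2 : EReal), (τ₂ p.1 : EReal))) (x, t) :=
        (((continuous_coe_real_ereal.continuousAt).comp continuousAt_snd).prodMk
          (hτ₂x.comp continuousAt_fst))
      exact hco.preimage_mem_nhds (hopenlt.mem_nhds h2)
    filter_upwards [e0, e1, e2] with p hp0 hp1 hp2
    rw [hU]
    exact ⟨hp0, hp1, hp2⟩
  -- vertical convexity of sections of U
  have hsec : ∀ (x t₁ t₂ s : ℝ), (x, t₁) ∈ U → (x, t₂) ∈ U → s ∈ Set.uIcc t₁ t₂ →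
      (x, s) ∈ U := by
    intro x t₁ t₂ s h1 h2 hs
    rw [hUmem] at h1 h2 ⊢
    rcases Set.mem_uIcc.mp hs with ⟨hl, hr⟩ | ⟨hl, hr⟩
    · refine ⟨h1.1, lt_of_lt_of_le h1.2.1 ?_, lt_of_le_of_lt ?_ h2.2.2⟩
      · exact_mod_cast EReal.coe_le_coe_iff.mpr hl
      · exact_mod_cast EReal.coe_le_coe_iff.mpr hr
    · refine ⟨h1.1, lt_of_lt_of_le h2.2.1 ?_, lt_of_le_of_lt ?_ h1.2.2⟩
      · exact_mod_cast EReal.coe_le_coe_iff.mpr hl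
      · exact_mod_cast EReal.coe_le_coe_iff.mpr hr
  -- the truncated vector field
  set Φ : ℝ → ℝ → ℝ := fun x s => if (x, s) ∈ U then φx x s else 0 with hΦdef
  set Φt : ℝ → ℝ → ℝ := fun x s => if (x, s) ∈ U then φt x s else 0 with hΦtdef
  have hΦU : ∀ {x s : ℝ}, (x, s) ∈ U → Φ x s = φx x s := by
    intro x s h; rw [hΦdef]; simp only [if_pos h]
  have hΦtU : ∀ {x s : ℝ}, (x, s) ∈ U → Φt x s = φt x s := by
    intro x s h; rw [hΦtdef]; simp only [if_pos h]
  have hF1c : ContinuousOn (fun p : ℝ × ℝ => φx p.1 p.2) U :=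
    continuous_fst.comp_continuousOn hφ_C1.continuousOn
  have hF2c : ContinuousOn (fun p : ℝ × ℝ => φt p.1 p.2) U :=
    continuous_snd.comp_continuousOn hφ_C1.continuousOn
  have hΦuncurry : Function.uncurry Φ = Set.piecewise U (fun p : ℝ × ℝ => φx p.1 p.2)
      (fun _ => 0) := by
    funext p; rcases p with ⟨x, s⟩; rfl
  have hΦtuncurry : Function.uncurry Φt = Set.piecewise U (fun p : ℝ × ℝ => φt p.1 p.2)
      (fun _ => 0) := by
    funext p; rcases p with ⟨x, s⟩; rfl
  have hΦm : Measurable (Function.uncurry Φ) := by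
    rw [hΦuncurry]
    exact ContinuousOn.measurable_piecewise hF1c continuousOn_const hUopen.measurableSet
  have hΦtm : Measurable (Function.uncurry Φt) := by
    rw [hΦtuncurry]
    exact ContinuousOn.measurable_piecewise hF2c continuousOn_const hUopen.measurableSet
  have hΦb : ∀ x s : ℝ, |Φ x s| ≤ C := by
    intro x s
    rw [hΦdef]
    by_cases h : (x, s) ∈ U
    · simp only [if_pos h]
      exact le_trans ((hC₀ (x, s) h).1) (le_max_left _ _)
    · simp only [if_neg h, abs_zero]; exact hC0
  have hΦtb : ∀ x s : ℝ, |Φt x s| ≤ C := by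
    intro x s
    rw [hΦtdef]
    by_cases h : (x, s) ∈ U
    · simp only [if_pos h]
      exact le_trans ((hC₀ (x, s) h).2) (le_max_left _ _)
    · simp only [if_neg h, abs_zero]; exact hC0
  have hΦc : ContinuousOn (Function.uncurry Φ) U := by
    apply hF1c.congr
    intro p hp
    rcases p with ⟨x, s⟩
    exact hΦU hp
  have hΦtc : ContinuousOn (Function.uncurry Φt) U := by
    apply hF2c.congr
    intro p hp
    rcases p with ⟨x, s⟩
    exact hΦtU hp
  have hΦcAt : ∀ {p : ℝ × ℝ}, p ∈ U → ContinuousAt (Function.uncurry Φ) p :=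
    fun hp => hΦc.continuousAt (hUopen.mem_nhds hp)
  have hΦint : ∀ x c d : ℝ, IntervalIntegrable (Φ x) volume c d := MSaux_intinteg hΦm hΦb
  -- differentiability of the pair and partial derivatives
  have hpairdiff : ∀ p ∈ U, DifferentiableAt ℝ (fun p : ℝ × ℝ => (φx p.1 p.2, φt p.1 p.2)) p :=
    fun p hp => ((hφ_C1.differentiableOn one_ne_zero) p hp).differentiableAt (hUopen.mem_nhds hp)
  have hF1d : ∀ p ∈ U, DifferentiableAt ℝ (fun p : ℝ × ℝ => φx p.1 p.2) p :=
    fun p hp => (hpairdiff p hp).fst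
  have hF2d : ∀ p ∈ U, DifferentiableAt ℝ (fun p : ℝ × ℝ => φt p.1 p.2) p :=
    fun p hp => (hpairdiff p hp).snd
  set ψ : ℝ → ℝ → ℝ :=
    fun x s => fderiv ℝ (fun p : ℝ × ℝ => φx p.1 p.2) (x, s) (1, 0) with hψdef
  set ψt : ℝ → ℝ → ℝ :=
    fun x s => fderiv ℝ (fun p : ℝ × ℝ => φt p.1 p.2) (x, s) (0, 1) with hψtdef
  have hψd0 : ∀ p ∈ U, HasDerivAt (fun y => φx y p.2) (ψ p.1 p.2) p.1 := by
    rintro ⟨x, s⟩ hp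
    have hline : HasDerivAt (fun y : ℝ => ((y, s) : ℝ × ℝ)) ((1 : ℝ), (0 : ℝ)) x :=
      (hasDerivAt_id x).prodMk (hasDerivAt_const x s)
    have := ((hF1d (x, s) hp).hasFDerivAt).comp_hasDerivAt x hline
    exact this
  have hψtd0 : ∀ p ∈ U, HasDerivAt (fun r => φt p.1 r) (ψt p.1 p.2) p.2 := by
    rintro ⟨x, s⟩ hp
    have hline : HasDerivAt (fun r : ℝ => ((x, r) : ℝ × ℝ)) ((0 : ℝ), (1 : ℝ)) s :=
      (hasDerivAt_const s x).prodMk (hasDerivAt_id s)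
    have := ((hF2d (x, s) hp).hasFDerivAt).comp_hasDerivAt s hline
    exact this
  have hψd : ∀ p ∈ U, HasDerivAt (fun y => Φ y p.2) (ψ p.1 p.2) p.1 := by
    rintro ⟨x, s⟩ hp
    apply (hψd0 (x, s) hp).congr_of_eventuallyEq
    have hev : ∀ᶠ y in 𝓝 x, (y, s) ∈ U := by
      have : ContinuousAt (fun y : ℝ => ((y, s) : ℝ × ℝ)) x := by fun_prop
      exact this.preimage_mem_nhds (hUopen.mem_nhds hp)
    filter_upwards [hev] with y hy
    exact hΦU hy
  -- continuity of partial derivatives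
  have hψc : ContinuousOn (Function.uncurry ψ) U := by
    have hcd : ContDiffOn ℝ 1 (fun p : ℝ × ℝ => φx p.1 p.2) U :=
      contDiff_fst.comp_contDiffOn hφ_C1
    have hfd : ContinuousOn (fderiv ℝ (fun p : ℝ × ℝ => φx p.1 p.2)) U :=
      hcd.continuousOn_fderiv_of_isOpen hUopen le_rfl
    have : ContinuousOn (fun p : ℝ × ℝ =>
        fderiv ℝ (fun p : ℝ × ℝ => φx p.1 p.2) p ((1 : ℝ), (0 : ℝ))) U := by
      apply (ContinuousLinearMap.apply ℝ ℝ ((1 : ℝ), (0 : ℝ))).continuous.comp_continuousOn hfd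
    apply this.congr
    intro p hp
    rcases p with ⟨x, s⟩
    rfl
  have hψtcont : ContinuousOn (Function.uncurry ψt) U := by
    have hcd : ContDiffOn ℝ 1 (fun p : ℝ × ℝ => φt p.1 p.2) U :=
      contDiff_snd.comp_contDiffOn hφ_C1
    have hfd : ContinuousOn (fderiv ℝ (fun p : ℝ × ℝ => φt p.1 p.2)) U :=
      hcd.continuousOn_fderiv_of_isOpen hUopen le_rfl
    have : ContinuousOn (fun p : ℝ × ℝ =>
        fderiv ℝ (fun p : ℝ × ℝ => φt p.1 p.2) p ((0 : ℝ), (1 : ℝ))) U := by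
      apply (ContinuousLinearMap.apply ℝ ℝ ((0 : ℝ), (1 : ℝ))).continuous.comp_continuousOn hfd
    apply this.congr
    intro p hp
    rcases p with ⟨x, s⟩
    rfl
  -- (c1) in terms of ψ, ψt
  have hc1' : ∀ p ∈ U, ψ p.1 p.2 = - ψt p.1 p.2 := by
    intro p hp
    have h1 : deriv (fun y : ℝ => φx y p.2) p.1 = ψ p.1 p.2 := (hψd0 p hp).deriv
    have h2 : deriv (fun s : ℝ => φt p.1 s) p.2 = ψt p.1 p.2 := (hψtd0 p hp).deriv
    have := hc1 p hp
    rw [h1, h2] at this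
    linarith
  -- bounds
  obtain ⟨Mu, hMu⟩ := MSaux_f_bdd ha u
  obtain ⟨Mu', hMu'⟩ := MSaux_f'_bdd ha u
  obtain ⟨Mv, hMv⟩ := MSaux_f_bdd ha v
  obtain ⟨Mv', hMv'⟩ := MSaux_f'_bdd ha v
  obtain ⟨Cg, hCg⟩ := hg_bdd
  have hMu'0 : 0 ≤ Mu' := le_trans (abs_nonneg _) (hMu' (a/2) ⟨by linarith, by linarith⟩)
  have hMv'0 : 0 ≤ Mv' := le_trans (abs_nonneg _) (hMv' (a/2) ⟨by linarith, by linarith⟩)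
  -- graph membership helpers
  have hmemf : ∀ (w : PiecewiseC1 a), w.GraphIn U → ∀ {x : ℝ}, x ∈ Set.Ioo 0 a → x ∉ w.S →
      (x, w.f x) ∈ U := by
    intro w hw x hx hxS
    have h1 := MSaux_lower_eq w hxS
    have h2 := MSaux_upper_eq w hxS
    exact hw x hx (w.f x) (le_of_eq h1) (le_of_eq h2.symm)
  have hmemL : ∀ (w : PiecewiseC1 a), w.GraphIn U → ∀ {x : ℝ}, x ∈ Set.Ioo 0 a →
      (x, w.limL x) ∈ U := fun w hw x hx =>
    hw x hx _ (MSaux_limL_mem w hx).1 (MSaux_limL_mem w hx).2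
  have hmemR : ∀ (w : PiecewiseC1 a), w.GraphIn U → ∀ {x : ℝ}, x ∈ Set.Ioo 0 a →
      (x, w.limR x) ∈ U := fun w hw x hx =>
    hw x hx _ (MSaux_limR_mem w hx).1 (MSaux_limR_mem w hx).2
  -- the primitive A of the tangential part along u
  set Ou : Set ℝ := Set.Ioo 0 a \ (↑u.S : Set ℝ) with hOudef
  have hOuopen : IsOpen Ou := MSaux_Oopen u
  set ρ : ℝ → ℝ := fun y => Φ y (u.f y) * u.f' y - Φt y (u.f y) with hρdef
  set ρ' : ℝ → ℝ := Ou.piecewise ρ (fun _ => 0) with hρ'def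
  have hufmapsto : Set.MapsTo (fun y => ((y, u.f y) : ℝ × ℝ)) Ou U := by
    intro y hy
    exact hmemf u hu hy.1 (by simpa using hy.2)
  have hρcont : ContinuousOn ρ Ou := by
    have hmap : ContinuousOn (fun y => ((y, u.f y) : ℝ × ℝ)) Ou :=
      continuousOn_id.prodMk (MSaux_fcont u)
    have h1 : ContinuousOn (fun y => Φ y (u.f y)) Ou := hΦc.comp hmap hufmapsto
    have h2 : ContinuousOn (fun y => Φt y (u.f y)) Ou := hΦtc.comp hmap hufmapsto
    exact (h1.mul u.derivCont).sub h2
  have hρ'm : Measurable ρ' :=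
    ContinuousOn.measurable_piecewise hρcont continuousOn_const hOuopen.measurableSet
  have hρ'b : ∀ y, |ρ' y| ≤ max (C * Mu' + C) 0 := by
    intro y
    rw [hρ'def]
    by_cases hy : y ∈ Ou
    · rw [Set.piecewise_eq_of_mem _ _ _ hy]
      refine le_trans ?_ (le_max_left _ _)
      have hb1' : |Φ y (u.f y) * u.f' y| ≤ C * Mu' := by
        rw [abs_mul]
        exact mul_le_mul (hΦb _ _) (hMu' y hy.1) (abs_nonneg _) hC0
      calc |ρ y| ≤ |Φ y (u.f y) * u.f' y| + |Φt y (u.f y)| := abs_sub _ _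
        _ ≤ C * Mu' + C := add_le_add hb1' (hΦtb _ _)
    · rw [Set.piecewise_eq_of_notMem _ _ _ hy]
      simpa using le_max_right (C * Mu' + C) 0
  have hρ'int : ∀ c d : ℝ, IntervalIntegrable ρ' volume c d :=
    fun c d => MSaux_intinteg1 hρ'm hρ'b c d
  set A : ℝ → ℝ := fun x => ∫ y in (0:ℝ)..x, ρ' y with hAdef
  have hAcont : Continuous A := intervalIntegral.continuous_primitive (fun c d => hρ'int c d) 0
  have hAderiv : ∀ x ∈ Ou, HasDerivAt A (ρ' x) x := by
    intro x hx
    have hca : ContinuousAt ρ' x := by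
      have hev : ρ' =ᶠ[𝓝 x] ρ := by
        filter_upwards [hOuopen.mem_nhds hx] with y hy
        rw [hρ'def]
        exact Set.piecewise_eq_of_mem _ _ _ hy
      exact (hρcont.continuousAt (hOuopen.mem_nhds hx)).congr hev.symm
    exact intervalIntegral.integral_hasDerivAt_right (hρ'int 0 x)
      (hρ'm.stronglyMeasurable.stronglyMeasurableAtFilter) hca
  -- the integrands
  set Gv : ℝ → ℝ := fun x => v.f' x ^ 2 + β * (v.f x - g x) ^ 2 with hGvdef
  set Gu : ℝ → ℝ := fun x => u.f' x ^ 2 + β * (u.f x - g x) ^ 2 with hGudef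
  have hIoo_fin : ∀ c d : ℝ, volume (Set.Ioo c d) < ⊤ := fun c d => measure_Ioo_lt_top
  have hrescongr : ∀ (w : PiecewiseC1 a) (s : Set ℝ), MeasurableSet s →
      volume.restrict s = volume.restrict (s \ (↑w.S : Set ℝ)) := by
    intro w s hs
    apply (Measure.restrict_congr_set _).symm
    refine MeasureTheory.diff_ae_eq_self.mpr ?_
    exact measure_inter_null_of_null_right s ((w.S.finite_toSet).measure_zero volume)
  have hmeasw : ∀ (w : PiecewiseC1 a), AEMeasurable w.f (volume.restrict (Set.Ioo 0 a)) ∧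
      AEMeasurable w.f' (volume.restrict (Set.Ioo 0 a)) := by
    intro w
    rw [hrescongr w _ measurableSet_Ioo]
    exact ⟨(MSaux_fcont w).aemeasurable (MSaux_Oopen w).measurableSet,
      (w.derivCont).aemeasurable (MSaux_Oopen w).measurableSet⟩
  have hIw : ∀ (w : PiecewiseC1 a), (∀ x ∈ Set.Ioo 0 a, |w.f x| ≤ Mv ∨ True) →
      True := fun _ _ => trivial
  -- integrability of the pieces
  have hint_sq : ∀ (w : PiecewiseC1 a) (M : ℝ), (∀ x ∈ Set.Ioo 0 a, |w.f' x| ≤ M) →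
      IntegrableOn (fun x => w.f' x ^ 2) (Set.Ioo 0 a) volume := by
    intro w M hM
    apply MSaux_integrableOn (hIoo_fin 0 a) ((hmeasw w).2.pow_const 2) (M := M ^ 2)
    filter_upwards [ae_restrict_mem measurableSet_Ioo] with x hx
    rw [abs_pow]
    exact pow_le_pow_left₀ (abs_nonneg _) (hM x hx) 2
  have hint_dev : ∀ (w : PiecewiseC1 a) (M : ℝ), (∀ x ∈ Set.Ioo 0 a, |w.f x| ≤ M) →
      IntegrableOn (fun x => (w.f x - g x) ^ 2) (Set.Ioo 0 a) volume := by
    intro w M hM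
    apply MSaux_integrableOn (hIoo_fin 0 a) (((hmeasw w).1.sub hg_meas.aemeasurable).pow_const 2)
      (M := (M + Cg) ^ 2)
    filter_upwards [ae_restrict_mem measurableSet_Ioo] with x hx
    rw [abs_pow]
    refine pow_le_pow_left₀ (abs_nonneg _) ?_ 2
    calc |w.f x - g x| ≤ |w.f x| + |g x| := abs_sub _ _
      _ ≤ M + Cg := add_le_add (hM x hx) (hCg x hx)
  have hint_u1 : IntegrableOn (fun x => u.f' x ^ 2) (Set.Ioo 0 a) volume := hint_sq u Mu' hMu'
  have hint_u2 : IntegrableOn (fun x => (u.f x - g x) ^ 2) (Set.Ioo 0 a) volume :=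
    hint_dev u Mu hMu
  have hint_v1 : IntegrableOn (fun x => v.f' x ^ 2) (Set.Ioo 0 a) volume := hint_sq v Mv' hMv'
  have hint_v2 : IntegrableOn (fun x => (v.f x - g x) ^ 2) (Set.Ioo 0 a) volume :=
    hint_dev v Mv hMv
  have hint_Gv : IntegrableOn Gv (Set.Ioo 0 a) volume := by
    rw [hGvdef]
    exact hint_v1.add (hint_v2.const_mul β)
  have hint_Gu : IntegrableOn Gu (Set.Ioo 0 a) volume := by
    rw [hGudef]
    exact hint_u1.add (hint_u2.const_mul β)
  -- the function hD (the derivative of the comparison function along v)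
  set hD : ℝ → ℝ := fun x => Φ x (v.f x) * v.f' x - Φt x (v.f x) with hhDdef
  set Ov : Set ℝ := Set.Ioo 0 a \ (↑v.S : Set ℝ) with hOvdef
  have hvfmapsto : Set.MapsTo (fun y => ((y, v.f y) : ℝ × ℝ)) Ov U := by
    intro y hy
    exact hmemf v hvGraph hy.1 (by simpa using hy.2)
  have hDcont : ContinuousOn hD Ov := by
    have hmap : ContinuousOn (fun y => ((y, v.f y) : ℝ × ℝ)) Ov :=
      continuousOn_id.prodMk (MSaux_fcont v)
    have h1 : ContinuousOn (fun y => Φ y (v.f y)) Ov := hΦc.comp hmap hvfmapsto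
    have h2 : ContinuousOn (fun y => Φt y (v.f y)) Ov := hΦtc.comp hmap hvfmapsto
    exact (h1.mul v.derivCont).sub h2
  have hDb : ∀ x ∈ Set.Ioo 0 a, |hD x| ≤ C * Mv' + C := by
    intro x hx
    have hb1' : |Φ x (v.f x) * v.f' x| ≤ C * Mv' := by
      rw [abs_mul]
      exact mul_le_mul (hΦb _ _) (hMv' x hx) (abs_nonneg _) hC0
    calc |hD x| ≤ |Φ x (v.f x) * v.f' x| + |Φt x (v.f x)| := abs_sub _ _
      _ ≤ C * Mv' + C := add_le_add hb1' (hΦtb _ _)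
  have hDint : ∀ {c d : ℝ}, Set.Ioo c d ⊆ Set.Ioo 0 a →
      IntegrableOn hD (Set.Ioo c d) volume := by
    intro c d hsub
    refine MSaux_integrableOn (hIoo_fin c d) ?_ (M := C * Mv' + C) ?_
    · rw [hrescongr v _ measurableSet_Ioo]
      refine (hDcont.mono ?_).aemeasurable
        (measurableSet_Ioo.diff (v.S.finite_toSet).measurableSet)
      exact fun y hy => ⟨hsub hy.1, hy.2⟩
    · filter_upwards [ae_restrict_mem measurableSet_Ioo] with x hx
      exact hDb x (hsub hx)
  -- the comparison function
  set hvf : ℝ → ℝ := fun x => (∫ s in u.f x..v.f x, Φ x s) + A x with hhvdef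
  have hvderiv : ∀ x₀ ∈ Set.Ioo 0 a \ ((↑u.S : Set ℝ) ∪ (↑v.S : Set ℝ)),
      HasDerivAt hvf (hD x₀) x₀ := by
    rintro x₀ ⟨hxI, hxS⟩
    rw [Set.mem_union] at hxS
    push_neg at hxS
    have hxSu : x₀ ∉ u.S := by simpa using hxS.1
    have hxSv : x₀ ∉ v.S := by simpa using hxS.2
    have hmu : (x₀, u.f x₀) ∈ U := hmemf u hu hxI hxSu
    have hmv : (x₀, v.f x₀) ∈ U := hmemf v hvGraph hxI hxSv
    have hseg : ∀ s ∈ Set.uIcc (u.f x₀) (v.f x₀), (x₀, s) ∈ U :=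
      fun s hs => hsec _ _ _ _ hmu hmv hs
    have hmain := MSaux_moving hUopen hΦm hΦb hΦc hψc hψd
      (u.hasDeriv x₀ ⟨hxI, by simpa using hxSu⟩) (v.hasDeriv x₀ ⟨hxI, by simpa using hxSv⟩) hseg
    have hAd : HasDerivAt A (ρ' x₀) x₀ := hAderiv x₀ ⟨hxI, by simpa using hxSu⟩
    have htot := hmain.add hAd
    have hsum : Φ x₀ (v.f x₀) * v.f' x₀ - Φ x₀ (u.f x₀) * u.f' x₀
        + (∫ s in u.f x₀..v.f x₀, ψ x₀ s) + ρ' x₀ = hD x₀ := by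
      have hψint : (∫ s in u.f x₀..v.f x₀, ψ x₀ s)
          = -(φt x₀ (v.f x₀) - φt x₀ (u.f x₀)) := by
        have h1 : Set.EqOn (fun s => ψ x₀ s) (fun s => -ψt x₀ s)
            (Set.uIcc (u.f x₀) (v.f x₀)) := fun s hs => hc1' (x₀, s) (hseg s hs)
        rw [intervalIntegral.integral_congr h1]
        have h2 : ∀ s ∈ Set.uIcc (u.f x₀) (v.f x₀),
            HasDerivAt (fun r => φt x₀ r) (ψt x₀ s) s := fun s hs => hψtd0 (x₀, s) (hseg s hs)
        have h3 : IntervalIntegrable (fun s => ψt x₀ s) volume (u.f x₀) (v.f x₀) := by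
          apply ContinuousOn.intervalIntegrable
          exact hψtcont.comp ((continuous_const.prodMk continuous_id).continuousOn)
            (fun s hs => hseg s hs)
        rw [intervalIntegral.integral_neg, intervalIntegral.integral_eq_sub_of_hasDerivAt h2 h3]
      rw [hψint, hρ'def]
      rw [Set.piecewise_eq_of_mem _ _ _ (show x₀ ∈ Ou from ⟨hxI, by simpa using hxSu⟩)]
      show Φ x₀ (v.f x₀) * v.f' x₀ - Φ x₀ (u.f x₀) * u.f' x₀
        + -(φt x₀ (v.f x₀) - φt x₀ (u.f x₀))
        + (Φ x₀ (u.f x₀) * u.f' x₀ - Φt x₀ (u.f x₀)) = hD x₀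
      rw [hΦtU hmu]
      show _ = Φ x₀ (v.f x₀) * v.f' x₀ - Φt x₀ (v.f x₀)
      rw [hΦtU hmv]
      ring
    rw [hsum] at htot
    exact htot
  -- a.e. null of jump sets
  have hS_ae : ∀ (w : PiecewiseC1 a), ∀ᵐ x ∂(volume.restrict (Set.Ioo 0 a)),
      x ∉ (↑w.S : Set ℝ) := by
    intro w
    apply ae_restrict_of_ae
    have : volume (↑w.S : Set ℝ) = 0 := (w.S.finite_toSet).measure_zero volume
    exact measure_eq_zero_iff_ae_notMem.mp this
  -- (a1) implies the pointwise bound for v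
  have hDle : ∀ᵐ x ∂(volume.restrict (Set.Ioo 0 a)), hD x ≤ Gv x := by
    filter_upwards [ha1, hS_ae v, ae_restrict_mem measurableSet_Ioo] with x h1 h2 h3
    have hxv : (x, v.f x) ∈ U := hmemf v hvGraph h3 (by simpa using h2)
    have hsec' := (hUmem x (v.f x)).mp hxv
    have key := h1 (v.f x) hsec'.2.1 hsec'.2.2
    show Φ x (v.f x) * v.f' x - Φt x (v.f x) ≤ v.f' x ^ 2 + β * (v.f x - g x) ^ 2
    rw [hΦU hxv, hΦtU hxv]
    nlinarith [sq_nonneg (φx x (v.f x) / 2 - v.f' x)]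
  -- one-sided limits of hvf at interior points
  have hvf_limL : ∀ xq ∈ Set.Ioo 0 a, Tendsto hvf (𝓝[<] xq)
      (𝓝 ((∫ s in u.limL xq..v.limL xq, Φ xq s) + A xq)) := by
    intro xq hxq
    have hpU : (xq, u.limL xq) ∈ U := hmemL u hu hxq
    have hqU : (xq, v.limL xq) ∈ U := hmemL v hvGraph hxq
    have hconv : ∀ᵐ s ∂(volume.restrict (Ι (u.limL xq) (v.limL xq))),
        Tendsto (fun x => Φ x s) (𝓝[<] xq) (𝓝 (Φ xq s)) := by
      filter_upwards [ae_restrict_mem measurableSet_uIoc] with s hs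
      have hsU : (xq, s) ∈ U := hsec _ _ _ _ hpU hqU (Set.uIoc_subset_uIcc hs)
      have hmap : Tendsto (fun x : ℝ => ((x, s) : ℝ × ℝ)) (𝓝[<] xq) (𝓝 (xq, s)) :=
        ((continuous_id.prodMk continuous_const).tendsto xq).mono_left nhdsWithin_le_nhds
      exact (hΦcAt hsU).tendsto.comp hmap
    have hmain := MSaux_tendsto_moving hΦm hΦb
      (u.tendsto_limL xq ⟨hxq.1, hxq.2.le⟩) (v.tendsto_limL xq ⟨hxq.1, hxq.2.le⟩)
      ((hΦm.of_uncurry_left).aestronglyMeasurable) hconv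
    exact hmain.add ((hAcont.tendsto xq).mono_left nhdsWithin_le_nhds)
  have hvf_limR : ∀ xq ∈ Set.Ioo 0 a, Tendsto hvf (𝓝[>] xq)
      (𝓝 ((∫ s in u.limR xq..v.limR xq, Φ xq s) + A xq)) := by
    intro xq hxq
    have hpU : (xq, u.limR xq) ∈ U := hmemR u hu hxq
    have hqU : (xq, v.limR xq) ∈ U := hmemR v hvGraph hxq
    have hconv : ∀ᵐ s ∂(volume.restrict (Ι (u.limR xq) (v.limR xq))),
        Tendsto (fun x => Φ x s) (𝓝[>] xq) (𝓝 (Φ xq s)) := by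
      filter_upwards [ae_restrict_mem measurableSet_uIoc] with s hs
      have hsU : (xq, s) ∈ U := hsec _ _ _ _ hpU hqU (Set.uIoc_subset_uIcc hs)
      have hmap : Tendsto (fun x : ℝ => ((x, s) : ℝ × ℝ)) (𝓝[>] xq) (𝓝 (xq, s)) :=
        ((continuous_id.prodMk continuous_const).tendsto xq).mono_left nhdsWithin_le_nhds
      exact (hΦcAt hsU).tendsto.comp hmap
    have hmain := MSaux_tendsto_moving hΦm hΦb
      (u.tendsto_limR xq ⟨hxq.1.le, hxq.2⟩) (v.tendsto_limR xq ⟨hxq.1.le, hxq.2⟩)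
      ((hΦm.of_uncurry_left).aestronglyMeasurable) hconv
    exact hmain.add ((hAcont.tendsto xq).mono_left nhdsWithin_le_nhds)
  -- rearrangement of the jump of hvf
  have hjump : ∀ xq : ℝ,
      (∫ s in u.limR xq..v.limR xq, Φ xq s) - (∫ s in u.limL xq..v.limL xq, Φ xq s)
      = (∫ s in v.limL xq..v.limR xq, Φ xq s) - (∫ s in u.limL xq..u.limR xq, Φ xq s) := by
    intro xq
    have h1 := intervalIntegral.integral_add_adjacent_intervals
      (hΦint xq (u.limR xq) (u.limL xq)) (hΦint xq (u.limL xq) (v.limR xq))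
    have h2 := intervalIntegral.integral_add_adjacent_intervals
      (hΦint xq (u.limL xq) (v.limL xq)) (hΦint xq (v.limL xq) (v.limR xq))
    have h3 : (∫ s in u.limR xq..u.limL xq, Φ xq s) = - ∫ s in u.limL xq..u.limR xq, Φ xq s :=
      intervalIntegral.integral_symm _ _
    linarith
  -- value of the jump term of u
  have hujump : ∀ xq ∈ Set.Ioo 0 a, (∫ s in u.limL xq..u.limR xq, Φ xq s)
      = α * (if xq ∈ u.S then (1:ℝ) else 0) := by
    intro xq hxq
    by_cases hS : xq ∈ u.S
    · rw [if_pos hS, mul_one]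
      have hlowU : (xq, u.lower xq) ∈ U := hu xq hxq _ le_rfl (MSaux_lower_le_upper u xq)
      have hupU : (xq, u.upper xq) ∈ U := hu xq hxq _ (MSaux_lower_le_upper u xq) le_rfl
      have hcong : (∫ s in u.lower xq..u.upper xq, Φ xq s)
          = ∫ s in u.lower xq..u.upper xq, φx xq s := by
        apply intervalIntegral.integral_congr
        intro s hs
        exact hΦU (hsec _ _ _ _ hlowU hupU hs)
      have hb2' := hb2 xq hS
      have hne : u.limL xq ≠ u.limR xq := (u.jump_iff xq hxq).mpr hS
      rcases lt_or_gt_of_ne hne with hlt | hgt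
      · have hlow : u.lower xq = u.limL xq := by
          unfold PiecewiseC1.lower; rw [if_pos hS]; exact min_eq_left hlt.le
        have hup : u.upper xq = u.limR xq := by
          unfold PiecewiseC1.upper; rw [if_pos hS]; exact max_eq_right hlt.le
        have hnu : u.nu xq = 1 := by
          unfold PiecewiseC1.nu; exact Real.sign_of_pos (by linarith)
        have : (∫ s in u.limL xq..u.limR xq, Φ xq s) = α * u.nu xq := by
          rw [← hlow, ← hup, hcong]; exact hb2'
        rw [this, hnu, mul_one]
      · have hlow : u.lower xq = u.limR xq := by
          unfold PiecewiseC1.lower; rw [if_pos hS]; exact min_eq_right hgt.le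
        have hup : u.upper xq = u.limL xq := by
          unfold PiecewiseC1.upper; rw [if_pos hS]; exact max_eq_left hgt.le
        have hnu : u.nu xq = -1 := by
          unfold PiecewiseC1.nu; exact Real.sign_of_neg (by linarith)
        have hval : (∫ s in u.limR xq..u.limL xq, Φ xq s) = α * u.nu xq := by
          rw [← hlow, ← hup, hcong]; exact hb2'
        have hsymm : (∫ s in u.limL xq..u.limR xq, Φ xq s)
            = - ∫ s in u.limR xq..u.limL xq, Φ xq s := intervalIntegral.integral_symm _ _
        rw [hsymm, hval, hnu]; ring
    · rw [if_neg hS, MSaux_limL_eq u hxq hS, MSaux_limR_eq u hxq hS]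
      simp
  -- bound for the jump term of v
  have hvjump : ∀ xq ∈ Set.Ioo 0 a, (∫ s in v.limL xq..v.limR xq, Φ xq s)
      ≤ α * (if xq ∈ v.S then (1:ℝ) else 0) := by
    intro xq hxq
    by_cases hS : xq ∈ v.S
    · rw [if_pos hS, mul_one]
      have hLU : (xq, v.limL xq) ∈ U := hmemL v hvGraph hxq
      have hRU : (xq, v.limR xq) ∈ U := hmemR v hvGraph hxq
      have hcong : (∫ s in v.limL xq..v.limR xq, Φ xq s)
          = ∫ s in v.limL xq..v.limR xq, φx xq s := by
        apply intervalIntegral.integral_congr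
        intro s hs
        exact hΦU (hsec _ _ _ _ hLU hRU hs)
      have hne : v.limL xq ≠ v.limR xq := (v.jump_iff xq hxq).mpr hS
      rcases lt_or_gt_of_ne hne with hlt | hgt
      · have := hb1 xq hxq (v.limL xq) (v.limR xq) ((hUmem _ _).mp hLU).2.1 hlt
          ((hUmem _ _).mp hRU).2.2
        rw [hcong]
        exact le_trans (le_abs_self _) this
      · have hbnd := hb1 xq hxq (v.limR xq) (v.limL xq) ((hUmem _ _).mp hRU).2.1 hgt
          ((hUmem _ _).mp hLU).2.2
        have hsymm : (∫ s in v.limL xq..v.limR xq, φx xq s)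
            = - ∫ s in v.limR xq..v.limL xq, φx xq s := intervalIntegral.integral_symm _ _
        rw [hcong, hsymm]
        calc -(∫ s in v.limR xq..v.limL xq, φx xq s)
            ≤ |∫ s in v.limR xq..v.limL xq, φx xq s| := neg_le_abs _
          _ ≤ α := hbnd
    · rw [if_neg hS, MSaux_limL_eq v hxq hS, MSaux_limR_eq v hxq hS]
      simp
  -- the telescoping induction
  set Q : Finset ℝ := u.S ∪ v.S with hQdef
  have key : ∀ n : ℕ, ∀ c d : ℝ, 0 ≤ c → c < d → d ≤ a →
      (Q.filter (fun y => y ∈ Set.Ioo c d)).card = n →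
      ∀ Lc Ld : ℝ, Tendsto hvf (𝓝[>] c) (𝓝 Lc) → Tendsto hvf (𝓝[<] d) (𝓝 Ld) →
      Ld - Lc ≤ (∫ x in Set.Ioo c d, Gv x)
        + α * ((v.S.filter (fun y => y ∈ Set.Ioo c d)).card : ℝ)
        - α * ((u.S.filter (fun y => y ∈ Set.Ioo c d)).card : ℝ) := by
    intro n
    induction n using Nat.strong_induction_on with
    | _ n IH =>
      intro c d hc0 hcd hda hcard Lc Ld hLc hLd
      rcases Nat.eq_zero_or_pos n with hn0 | hnpos
      · -- base case : no jump points inside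
        have hempty : Q.filter (fun y => y ∈ Set.Ioo c d) = ∅ :=
          Finset.card_eq_zero.mp (by rw [hcard, hn0])
        have hnoQ : ∀ y ∈ Set.Ioo c d, y ∉ Q := by
          intro y hy hyQ
          have : y ∈ Q.filter (fun y => y ∈ Set.Ioo c d) := Finset.mem_filter.mpr ⟨hyQ, hy⟩
          rw [hempty] at this
          exact absurd this (Finset.notMem_empty y)
        have husub : (u.S.filter (fun y => y ∈ Set.Ioo c d)) = ∅ := by
          rw [Finset.eq_empty_iff_forall_notMem]
          intro y hy
          have hy' := Finset.mem_filter.mp hy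
          exact hnoQ y hy'.2 (Finset.mem_union_left _ hy'.1)
        have hvsub : (v.S.filter (fun y => y ∈ Set.Ioo c d)) = ∅ := by
          rw [Finset.eq_empty_iff_forall_notMem]
          intro y hy
          have hy' := Finset.mem_filter.mp hy
          exact hnoQ y hy'.2 (Finset.mem_union_right _ hy'.1)
        rw [husub, hvsub]
        simp only [Finset.card_empty, Nat.cast_zero, mul_zero, add_zero, sub_zero]
        have hsubI : Set.Ioo c d ⊆ Set.Ioo 0 a :=
          fun y hy => ⟨lt_of_le_of_lt hc0 hy.1, lt_of_lt_of_le hy.2 hda⟩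
        refine MSaux_strip hcd (h := hvf) (hD := hD) (G := Gv)
          (fun x hx => hvderiv x ⟨hsubI hx, ?_⟩) (hDint hsubI)
          (hint_Gv.mono_set hsubI) ?_ ?_ hLc hLd
        · intro hmem
          apply hnoQ x hx
          rcases hmem with h | h
          · exact Finset.mem_union_left _ (by simpa using h)
          · exact Finset.mem_union_right _ (by simpa using h)
        · refine Eventually.of_forall fun x => ?_
          exact add_nonneg (sq_nonneg _) (mul_nonneg hβ (sq_nonneg _))
        · exact ae_restrict_of_ae_restrict_of_subset hsubI hDle
      · -- inductive step : split at a jump point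
        obtain ⟨xb, hxbmem⟩ := Finset.card_pos.mp (by rw [hcard]; exact hnpos)
        obtain ⟨hxbQ, hxbIoo⟩ := Finset.mem_filter.mp hxbmem
        have hxb0a : xb ∈ Set.Ioo 0 a :=
          ⟨lt_of_le_of_lt hc0 hxbIoo.1, lt_of_lt_of_le hxbIoo.2 hda⟩
        have hLm := hvf_limL xb hxb0a
        have hLp := hvf_limR xb hxb0a
        have hsplitQ := MSaux_filter_split Q hxbIoo.1 hxbIoo.2
        have hsplitu := MSaux_filter_split u.S hxbIoo.1 hxbIoo.2
        have hsplitv := MSaux_filter_split v.S hxbIoo.1 hxbIoo.2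
        rw [hcard, if_pos hxbQ] at hsplitQ
        have hn₁ : (Q.filter (fun y => y ∈ Set.Ioo c xb)).card < n := by omega
        have hn₂ : (Q.filter (fun y => y ∈ Set.Ioo xb d)).card < n := by omega
        have IH1 := IH _ hn₁ c xb hc0 hxbIoo.1 hxb0a.2.le rfl Lc
          ((∫ s in u.limL xb..v.limL xb, Φ xb s) + A xb) hLc hLm
        have IH2 := IH _ hn₂ xb d hxb0a.1.le hxbIoo.2 hda rfl
          ((∫ s in u.limR xb..v.limR xb, Φ xb s) + A xb) Ld hLp hLd
        have hj := hjump xb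
        have hju := hujump xb hxb0a
        have hjv := hvjump xb hxb0a
        -- integral splitting
        have hIsplit : (∫ x in Set.Ioo c d, Gv x)
            = (∫ x in Set.Ioo c xb, Gv x) + ∫ x in Set.Ioo xb d, Gv x := by
          have hsubI : Set.Ioo c d ⊆ Set.Ioo 0 a :=
            fun y hy => ⟨lt_of_le_of_lt hc0 hy.1, lt_of_lt_of_le hy.2 hda⟩
          have hu1 : Set.Ioo c xb ⊆ Set.Ioo c d :=
            fun y hy => ⟨hy.1, lt_trans hy.2 hxbIoo.2⟩
          have hu2 : Set.Ioo xb d ⊆ Set.Ioo c d :=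
            fun y hy => ⟨lt_trans hxbIoo.1 hy.1, hy.2⟩
          have hset : Set.Ioo c xb ∪ Set.Ioo xb d = Set.Ioo c d \ {xb} := by
            ext y
            simp only [Set.mem_union, Set.mem_Ioo, Set.mem_diff, Set.mem_singleton_iff]
            constructor
            · rintro (⟨h1, h2⟩ | ⟨h1, h2⟩)
              · exact ⟨⟨h1, lt_trans h2 hxbIoo.2⟩, ne_of_lt h2⟩
              · exact ⟨⟨lt_trans hxbIoo.1 h1, h2⟩, (ne_of_lt h1).symm⟩
            · rintro ⟨⟨h1, h2⟩, h3⟩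
              rcases lt_or_gt_of_ne h3 with h | h
              · exact Or.inl ⟨h1, h⟩
              · exact Or.inr ⟨h, h2⟩
          have hdisj : Disjoint (Set.Ioo c xb) (Set.Ioo xb d) := by
            rw [Set.disjoint_left]
            intro y h1 h2
            exact absurd (lt_trans h1.2 h2.1) (lt_irrefl y)
          have h2 := setIntegral_union hdisj measurableSet_Ioo
            ((hint_Gv.mono_set (le_trans hu1 hsubI))) ((hint_Gv.mono_set (le_trans hu2 hsubI)))
          have h3 : ∫ x in Set.Ioo c d \ {xb}, Gv x = ∫ x in Set.Ioo c d, Gv x := by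
            apply setIntegral_congr_set
            refine MeasureTheory.diff_ae_eq_self.mpr ?_
            exact measure_inter_null_of_null_right _ (Real.volume_singleton)
          rw [← h3, ← hset, h2]
        rw [hsplitu, hsplitv, hIsplit]
        push_cast
        linarith
  -- eventual facts near the endpoints
  have hfIoo0 : Set.Ioo (0:ℝ) a ∈ 𝓝[>] (0:ℝ) := Ioo_mem_nhdsGT_of_mem ⟨le_rfl, ha⟩
  have hfIooa : Set.Ioo (0:ℝ) a ∈ 𝓝[<] a := Ioo_mem_nhdsLT_of_mem ⟨ha, le_rfl⟩
  have hSnhd : ∀ (w : PiecewiseC1 a) (x₀ : ℝ), x₀ ∉ (↑w.S : Set ℝ) →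
      ∀ᶠ x in 𝓝 x₀, x ∉ (↑w.S : Set ℝ) := by
    intro w x₀ hx₀
    have := ((w.S.finite_toSet.isClosed).isOpen_compl).mem_nhds (by simpa using hx₀)
    exact eventually_of_mem this (fun y hy => hy)
  have h0Su : (0:ℝ) ∉ (↑u.S : Set ℝ) := by
    intro h
    exact absurd (u.S_sub 0 (by simpa using h)).1 (lt_irrefl 0)
  have h0Sv : (0:ℝ) ∉ (↑v.S : Set ℝ) := by
    intro h
    exact absurd (v.S_sub 0 (by simpa using h)).1 (lt_irrefl 0)
  have haSu : a ∉ (↑u.S : Set ℝ) := by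
    intro h
    exact absurd (u.S_sub a (by simpa using h)).2 (lt_irrefl a)
  have haSv : a ∉ (↑v.S : Set ℝ) := by
    intro h
    exact absurd (v.S_sub a (by simpa using h)).2 (lt_irrefl a)
  -- continuity of τ at the endpoints along the interior
  have hτlim01 : Tendsto τ₁ (𝓝[>] (0:ℝ)) (𝓝 (τ₁ 0)) := by
    rw [(nhdsWithin_Ioo_eq_nhdsGT ha).symm]
    exact (hτ₁ 0 ⟨le_rfl, ha.le⟩).mono_left (nhdsWithin_mono _ Set.Ioo_subset_Icc_self)
  have hτlim02 : Tendsto τ₂ (𝓝[>] (0:ℝ)) (𝓝 (τ₂ 0)) := by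
    rw [(nhdsWithin_Ioo_eq_nhdsGT ha).symm]
    exact (hτ₂ 0 ⟨le_rfl, ha.le⟩).mono_left (nhdsWithin_mono _ Set.Ioo_subset_Icc_self)
  have hτlima1 : Tendsto τ₁ (𝓝[<] a) (𝓝 (τ₁ a)) := by
    rw [(nhdsWithin_Ioo_eq_nhdsLT ha).symm]
    exact (hτ₁ a ⟨ha.le, le_rfl⟩).mono_left (nhdsWithin_mono _ Set.Ioo_subset_Icc_self)
  have hτlima2 : Tendsto τ₂ (𝓝[<] a) (𝓝 (τ₂ a)) := by
    rw [(nhdsWithin_Ioo_eq_nhdsLT ha).symm]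
    exact (hτ₂ a ⟨ha.le, le_rfl⟩).mono_left (nhdsWithin_mono _ Set.Ioo_subset_Icc_self)
  -- graphs eventually in U near the endpoints
  have hfev0 : ∀ (w : PiecewiseC1 a), w.GraphIn U → (0:ℝ) ∉ (↑w.S : Set ℝ) →
      ∀ᶠ x in 𝓝[>] (0:ℝ), (x, w.f x) ∈ U := by
    intro w hw h0S
    filter_upwards [hfIoo0, (hSnhd w 0 h0S).filter_mono nhdsWithin_le_nhds] with x h1 h2
    exact hmemf w hw h1 (by simpa using h2)
  have hfeva : ∀ (w : PiecewiseC1 a), w.GraphIn U → a ∉ (↑w.S : Set ℝ) →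
      ∀ᶠ x in 𝓝[<] a, (x, w.f x) ∈ U := by
    intro w hw h0S
    filter_upwards [hfIooa, (hSnhd w a h0S).filter_mono nhdsWithin_le_nhds] with x h1 h2
    exact hmemf w hw h1 (by simpa using h2)
  -- the one-sided limits at the endpoints lie between τ₁ and τ₂
  have hbound0 : ∀ (w : PiecewiseC1 a), w.GraphIn U → (0:ℝ) ∉ (↑w.S : Set ℝ) →
      τ₁ 0 ≤ ((w.limR 0 : ℝ) : EReal) ∧ ((w.limR 0 : ℝ) : EReal) ≤ τ₂ 0 := by
    intro w hw h0S
    have hfev := hfev0 w hw h0S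
    have hcoef : Tendsto (fun x => ((w.f x : ℝ) : EReal)) (𝓝[>] (0:ℝ))
        (𝓝 ((w.limR 0 : ℝ) : EReal)) :=
      (continuous_coe_real_ereal.tendsto _).comp (w.tendsto_limR 0 ⟨le_rfl, ha⟩)
    constructor
    · refine le_of_tendsto_of_tendsto hτlim01 hcoef ?_
      filter_upwards [hfev] with x hx
      exact le_of_lt ((hUmem x (w.f x)).mp hx).2.1
    · refine le_of_tendsto_of_tendsto hcoef hτlim02 ?_
      filter_upwards [hfev] with x hx
      exact le_of_lt ((hUmem x (w.f x)).mp hx).2.2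
  have hbounda : ∀ (w : PiecewiseC1 a), w.GraphIn U → a ∉ (↑w.S : Set ℝ) →
      τ₁ a ≤ ((w.limL a : ℝ) : EReal) ∧ ((w.limL a : ℝ) : EReal) ≤ τ₂ a := by
    intro w hw haS
    have hfev := hfeva w hw haS
    have hcoef : Tendsto (fun x => ((w.f x : ℝ) : EReal)) (𝓝[<] a)
        (𝓝 ((w.limL a : ℝ) : EReal)) :=
      (continuous_coe_real_ereal.tendsto _).comp (w.tendsto_limL a ⟨ha, le_rfl⟩)
    constructor
    · refine le_of_tendsto_of_tendsto hτlima1 hcoef ?_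
      filter_upwards [hfev] with x hx
      exact le_of_lt ((hUmem x (w.f x)).mp hx).2.1
    · refine le_of_tendsto_of_tendsto hcoef hτlima2 ?_
      filter_upwards [hfev] with x hx
      exact le_of_lt ((hUmem x (w.f x)).mp hx).2.2
  -- the Neumann boundary limits
  have hNeu0 : Tendsto hvf (𝓝[>] (0:ℝ)) (𝓝 (0 + A 0)) := by
    have hb0u := hbound0 u hu h0Su
    have hb0v := hbound0 v hvGraph h0Sv
    have hconv : ∀ᵐ s ∂(volume.restrict (Ι (u.limR 0) (v.limR 0))),
        Tendsto (fun x => Φ x s) (𝓝[>] (0:ℝ)) (𝓝 ((fun _ => (0:ℝ)) s)) := by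
      have hmax : ∀ᵐ s ∂(volume.restrict (Ι (u.limR 0) (v.limR 0))),
          s ≠ max (u.limR 0) (v.limR 0) := by
        apply ae_restrict_of_ae
        have h0 : ∀ᵐ s ∂(volume : Measure ℝ), s ∉ ({max (u.limR 0) (v.limR 0)} : Set ℝ) :=
          measure_eq_zero_iff_ae_notMem.mp Real.volume_singleton
        filter_upwards [h0] with s hs
        simpa using hs
      filter_upwards [ae_restrict_mem measurableSet_uIoc, hmax, ae_restrict_of_ae hc2_left]
        with s hs hsmax hc2s
      have hsIoo : min (u.limR 0) (v.limR 0) < s ∧ s < max (u.limR 0) (v.limR 0) := by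
        rcases Set.mem_uIoc.mp hs with ⟨h1, h2⟩ | ⟨h1, h2⟩
        · constructor
          · exact lt_of_le_of_lt (min_le_left _ _) h1
          · exact lt_of_le_of_ne (le_trans h2 (le_max_right _ _)) hsmax
        · constructor
          · exact lt_of_le_of_lt (min_le_right _ _) h1
          · exact lt_of_le_of_ne (le_trans h2 (le_max_left _ _)) hsmax
      have hτs1 : τ₁ 0 ≤ ((s : ℝ) : EReal) := by
        rcases le_total (u.limR 0) (v.limR 0) with h | h
        · rw [min_eq_left h] at hsIoo
          exact le_trans hb0u.1 (EReal.coe_le_coe_iff.mpr hsIoo.1.le)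
        · rw [min_eq_right h] at hsIoo
          exact le_trans hb0v.1 (EReal.coe_le_coe_iff.mpr hsIoo.1.le)
      have hτs2 : ((s : ℝ) : EReal) ≤ τ₂ 0 := by
        rcases le_total (u.limR 0) (v.limR 0) with h | h
        · rw [max_eq_right h] at hsIoo
          exact le_trans (EReal.coe_le_coe_iff.mpr hsIoo.2.le) hb0v.2
        · rw [max_eq_left h] at hsIoo
          exact le_trans (EReal.coe_le_coe_iff.mpr hsIoo.2.le) hb0u.2
      have htends := hc2s hτs1 hτs2
      have hev : ∀ᶠ x in 𝓝[>] (0:ℝ), (x, s) ∈ U := by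
        rcases le_total (u.limR 0) (v.limR 0) with hpq | hpq
        · have h1 : ∀ᶠ x in 𝓝[>] (0:ℝ), u.f x < s :=
            (u.tendsto_limR 0 ⟨le_rfl, ha⟩).eventually_lt_const
              (by rw [min_eq_left hpq] at hsIoo; exact hsIoo.1)
          have h2 : ∀ᶠ x in 𝓝[>] (0:ℝ), s < v.f x :=
            (v.tendsto_limR 0 ⟨le_rfl, ha⟩).eventually_const_lt
              (by rw [max_eq_right hpq] at hsIoo; exact hsIoo.2)
          filter_upwards [h1, h2, hfev0 u hu h0Su, hfev0 v hvGraph h0Sv] with x hx1 hx2 hx3 hx4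
          refine hsec _ _ _ _ hx3 hx4 ?_
          rw [Set.mem_uIcc]
          exact Or.inl ⟨hx1.le, hx2.le⟩
        · have h1 : ∀ᶠ x in 𝓝[>] (0:ℝ), v.f x < s :=
            (v.tendsto_limR 0 ⟨le_rfl, ha⟩).eventually_lt_const
              (by rw [min_eq_right hpq] at hsIoo; exact hsIoo.1)
          have h2 : ∀ᶠ x in 𝓝[>] (0:ℝ), s < u.f x :=
            (u.tendsto_limR 0 ⟨le_rfl, ha⟩).eventually_const_lt
              (by rw [max_eq_left hpq] at hsIoo; exact hsIoo.2)
          filter_upwards [h1, h2, hfev0 u hu h0Su, hfev0 v hvGraph h0Sv] with x hx1 hx2 hx3 hx4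
          refine hsec _ _ _ _ hx3 hx4 ?_
          rw [Set.mem_uIcc]
          exact Or.inr ⟨hx1.le, hx2.le⟩
      have hmapU : Tendsto (fun x : ℝ => ((x, s) : ℝ × ℝ)) (𝓝[>] (0:ℝ)) (𝓝[U] ((0:ℝ), s)) := by
        rw [tendsto_nhdsWithin_iff]
        exact ⟨((continuous_id.prodMk continuous_const).tendsto 0).mono_left nhdsWithin_le_nhds,
          hev⟩
      have hcomp := htends.comp hmapU
      have hΦev : ∀ᶠ x in 𝓝[>] (0:ℝ),
          ((fun p : ℝ × ℝ => φx p.1 p.2) ∘ (fun x : ℝ => ((x, s) : ℝ × ℝ))) x = Φ x s := by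
        filter_upwards [hev] with x hx
        exact (hΦU hx).symm
      exact Tendsto.congr' hΦev hcomp
    have hmain := MSaux_tendsto_moving hΦm hΦb
      (u.tendsto_limR 0 ⟨le_rfl, ha⟩) (v.tendsto_limR 0 ⟨le_rfl, ha⟩)
      aestronglyMeasurable_const hconv
    rw [intervalIntegral.integral_zero] at hmain
    exact hmain.add ((hAcont.tendsto 0).mono_left nhdsWithin_le_nhds)
  have hNeua : Tendsto hvf (𝓝[<] a) (𝓝 (0 + A a)) := by
    have hbau := hbounda u hu haSu
    have hbav := hbounda v hvGraph haSv
    have hconv : ∀ᵐ s ∂(volume.restrict (Ι (u.limL a) (v.limL a))),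
        Tendsto (fun x => Φ x s) (𝓝[<] a) (𝓝 ((fun _ => (0:ℝ)) s)) := by
      have hmax : ∀ᵐ s ∂(volume.restrict (Ι (u.limL a) (v.limL a))),
          s ≠ max (u.limL a) (v.limL a) := by
        apply ae_restrict_of_ae
        have h0 : ∀ᵐ s ∂(volume : Measure ℝ), s ∉ ({max (u.limL a) (v.limL a)} : Set ℝ) :=
          measure_eq_zero_iff_ae_notMem.mp Real.volume_singleton
        filter_upwards [h0] with s hs
        simpa using hs
      filter_upwards [ae_restrict_mem measurableSet_uIoc, hmax, ae_restrict_of_ae hc2_right]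
        with s hs hsmax hc2s
      have hsIoo : min (u.limL a) (v.limL a) < s ∧ s < max (u.limL a) (v.limL a) := by
        rcases Set.mem_uIoc.mp hs with ⟨h1, h2⟩ | ⟨h1, h2⟩
        · constructor
          · exact lt_of_le_of_lt (min_le_left _ _) h1
          · exact lt_of_le_of_ne (le_trans h2 (le_max_right _ _)) hsmax
        · constructor
          · exact lt_of_le_of_lt (min_le_right _ _) h1
          · exact lt_of_le_of_ne (le_trans h2 (le_max_left _ _)) hsmax
      have hτs1 : τ₁ a ≤ ((s : ℝ) : EReal) := by
        rcases le_total (u.limL a) (v.limL a) with h | h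
        · rw [min_eq_left h] at hsIoo
          exact le_trans hbau.1 (EReal.coe_le_coe_iff.mpr hsIoo.1.le)
        · rw [min_eq_right h] at hsIoo
          exact le_trans hbav.1 (EReal.coe_le_coe_iff.mpr hsIoo.1.le)
      have hτs2 : ((s : ℝ) : EReal) ≤ τ₂ a := by
        rcases le_total (u.limL a) (v.limL a) with h | h
        · rw [max_eq_right h] at hsIoo
          exact le_trans (EReal.coe_le_coe_iff.mpr hsIoo.2.le) hbav.2
        · rw [max_eq_left h] at hsIoo
          exact le_trans (EReal.coe_le_coe_iff.mpr hsIoo.2.le) hbau.2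
      have htends := hc2s hτs1 hτs2
      have hev : ∀ᶠ x in 𝓝[<] a, (x, s) ∈ U := by
        rcases le_total (u.limL a) (v.limL a) with hpq | hpq
        · have h1 : ∀ᶠ x in 𝓝[<] a, u.f x < s :=
            (u.tendsto_limL a ⟨ha, le_rfl⟩).eventually_lt_const
              (by rw [min_eq_left hpq] at hsIoo; exact hsIoo.1)
          have h2 : ∀ᶠ x in 𝓝[<] a, s < v.f x :=
            (v.tendsto_limL a ⟨ha, le_rfl⟩).eventually_const_lt
              (by rw [max_eq_right hpq] at hsIoo; exact hsIoo.2)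
          filter_upwards [h1, h2, hfeva u hu haSu, hfeva v hvGraph haSv] with x hx1 hx2 hx3 hx4
          refine hsec _ _ _ _ hx3 hx4 ?_
          rw [Set.mem_uIcc]
          exact Or.inl ⟨hx1.le, hx2.le⟩
        · have h1 : ∀ᶠ x in 𝓝[<] a, v.f x < s :=
            (v.tendsto_limL a ⟨ha, le_rfl⟩).eventually_lt_const
              (by rw [min_eq_right hpq] at hsIoo; exact hsIoo.1)
          have h2 : ∀ᶠ x in 𝓝[<] a, s < u.f x :=
            (u.tendsto_limL a ⟨ha, le_rfl⟩).eventually_const_lt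
              (by rw [max_eq_left hpq] at hsIoo; exact hsIoo.2)
          filter_upwards [h1, h2, hfeva u hu haSu, hfeva v hvGraph haSv] with x hx1 hx2 hx3 hx4
          refine hsec _ _ _ _ hx3 hx4 ?_
          rw [Set.mem_uIcc]
          exact Or.inr ⟨hx1.le, hx2.le⟩
      have hmapU : Tendsto (fun x : ℝ => ((x, s) : ℝ × ℝ)) (𝓝[<] a) (𝓝[U] (a, s)) := by
        rw [tendsto_nhdsWithin_iff]
        exact ⟨((continuous_id.prodMk continuous_const).tendsto a).mono_left nhdsWithin_le_nhds,
          hev⟩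
      have hcomp := htends.comp hmapU
      have hΦev : ∀ᶠ x in 𝓝[<] a,
          ((fun p : ℝ × ℝ => φx p.1 p.2) ∘ (fun x : ℝ => ((x, s) : ℝ × ℝ))) x = Φ x s := by
        filter_upwards [hev] with x hx
        exact (hΦU hx).symm
      exact Tendsto.congr' hΦev hcomp
    have hmain := MSaux_tendsto_moving hΦm hΦb
      (u.tendsto_limL a ⟨ha, le_rfl⟩) (v.tendsto_limL a ⟨ha, le_rfl⟩)
      aestronglyMeasurable_const hconv
    rw [intervalIntegral.integral_zero] at hmain
    exact hmain.add ((hAcont.tendsto a).mono_left nhdsWithin_le_nhds)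
  -- apply the telescoping estimate on (0, a)
  have hformQ : (Q.filter (fun y => y ∈ Set.Ioo 0 a)) = Q := by
    apply Finset.filter_true_of_mem
    intro y hy
    rcases Finset.mem_union.mp hy with h | h
    · exact u.S_sub y h
    · exact v.S_sub y h
  have hformu : (u.S.filter (fun y => y ∈ Set.Ioo 0 a)) = u.S :=
    Finset.filter_true_of_mem (fun y hy => u.S_sub y hy)
  have hformv : (v.S.filter (fun y => y ∈ Set.Ioo 0 a)) = v.S :=
    Finset.filter_true_of_mem (fun y hy => v.S_sub y hy)
  have hmain := key Q.card 0 a le_rfl ha le_rfl (by rw [hformQ]) (0 + A 0) (0 + A a)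
    hNeu0 hNeua
  rw [hformu, hformv] at hmain
  -- identify A a - A 0 with the energy of u
  have hA0 : A 0 = 0 := intervalIntegral.integral_same
  have hAa : A a = ∫ x in Set.Ioo 0 a, Gu x := by
    have h1 : A a = ∫ x in Set.Ioc 0 a, ρ' x := intervalIntegral.integral_of_le ha.le
    have h2 : (∫ x in Set.Ioc 0 a, ρ' x) = ∫ x in Set.Ioo 0 a, ρ' x := by
      apply setIntegral_congr_set
      exact MeasureTheory.Ioo_ae_eq_Ioc.symm
    have h3 : ρ' =ᵐ[volume.restrict (Set.Ioo 0 a)] Gu := by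
      filter_upwards [ha2, hS_ae u, ae_restrict_mem measurableSet_Ioo] with x hx1 hx2 hx3
      have hmem : (x, u.f x) ∈ U := hmemf u hu hx3 (by simpa using hx2)
      show Ou.piecewise ρ (fun _ => 0) x = Gu x
      rw [Set.piecewise_eq_of_mem _ _ _ (show x ∈ Ou from ⟨hx3, hx2⟩)]
      show Φ x (u.f x) * u.f' x - Φt x (u.f x) = u.f' x ^ 2 + β * (u.f x - g x) ^ 2
      rw [hΦU hmem, hΦtU hmem, hx1.1, hx1.2]
      ring
    rw [h1, h2]
    exact integral_congr_ae h3
  -- decompose the energies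
  have hGuint : (∫ x in Set.Ioo 0 a, Gu x)
      = (∫ x in Set.Ioo 0 a, u.f' x ^ 2) + β * ∫ x in Set.Ioo 0 a, (u.f x - g x) ^ 2 := by
    rw [hGudef, integral_add hint_u1 (hint_u2.const_mul β)]
    congr 1
    exact integral_const_mul β _
  have hGvint : (∫ x in Set.Ioo 0 a, Gv x)
      = (∫ x in Set.Ioo 0 a, v.f' x ^ 2) + β * ∫ x in Set.Ioo 0 a, (v.f x - g x) ^ 2 := by
    rw [hGvdef, integral_add hint_v1 (hint_v2.const_mul β)]
    congr 1
    exact integral_const_mul β _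
  have hMSu : MS a α β g u = (∫ x in Set.Ioo 0 a, Gu x) + α * (u.S.card : ℝ) := by
    rw [hGuint]
    simp only [MS]
    ring
  have hMSv : MS a α β g v = (∫ x in Set.Ioo 0 a, Gv x) + α * (v.S.card : ℝ) := by
    rw [hGvint]
    simp only [MS]
    ring
  rw [hMSu, hMSv]
  rw [hA0, hAa] at hmain
  linarith
end

section
/- Let a>0, let f:(0,a)×ℝ×ℝ→[0,+∞] and ψ:(0,a)×ℝ×ℝ×{−1,+1}→[0,+∞] be Borel functions, and define, for v piecewise C¹ with finite jump set on (0,a), F(v):=∫₀ᵃ f(x,v(x),v'(x))dx + Σ_{x∈S_v} ψ(x,v⁻(x),v⁺(x),ν_v(x)). Let τ₁,τ₂:[0,a]→[−∞,+∞] be continuous with τ₁≤τ₂, U:={(x,t): τ₁(x)<t<τ₂(x)}, and let u be piecewise C¹ with finite jump set with graph Γ_u⊂U. Suppose there is a bounded C¹ vector field φ=(φ^x,φ^t):U→ℝ×ℝ such that: (a1) φ^x(x,t)·w ≤ φ^t(x,t)+f(x,t,w) for a.e. x, all τ₁(x)<t<τ₂(x) and all w∈ℝ; (a2) φ^x(x,u(x))·u'(x)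 = φ^t(x,u(x))+f(x,u(x),u'(x)) for a.e. x; (b1) ν·∫_{t₁}^{t₂}φ^x(x,t)dt ≤ ψ(x,t₁,t₂,ν) for all x, all τ₁(x)<t₁<t₂<τ₂(x) and ν∈{−1,+1}; (b2) ν_u(x)·∫_{u⁻(x)}^{u⁺(x)}φ^x(x,t)dt = ψ(x,u⁻(x),u⁺(x),ν_u(x)) for every x∈S_u; (c1) ∂_xφ^x+∂_tφ^t=0 on U. Then F(u)≤F(v) for every v piecewise C¹ with finite jump set with graph Γ_v⊂U, v(0+)=u(0+) and v(a−)=u(a−). -/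
open MeasureTheory Set Filter

open scoped ENNReal

/-- The general one-dimensional free discontinuity functional
`F(v) = ∫₀ᵃ f(x, v, v') dx + Σ_{x ∈ S_v} ψ(x, v⁻, v⁺, ν_v)`,
with `f, ψ` taking values in `[0, +∞]`. -/
noncomputable def Fgen (a : ℝ) (f : ℝ → ℝ → ℝ → ℝ≥0∞) (ψ : ℝ → ℝ → ℝ → ℝ → ℝ≥0∞)
    (v : PiecewiseC1 a) : ℝ≥0∞ :=
  (∫⁻ x in Set.Ioo 0 a, f x (v.f x) (v.f' x)) + ∑ x ∈ v.S, ψ x (v.lower x) (v.upper x) (v.nu x)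


private lemma calib_sum_split {S : Finset ℝ} {s : ℝ} (hs : s ∈ S) (g : ℝ → ℝ) :
    ∑ x ∈ S, g x
      = ∑ x ∈ S.filter (· < s), g x + g s + ∑ x ∈ S.filter (fun x => s < x), g x := by
  have h1 : ∑ x ∈ S, g x = g s + ∑ x ∈ S.erase s, g x :=
    (Finset.add_sum_erase S g hs).symm
  have h2 : ∑ x ∈ S.erase s, g x
      = ∑ x ∈ (S.erase s).filter (· < s), g x
        + ∑ x ∈ (S.erase s).filter (fun x => ¬ x < s), g x :=
    (Finset.sum_filter_add_sum_filter_not _ _ _).symm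
  have e1 : (S.erase s).filter (· < s) = S.filter (· < s) := by
    ext x
    simp only [Finset.mem_filter, Finset.mem_erase]
    constructor
    · rintro ⟨⟨-, hx⟩, hlt⟩; exact ⟨hx, hlt⟩
    · rintro ⟨hx, hlt⟩; exact ⟨⟨ne_of_lt hlt, hx⟩, hlt⟩
  have e2 : (S.erase s).filter (fun x => ¬ x < s) = S.filter (fun x => s < x) := by
    ext x
    simp only [Finset.mem_filter, Finset.mem_erase]
    constructor
    · rintro ⟨⟨hne, hx⟩, hnlt⟩; exact ⟨hx, lt_of_le_of_ne (not_lt.mp hnlt) (Ne.symm hne)⟩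
    · rintro ⟨hx, hlt⟩; exact ⟨⟨(ne_of_lt hlt).symm, hx⟩, not_lt.mpr hlt.le⟩
  rw [h1, h2, e1, e2]; ring

private lemma calib_ftc_jump (S : Finset ℝ) :
    ∀ (b c : ℝ), b < c → (∀ s ∈ S, s ∈ Set.Ioo b c) →
    ∀ (D D' DL DR : ℝ → ℝ),
    (∀ x ∈ Set.Ioo b c \ (S : Set ℝ), HasDerivAt D (D' x) x) →
    IntervalIntegrable D' volume b c →
    Tendsto D (nhdsWithin b (Set.Ioi b)) (nhds (DR b)) →
    Tendsto D (nhdsWithin c (Set.Iio c)) (nhds (DL c)) →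
    (∀ s ∈ S, Tendsto D (nhdsWithin s (Set.Iio s)) (nhds (DL s)) ∧
              Tendsto D (nhdsWithin s (Set.Ioi s)) (nhds (DR s))) →
    ∫ y in b..c, D' y = (DL c - DR b) - ∑ s ∈ S, (DR s - DL s) := by
  induction S using Finset.strongInduction with
  | _ S IH =>
    intro b c hbc hS D D' DL DR hderiv hint hb hc hjump
    rcases S.eq_empty_or_nonempty with rfl | ⟨s, hs⟩
    · simp only [Finset.sum_empty, sub_zero]
      have := intervalIntegral.integral_eq_sub_of_hasDerivAt_of_tendsto hbc
        (fun x hx => hderiv x ⟨hx, by simp⟩) hint hb hc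
      rw [this]
    · obtain ⟨hbs, hsc⟩ := hS s hs
      set S₁ := S.filter (· < s) with hS₁
      set S₂ := S.filter (fun x => s < x) with hS₂
      have hsub₁ : S₁ ⊂ S := by
        refine Finset.ssubset_iff_of_subset (Finset.filter_subset _ _) |>.mpr ⟨s, hs, ?_⟩
        simp [hS₁]
      have hsub₂ : S₂ ⊂ S := by
        refine Finset.ssubset_iff_of_subset (Finset.filter_subset _ _) |>.mpr ⟨s, hs, ?_⟩
        simp [hS₂]
      have hint₁ : IntervalIntegrable D' volume b s := by
        refine hint.mono_set ?_
        rw [Set.uIcc_of_le hbs.le, Set.uIcc_of_le hbc.le]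
        exact Set.Icc_subset_Icc le_rfl hsc.le
      have hint₂ : IntervalIntegrable D' volume s c := by
        refine hint.mono_set ?_
        rw [Set.uIcc_of_le hsc.le, Set.uIcc_of_le hbc.le]
        exact Set.Icc_subset_Icc hbs.le le_rfl
      have h1 := IH S₁ hsub₁ b s hbs
        (fun t ht => by
          have ht' := Finset.mem_filter.mp ht
          exact ⟨(hS t ht'.1).1, ht'.2⟩)
        D D' DL DR
        (fun x hx => by
          refine hderiv x ⟨⟨hx.1.1, hx.1.2.trans hsc⟩, fun hxS => hx.2 ?_⟩
          exact Finset.mem_coe.mpr (Finset.mem_filter.mpr ⟨Finset.mem_coe.mp hxS, hx.1.2⟩))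
        hint₁ hb (hjump s hs).1
        (fun t ht => hjump t (Finset.mem_filter.mp ht).1)
      have h2 := IH S₂ hsub₂ s c hsc
        (fun t ht => by
          have ht' := Finset.mem_filter.mp ht
          exact ⟨ht'.2, (hS t ht'.1).2⟩)
        D D' DL DR
        (fun x hx => by
          refine hderiv x ⟨⟨hbs.trans hx.1.1, hx.1.2⟩, fun hxS => hx.2 ?_⟩
          exact Finset.mem_coe.mpr (Finset.mem_filter.mpr ⟨Finset.mem_coe.mp hxS, hx.1.1⟩))
        hint₂ (hjump s hs).2 hc
        (fun t ht => hjump t (Finset.mem_filter.mp ht).1)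
      have hadd := intervalIntegral.integral_add_adjacent_intervals hint₁ hint₂
      rw [calib_sum_split hs (fun x => DR x - DL x)]
      rw [← hadd, h1, h2]; ring

private lemma calib_bdd (S : Finset ℝ) :
    ∀ (b c : ℝ), b < c → (∀ s ∈ S, s ∈ Set.Ioo b c) →
    ∀ (h : ℝ → ℝ),
    ContinuousOn h (Set.Ioo b c \ (S : Set ℝ)) →
    (∀ x ∈ Set.Ioc b c, ∃ L, Tendsto h (nhdsWithin x (Set.Iio x)) (nhds L)) →
    (∀ x ∈ Set.Ico b c, ∃ L, Tendsto h (nhdsWithin x (Set.Ioi x)) (nhds L)) →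
    ∃ M, ∀ x ∈ Set.Ioo b c \ (S : Set ℝ), |h x| ≤ M := by
  induction S using Finset.strongInduction with
  | _ S IH =>
    intro b c hbc hS h hcont hL hR
    rcases S.eq_empty_or_nonempty with rfl | ⟨s, hs⟩
    · have hcont' : ContinuousOn h (Set.Ioo b c) := by simpa using hcont
      obtain ⟨lb, hlb⟩ := hR b ⟨le_rfl, hbc⟩
      obtain ⟨lc, hlc⟩ := hL c ⟨hbc, le_rfl⟩
      have hg : ContinuousOn (extendFrom (Set.Ioo b c) h) (Set.Icc b c) :=
        continuousOn_Icc_extendFrom_Ioo hcont' hlb hlc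
      obtain ⟨M, hM⟩ := isCompact_Icc.exists_bound_of_continuousOn hg
      refine ⟨M, fun x hx => ?_⟩
      have hx' : x ∈ Set.Ioo b c := hx.1
      have := hM x (Set.Ioo_subset_Icc_self hx')
      rwa [extendFrom_extends hcont' x hx', Real.norm_eq_abs] at this
    · obtain ⟨hbs, hsc⟩ := hS s hs
      set S₁ := S.filter (· < s) with hS₁
      set S₂ := S.filter (fun x => s < x) with hS₂
      have hsub₁ : S₁ ⊂ S := by
        refine Finset.ssubset_iff_of_subset (Finset.filter_subset _ _) |>.mpr ⟨s, hs, ?_⟩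
        simp [hS₁]
      have hsub₂ : S₂ ⊂ S := by
        refine Finset.ssubset_iff_of_subset (Finset.filter_subset _ _) |>.mpr ⟨s, hs, ?_⟩
        simp [hS₂]
      have hmem : ∀ x ∈ Set.Ioo b s \ (S₁ : Set ℝ), x ∈ Set.Ioo b c \ (S : Set ℝ) := by
        intro x hx
        refine ⟨⟨hx.1.1, hx.1.2.trans hsc⟩, fun hxS => hx.2 ?_⟩
        exact Finset.mem_coe.mpr (Finset.mem_filter.mpr ⟨Finset.mem_coe.mp hxS, hx.1.2⟩)
      have hmem₂ : ∀ x ∈ Set.Ioo s c \ (S₂ : Set ℝ), x ∈ Set.Ioo b c \ (S : Set ℝ) := by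
        intro x hx
        refine ⟨⟨hbs.trans hx.1.1, hx.1.2⟩, fun hxS => hx.2 ?_⟩
        exact Finset.mem_coe.mpr (Finset.mem_filter.mpr ⟨Finset.mem_coe.mp hxS, hx.1.1⟩)
      obtain ⟨M₁, hM₁⟩ := IH S₁ hsub₁ b s hbs
        (fun t ht => by
          have ht' := Finset.mem_filter.mp ht
          exact ⟨(hS t ht'.1).1, ht'.2⟩)
        h (hcont.mono hmem)
        (fun x hx => hL x ⟨hx.1, hx.2.trans hsc.le⟩)
        (fun x hx => hR x ⟨hx.1, hx.2.trans hsc⟩)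
      obtain ⟨M₂, hM₂⟩ := IH S₂ hsub₂ s c hsc
        (fun t ht => by
          have ht' := Finset.mem_filter.mp ht
          exact ⟨ht'.2, (hS t ht'.1).2⟩)
        h (hcont.mono hmem₂)
        (fun x hx => hL x ⟨hbs.trans hx.1, hx.2⟩)
        (fun x hx => hR x ⟨(hbs.trans_le hx.1).le, hx.2⟩)
      refine ⟨max M₁ M₂, fun x hx => ?_⟩
      rcases lt_or_gt_of_ne (show x ≠ s from fun he => hx.2 (he ▸ Finset.mem_coe.mpr hs)) with hlt | hgt
      · exact le_max_of_le_left (hM₁ x ⟨⟨hx.1.1, hlt⟩, fun hxS =>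
          hx.2 (Finset.mem_coe.mpr (Finset.filter_subset _ _ (Finset.mem_coe.mp hxS)))⟩)
      · exact le_max_of_le_right (hM₂ x ⟨⟨hgt, hx.1.2⟩, fun hxS =>
          hx.2 (Finset.mem_coe.mpr (Finset.filter_subset _ _ (Finset.mem_coe.mp hxS)))⟩)


section CalibAux

variable {U : Set (ℝ × ℝ)} {φx : ℝ → ℝ → ℝ}

private lemma calib_seg (hconv : ∀ x t₁ t₂ t, (x,t₁) ∈ U → (x,t₂) ∈ U → t₁ ≤ t → t ≤ t₂ → (x,t) ∈ U)
    {x α β : ℝ} (hα : (x, α) ∈ U) (hβ : (x, β) ∈ U) :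
    ∀ t ∈ Set.uIcc α β, (x, t) ∈ U := by
  intro t ht
  rcases le_total α β with h | h
  · rw [Set.uIcc_of_le h] at ht; exact hconv x α β t hα hβ ht.1 ht.2
  · rw [Set.uIcc_of_ge h] at ht; exact hconv x β α t hβ hα ht.1 ht.2

private lemma calib_intg (hconv : ∀ x t₁ t₂ t, (x,t₁) ∈ U → (x,t₂) ∈ U → t₁ ≤ t → t ≤ t₂ → (x,t) ∈ U)
    (hφc : ContinuousOn (fun p : ℝ × ℝ => φx p.1 p.2) U)
    {x α β : ℝ} (hα : (x, α) ∈ U) (hβ : (x, β) ∈ U) :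
    IntervalIntegrable (φx x) volume α β := by
  apply ContinuousOn.intervalIntegrable
  have : ContinuousOn (fun t : ℝ => ((x, t) : ℝ × ℝ)) (Set.uIcc α β) :=
    (continuous_const.prodMk continuous_id).continuousOn
  exact hφc.comp this (fun t ht => calib_seg hconv hα hβ t ht)

private lemma calib_clamp {lo hi lo' hi' t r : ℝ} (h' : lo' ≤ hi') (hr : 0 ≤ r)
    (hlo : lo' - r ≤ lo) (hhi : hi ≤ hi' + r) (ht : t ∈ Set.Icc lo hi) :
    ∃ t' ∈ Set.Icc lo' hi', |t - t'| ≤ r := by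
  rcases lt_or_ge t lo' with h1 | h1
  · exact ⟨lo', ⟨le_rfl, h'⟩, by rw [abs_sub_comm, abs_of_nonneg (by linarith [ht.1])]; linarith [ht.1]⟩
  rcases le_or_gt t hi' with h2 | h2
  · exact ⟨t, ⟨h1, h2⟩, by simp [hr]⟩
  · exact ⟨hi', ⟨h', le_rfl⟩, by rw [abs_of_nonneg (by linarith)]; linarith [ht.2]⟩

private lemma calib_tendsto_D (hUopen : IsOpen U)
    (hconv : ∀ x t₁ t₂ t, (x,t₁) ∈ U → (x,t₂) ∈ U → t₁ ≤ t → t ≤ t₂ → (x,t) ∈ U)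
    (hφc : ContinuousOn (fun p : ℝ × ℝ => φx p.1 p.2) U)
    {C : ℝ} (hC : ∀ p ∈ U, |φx p.1 p.2| ≤ C)
    {s p₀ q₀ : ℝ} {l : Filter ℝ} {p q : ℝ → ℝ}
    (hl : l ≤ nhds s)
    (hp₀ : (s, p₀) ∈ U) (hq₀ : (s, q₀) ∈ U)
    (hp : Tendsto p l (nhds p₀)) (hq : Tendsto q l (nhds q₀))
    (hpU : ∀ᶠ x in l, (x, p x) ∈ U) (hqU : ∀ᶠ x in l, (x, q x) ∈ U) :
    Tendsto (fun x => ∫ t in p x..q x, φx x t) l (nhds (∫ t in p₀..q₀, φx s t)) := by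
  have hC0 : 0 ≤ C := (abs_nonneg _).trans (hC _ hp₀)
  -- compact segment and thickening
  set seg : Set (ℝ × ℝ) := {s} ×ˢ Set.uIcc p₀ q₀ with hseg_def
  have hsegU : seg ⊆ U := by
    rintro ⟨x, t⟩ ⟨hx, ht⟩
    rcases hx with rfl
    exact calib_seg hconv hp₀ hq₀ t ht
  have hsegc : IsCompact seg := isCompact_singleton.prod isCompact_uIcc
  obtain ⟨δ, hδpos, hδ⟩ := hsegc.exists_cthickening_subset_open hUopen hsegU
  set K := Metric.cthickening δ seg with hK_def
  have hKc : IsCompact K := hsegc.cthickening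
  have hKU : K ⊆ U := hδ
  have hUC : UniformContinuousOn (fun p : ℝ × ℝ => φx p.1 p.2) K :=
    hKc.uniformContinuousOn_of_continuous (hφc.mono hKU)
  rw [Metric.tendsto_nhds]
  intro ε hε
  set B : ℝ := |q₀ - p₀| + 2 with hB_def
  have hBpos : 0 < B := by positivity
  obtain ⟨δ', hδ'pos, hδ'⟩ := (Metric.uniformContinuousOn_iff.mp hUC) (ε / (3 * B))
    (by positivity)
  set r : ℝ := min 1 (min δ (ε / (9 * (C + 1)))) with hr_def
  have hrpos : 0 < r := by
    apply lt_min one_pos; apply lt_min hδpos; positivity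
  have hrδ : r ≤ δ := (min_le_right _ _).trans (min_le_left _ _)
  have hr1 : r ≤ 1 := min_le_left _ _
  have hrε : r ≤ ε / (9 * (C + 1)) := (min_le_right _ _).trans (min_le_right _ _)
  -- eventual facts
  have ev1 : ∀ᶠ x in l, |x - s| < min δ δ' := by
    have : Tendsto (fun x : ℝ => x) l (nhds s) := hl
    have := (Metric.tendsto_nhds.mp this) (min δ δ') (lt_min hδpos hδ'pos)
    simpa [Real.dist_eq] using this
  have ev2 : ∀ᶠ x in l, |p x - p₀| < r := by
    simpa [Real.dist_eq] using (Metric.tendsto_nhds.mp hp) r hrpos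
  have ev3 : ∀ᶠ x in l, |q x - q₀| < r := by
    simpa [Real.dist_eq] using (Metric.tendsto_nhds.mp hq) r hrpos
  have ev4 : ∀ᶠ x in l, (s, p x) ∈ U := by
    have hcont : ContinuousAt (fun y : ℝ => ((s, y) : ℝ × ℝ)) p₀ :=
      (continuous_const.prodMk continuous_id).continuousAt
    have : ∀ᶠ y in nhds p₀, (s, y) ∈ U := hcont (hUopen.mem_nhds hp₀)
    exact hp.eventually this
  have ev5 : ∀ᶠ x in l, (s, q x) ∈ U := by
    have hcont : ContinuousAt (fun y : ℝ => ((s, y) : ℝ × ℝ)) q₀ :=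
      (continuous_const.prodMk continuous_id).continuousAt
    have : ∀ᶠ y in nhds q₀, (s, y) ∈ U := hcont (hUopen.mem_nhds hq₀)
    exact hq.eventually this
  filter_upwards [ev1, ev2, ev3, ev4, ev5, hpU, hqU] with x h1 h2 h3 h4 h5 h6 h7
  -- integrabilities
  have Ia : IntervalIntegrable (φx x) volume (p x) (q x) := calib_intg hconv hφc h6 h7
  have Ib : IntervalIntegrable (φx s) volume (p x) (q x) := calib_intg hconv hφc h4 h5
  have Ic : IntervalIntegrable (φx s) volume (p x) p₀ := calib_intg hconv hφc h4 hp₀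
  have Id : IntervalIntegrable (φx s) volume p₀ q₀ := calib_intg hconv hφc hp₀ hq₀
  have Ie : IntervalIntegrable (φx s) volume q₀ (q x) := calib_intg hconv hφc hq₀ h5
  -- decomposition
  have hdec : (∫ t in p x..q x, φx x t) - ∫ t in p₀..q₀, φx s t
      = (∫ t in p x..q x, (φx x t - φx s t))
        + (∫ t in p x..p₀, φx s t) + (∫ t in q₀..q x, φx s t) := by
    have e1 : ∫ t in p x..q x, (φx x t - φx s t)
        = (∫ t in p x..q x, φx x t) - ∫ t in p x..q x, φx s t :=
      intervalIntegral.integral_sub Ia Ib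
    have e2 : (∫ t in p x..p₀, φx s t) + (∫ t in p₀..q₀, φx s t)
        = ∫ t in p x..q₀, φx s t := intervalIntegral.integral_add_adjacent_intervals Ic Id
    have e3 : (∫ t in p x..q₀, φx s t) + (∫ t in q₀..q x, φx s t)
        = ∫ t in p x..q x, φx s t :=
      intervalIntegral.integral_add_adjacent_intervals (Ic.trans Id) Ie
    rw [e1]; linarith
  -- bound on first term
  have hxs : |x - s| ≤ δ := (h1.trans_le (min_le_left _ _)).le
  have hmemK : ∀ t ∈ Set.uIcc (p x) (q x), ((x, t) : ℝ × ℝ) ∈ K ∧ ((s, t) : ℝ × ℝ) ∈ K := by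
    intro t ht
    have huIcc : Set.uIcc (p x) (q x) = Set.Icc (min (p x) (q x)) (max (p x) (q x)) := rfl
    rw [huIcc] at ht
    have hab2 := abs_lt.mp h2
    have hab3 := abs_lt.mp h3
    have hmin : min p₀ q₀ - r ≤ min (p x) (q x) := by
      have h1' := min_le_left p₀ q₀; have h2' := min_le_right p₀ q₀
      exact le_min (by linarith) (by linarith)
    have hmax : max (p x) (q x) ≤ max p₀ q₀ + r := by
      have h1' := le_max_left p₀ q₀; have h2' := le_max_right p₀ q₀
      exact max_le (by linarith) (by linarith)
    obtain ⟨t', ht', htt'⟩ := calib_clamp (min_le_max (a := p₀) (b := q₀)) hrpos.le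
      hmin hmax ht
    have hseg' : ((s, t') : ℝ × ℝ) ∈ seg :=
      ⟨rfl, by rw [show Set.uIcc p₀ q₀ = Set.Icc (min p₀ q₀) (max p₀ q₀) from rfl]; exact ht'⟩
    constructor
    · apply Metric.mem_cthickening_of_dist_le _ _ _ _ hseg'
      rw [Prod.dist_eq, Real.dist_eq, Real.dist_eq]
      exact max_le hxs (htt'.trans hrδ)
    · apply Metric.mem_cthickening_of_dist_le _ _ _ _ hseg'
      rw [Prod.dist_eq, Real.dist_eq, Real.dist_eq]
      simp only [sub_self, abs_zero]
      exact max_le hδpos.le (htt'.trans hrδ)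
  have hbound1 : ∀ t ∈ Set.uIoc (p x) (q x), ‖φx x t - φx s t‖ ≤ ε / (3 * B) := by
    intro t ht
    have ht' := Set.uIoc_subset_uIcc ht
    obtain ⟨hxtK, hstK⟩ := hmemK t ht'
    have hdist : dist ((x, t) : ℝ × ℝ) ((s, t) : ℝ × ℝ) < δ' := by
      rw [Prod.dist_eq, Real.dist_eq, Real.dist_eq]
      simp only [sub_self, abs_zero]
      exact max_lt (h1.trans_le (min_le_right _ _)) hδ'pos
    have := hδ' _ hxtK _ hstK hdist
    rw [Real.dist_eq] at this
    exact this.le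
  have hT1 : ‖∫ t in p x..q x, (φx x t - φx s t)‖ ≤ (ε / (3 * B)) * |q x - p x| :=
    intervalIntegral.norm_integral_le_of_norm_le_const hbound1
  have hqp : |q x - p x| ≤ B := by
    have := abs_lt.mp h2; have := abs_lt.mp h3
    rw [hB_def]
    rcases abs_cases (q x - p x) with ⟨he, _⟩ | ⟨he, _⟩ <;>
      rcases abs_cases (q₀ - p₀) with ⟨he', _⟩ | ⟨he', _⟩ <;> linarith
  -- bounds on tail terms
  have hbound2 : ∀ t ∈ Set.uIoc (p x) p₀, ‖φx s t‖ ≤ C := by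
    intro t ht
    exact hC (s, t) (calib_seg hconv h4 hp₀ t (Set.uIoc_subset_uIcc ht))
  have hT2 : ‖∫ t in p x..p₀, φx s t‖ ≤ C * |p₀ - p x| :=
    intervalIntegral.norm_integral_le_of_norm_le_const hbound2
  have hbound3 : ∀ t ∈ Set.uIoc q₀ (q x), ‖φx s t‖ ≤ C := by
    intro t ht
    exact hC (s, t) (calib_seg hconv hq₀ h5 t (Set.uIoc_subset_uIcc ht))
  have hT3 : ‖∫ t in q₀..q x, φx s t‖ ≤ C * |q x - q₀| :=
    intervalIntegral.norm_integral_le_of_norm_le_const hbound3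
  -- conclude
  rw [Real.dist_eq]
  have habs : |p₀ - p x| = |p x - p₀| := abs_sub_comm _ _
  calc |(∫ t in p x..q x, φx x t) - ∫ t in p₀..q₀, φx s t|
      = |(∫ t in p x..q x, (φx x t - φx s t))
          + (∫ t in p x..p₀, φx s t) + (∫ t in q₀..q x, φx s t)| := by rw [hdec]
    _ ≤ |(∫ t in p x..q x, (φx x t - φx s t))| + |(∫ t in p x..p₀, φx s t)|
          + |(∫ t in q₀..q x, φx s t)| := by
        exact (abs_add_le _ _).trans (by gcongr; exact abs_add_le _ _)
    _ < ε := by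
        have b1 : |(∫ t in p x..q x, (φx x t - φx s t))| ≤ (ε / (3 * B)) * B := by
          refine hT1.trans ?_
          gcongr
        have b2 : |(∫ t in p x..p₀, φx s t)| ≤ C * r := by
          refine hT2.trans ?_
          rw [habs]
          exact mul_le_mul_of_nonneg_left (abs_lt.mp h2 |> fun h => by
            rw [abs_le]; constructor <;> linarith [h.1, h.2]) hC0
        have b3 : |(∫ t in q₀..q x, φx s t)| ≤ C * r := by
          refine hT3.trans ?_
          exact mul_le_mul_of_nonneg_left (abs_lt.mp h3 |> fun h => by
            rw [abs_le]; constructor <;> linarith [h.1, h.2]) hC0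
        have e1 : (ε / (3 * B)) * B = ε / 3 := by field_simp
        have e2 : C * r ≤ ε / 9 := by
          have hc1 : (0:ℝ) < C + 1 := by linarith
          have step1 : C * r ≤ C * (ε / (9 * (C + 1))) :=
            mul_le_mul_of_nonneg_left hrε hC0
          refine step1.trans ?_
          calc C * (ε / (9 * (C + 1))) = (C * ε) / (9 * (C + 1)) := by ring
            _ ≤ ((C + 1) * ε) / (9 * (C + 1)) := by gcongr; linarith
            _ = ε / 9 := by field_simp
        linarith


section CalibDeriv

variable {U : Set (ℝ × ℝ)} {φx φt : ℝ → ℝ → ℝ}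

private lemma calib_seg' (hconv : ∀ x t₁ t₂ t, (x,t₁) ∈ U → (x,t₂) ∈ U → t₁ ≤ t → t ≤ t₂ → (x,t) ∈ U)
    {x α β : ℝ} (hα : (x, α) ∈ U) (hβ : (x, β) ∈ U) :
    ∀ t ∈ Set.uIcc α β, (x, t) ∈ U := by
  intro t ht
  rcases le_total α β with h | h
  · rw [Set.uIcc_of_le h] at ht; exact hconv x α β t hα hβ ht.1 ht.2
  · rw [Set.uIcc_of_ge h] at ht; exact hconv x β α t hβ hα ht.1 ht.2

private lemma calib_intg' (hconv : ∀ x t₁ t₂ t, (x,t₁) ∈ U → (x,t₂) ∈ U → t₁ ≤ t → t ≤ t₂ → (x,t) ∈ U)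
    (hφc : ContinuousOn (fun p : ℝ × ℝ => φx p.1 p.2) U)
    {x α β : ℝ} (hα : (x, α) ∈ U) (hβ : (x, β) ∈ U) :
    IntervalIntegrable (φx x) volume α β := by
  apply ContinuousOn.intervalIntegrable
  have hc : ContinuousOn (fun t : ℝ => ((x, t) : ℝ × ℝ)) (Set.uIcc α β) :=
    (continuous_const.prodMk continuous_id).continuousOn
  exact hφc.comp hc (fun t ht => calib_seg' hconv hα hβ t ht)

/-- partial derivative in `x` of `φx`, via the `fderiv` of the pair map. -/
private noncomputable def calibDx (φx φt : ℝ → ℝ → ℝ) (p : ℝ × ℝ) : ℝ :=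
  (fderiv ℝ (fun p : ℝ × ℝ => (φx p.1 p.2, φt p.1 p.2)) p (1, 0)).1

/-- partial derivative in `t` of `φt`, via the `fderiv` of the pair map. -/
private noncomputable def calibDt (φx φt : ℝ → ℝ → ℝ) (p : ℝ × ℝ) : ℝ :=
  (fderiv ℝ (fun p : ℝ × ℝ => (φx p.1 p.2, φt p.1 p.2)) p (0, 1)).2

private lemma calib_hasDerivAt_x (hUopen : IsOpen U)
    (hpair : ContDiffOn ℝ 1 (fun p : ℝ × ℝ => (φx p.1 p.2, φt p.1 p.2)) U)
    {x t : ℝ} (h : (x, t) ∈ U) :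
    HasDerivAt (fun y => φx y t) (calibDx φx φt (x, t)) x := by
  have hdiff : DifferentiableAt ℝ (fun p : ℝ × ℝ => (φx p.1 p.2, φt p.1 p.2)) (x, t) :=
    (hpair.differentiableOn one_ne_zero).differentiableAt (hUopen.mem_nhds h)
  have hF := hdiff.hasFDerivAt
  have hg : HasDerivAt (fun y : ℝ => ((y, t) : ℝ × ℝ)) ((1 : ℝ), (0 : ℝ)) x :=
    (hasDerivAt_id x).prodMk (hasDerivAt_const x t)
  have hcomp := hF.comp_hasDerivAt x hg
  have := (ContinuousLinearMap.fst ℝ ℝ ℝ).hasFDerivAt.comp_hasDerivAt x hcomp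
  exact this

private lemma calib_hasDerivAt_t (hUopen : IsOpen U)
    (hpair : ContDiffOn ℝ 1 (fun p : ℝ × ℝ => (φx p.1 p.2, φt p.1 p.2)) U)
    {x t : ℝ} (h : (x, t) ∈ U) :
    HasDerivAt (fun s => φt x s) (calibDt φx φt (x, t)) t := by
  have hdiff : DifferentiableAt ℝ (fun p : ℝ × ℝ => (φx p.1 p.2, φt p.1 p.2)) (x, t) :=
    (hpair.differentiableOn one_ne_zero).differentiableAt (hUopen.mem_nhds h)
  have hF := hdiff.hasFDerivAt
  have hg : HasDerivAt (fun s : ℝ => ((x, s) : ℝ × ℝ)) ((0 : ℝ), (1 : ℝ)) t :=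
    (hasDerivAt_const t x).prodMk (hasDerivAt_id t)
  have hcomp := hF.comp_hasDerivAt t hg
  have := (ContinuousLinearMap.snd ℝ ℝ ℝ).hasFDerivAt.comp_hasDerivAt t hcomp
  exact this

private lemma calib_Dx_cont (hUopen : IsOpen U)
    (hpair : ContDiffOn ℝ 1 (fun p : ℝ × ℝ => (φx p.1 p.2, φt p.1 p.2)) U) :
    ContinuousOn (calibDx φx φt) U := by
  have h := hpair.continuousOn_fderiv_of_isOpen hUopen le_rfl
  exact continuous_fst.comp_continuousOn (h.clm_apply continuousOn_const)

private lemma calib_Dt_cont (hUopen : IsOpen U)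
    (hpair : ContDiffOn ℝ 1 (fun p : ℝ × ℝ => (φx p.1 p.2, φt p.1 p.2)) U) :
    ContinuousOn (calibDt φx φt) U := by
  have h := hpair.continuousOn_fderiv_of_isOpen hUopen le_rfl
  exact continuous_snd.comp_continuousOn (h.clm_apply continuousOn_const)

private lemma calib_Dx_eq_neg_Dt (hUopen : IsOpen U)
    (hpair : ContDiffOn ℝ 1 (fun p : ℝ × ℝ => (φx p.1 p.2, φt p.1 p.2)) U)
    (hc1 : ∀ p ∈ U, deriv (fun y : ℝ => φx y p.2) p.1 + deriv (fun s : ℝ => φt p.1 s) p.2 = 0)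
    {p : ℝ × ℝ} (hp : p ∈ U) : calibDx φx φt p = - calibDt φx φt p := by
  have hp' : (p.1, p.2) ∈ U := by simpa using hp
  have h1 : deriv (fun y : ℝ => φx y p.2) p.1 = calibDx φx φt (p.1, p.2) :=
    (calib_hasDerivAt_x hUopen hpair hp').deriv
  have h2 : deriv (fun s : ℝ => φt p.1 s) p.2 = calibDt φx φt (p.1, p.2) :=
    (calib_hasDerivAt_t hUopen hpair hp').deriv
  have := hc1 p hp
  rw [h1, h2] at this
  simp only [Prod.mk.eta] at this ⊢
  linarith

private lemma calib_hasDerivAt_M (hUopen : IsOpen U)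
    (hconv : ∀ x t₁ t₂ t, (x,t₁) ∈ U → (x,t₂) ∈ U → t₁ ≤ t → t ≤ t₂ → (x,t) ∈ U)
    (hpair : ContDiffOn ℝ 1 (fun p : ℝ × ℝ => (φx p.1 p.2, φt p.1 p.2)) U)
    {x₀ p₀ q₀ : ℝ} (hp₀ : (x₀, p₀) ∈ U) (hq₀ : (x₀, q₀) ∈ U) :
    HasDerivAt (fun x => ∫ t in p₀..q₀, φx x t) (∫ t in p₀..q₀, calibDx φx φt (x₀, t)) x₀ := by
  have hφc : ContinuousOn (fun p : ℝ × ℝ => φx p.1 p.2) U :=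
    continuous_fst.comp_continuousOn hpair.continuousOn
  set seg : Set (ℝ × ℝ) := {x₀} ×ˢ Set.uIcc p₀ q₀ with hseg_def
  have hsegU : seg ⊆ U := by
    rintro ⟨x, t⟩ ⟨hx, ht⟩
    rcases hx with rfl
    exact calib_seg' hconv hp₀ hq₀ t ht
  have hsegc : IsCompact seg := isCompact_singleton.prod isCompact_uIcc
  obtain ⟨δ, hδpos, hδ⟩ := hsegc.exists_cthickening_subset_open hUopen hsegU
  set K : Set (ℝ × ℝ) := Metric.closedBall x₀ δ ×ˢ Set.uIcc p₀ q₀ with hK_def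
  have hKU : K ⊆ U := by
    rintro ⟨x, t⟩ ⟨hx, ht⟩
    apply hδ
    apply Metric.mem_cthickening_of_dist_le (x, t) (x₀, t) δ seg ⟨rfl, ht⟩
    rw [Prod.dist_eq, Real.dist_eq]
    simp only [sub_self, abs_zero, dist_self]
    exact max_le (by simpa [Real.dist_eq] using Metric.mem_closedBall.mp hx) hδpos.le
  have hKc : IsCompact K := (isCompact_closedBall _ _).prod isCompact_uIcc
  obtain ⟨M, hM⟩ := hKc.exists_bound_of_continuousOn ((calib_Dx_cont hUopen hpair).mono hKU)
  refine (intervalIntegral.hasDerivAt_integral_of_dominated_loc_of_deriv_le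
    (F := fun x t => φx x t) (F' := fun x t => calibDx φx φt (x, t)) (bound := fun _ => M) (s := Metric.ball x₀ δ)
    (Metric.ball_mem_nhds x₀ hδpos) ?_ (calib_intg' hconv hφc hp₀ hq₀) ?_ ?_ intervalIntegrable_const ?_).2
  · filter_upwards [Metric.closedBall_mem_nhds x₀ hδpos] with x hx
    have hc : ContinuousOn (φx x) (Set.uIoc p₀ q₀) := by
      have hmk : ContinuousOn (fun t : ℝ => ((x, t) : ℝ × ℝ)) (Set.uIoc p₀ q₀) :=
        (continuous_const.prodMk continuous_id).continuousOn
      exact hφc.comp hmk (fun t ht => hKU ⟨hx, Set.uIoc_subset_uIcc ht⟩)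
    exact hc.aestronglyMeasurable measurableSet_uIoc
  · have hc : ContinuousOn (fun t => calibDx φx φt (x₀, t)) (Set.uIoc p₀ q₀) := by
      have hmk : ContinuousOn (fun t : ℝ => ((x₀, t) : ℝ × ℝ)) (Set.uIoc p₀ q₀) :=
        (continuous_const.prodMk continuous_id).continuousOn
      exact (calib_Dx_cont hUopen hpair).comp hmk
        (fun t ht => hKU ⟨Metric.mem_closedBall_self hδpos.le, Set.uIoc_subset_uIcc ht⟩)
    exact hc.aestronglyMeasurable measurableSet_uIoc
  · refine ae_of_all _ (fun t ht x hx => ?_)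
    exact hM (x, t) ⟨Metric.ball_subset_closedBall hx, Set.uIoc_subset_uIcc ht⟩
  · refine ae_of_all _ (fun t ht x hx => ?_)
    exact calib_hasDerivAt_x hUopen hpair
      (hKU ⟨Metric.ball_subset_closedBall hx, Set.uIoc_subset_uIcc ht⟩)

private lemma calib_int_Dx (hUopen : IsOpen U)
    (hconv : ∀ x t₁ t₂ t, (x,t₁) ∈ U → (x,t₂) ∈ U → t₁ ≤ t → t ≤ t₂ → (x,t) ∈ U)
    (hpair : ContDiffOn ℝ 1 (fun p : ℝ × ℝ => (φx p.1 p.2, φt p.1 p.2)) U)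
    (hc1 : ∀ p ∈ U, deriv (fun y : ℝ => φx y p.2) p.1 + deriv (fun s : ℝ => φt p.1 s) p.2 = 0)
    {x₀ p₀ q₀ : ℝ} (hp₀ : (x₀, p₀) ∈ U) (hq₀ : (x₀, q₀) ∈ U) :
    ∫ t in p₀..q₀, calibDx φx φt (x₀, t) = -(φt x₀ q₀ - φt x₀ p₀) := by
  have hmem : ∀ t ∈ Set.uIcc p₀ q₀, ((x₀, t) : ℝ × ℝ) ∈ U :=
    fun t ht => calib_seg' hconv hp₀ hq₀ t ht
  have hintDt : IntervalIntegrable (fun t => calibDt φx φt (x₀, t)) volume p₀ q₀ := by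
    apply ContinuousOn.intervalIntegrable
    have hmk : ContinuousOn (fun t : ℝ => ((x₀, t) : ℝ × ℝ)) (Set.uIcc p₀ q₀) :=
      (continuous_const.prodMk continuous_id).continuousOn
    exact (calib_Dt_cont hUopen hpair).comp hmk hmem
  have hftc : ∫ t in p₀..q₀, calibDt φx φt (x₀, t) = φt x₀ q₀ - φt x₀ p₀ :=
    intervalIntegral.integral_eq_sub_of_hasDerivAt
      (fun t ht => calib_hasDerivAt_t hUopen hpair (hmem t ht)) hintDt
  have hcongr : ∫ t in p₀..q₀, calibDx φx φt (x₀, t)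
      = ∫ t in p₀..q₀, -calibDt φx φt (x₀, t) := by
    apply intervalIntegral.integral_congr
    intro t ht
    exact calib_Dx_eq_neg_Dt hUopen hpair hc1 (hmem t ht)
  rw [hcongr, intervalIntegral.integral_neg, hftc]

private lemma calib_hasDerivAt_T (hUopen : IsOpen U)
    (hconv : ∀ x t₁ t₂ t, (x,t₁) ∈ U → (x,t₂) ∈ U → t₁ ≤ t → t ≤ t₂ → (x,t) ∈ U)
    (hpair : ContDiffOn ℝ 1 (fun p : ℝ × ℝ => (φx p.1 p.2, φt p.1 p.2)) U)
    {x₀ q₀ w' : ℝ} {w : ℝ → ℝ}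
    (hq₀ : (x₀, q₀) ∈ U) (hw : HasDerivAt w w' x₀) (hwx₀ : w x₀ = q₀)
    (hwU : ∀ᶠ x in nhds x₀, (x, w x) ∈ U) :
    HasDerivAt (fun x => ∫ t in q₀..w x, φx x t) (φx x₀ q₀ * w') x₀ := by
  have hφc : ContinuousOn (fun p : ℝ × ℝ => φx p.1 p.2) U :=
    continuous_fst.comp_continuousOn hpair.continuousOn
  -- the vertical slice at x₀
  set Vq : Set ℝ := {t | (x₀, t) ∈ U} with hVq_def
  have hVq_open : IsOpen Vq := hUopen.preimage (continuous_const.prodMk continuous_id)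
  have hq₀Vq : q₀ ∈ Vq := hq₀
  have hcontVq : ContinuousOn (φx x₀) Vq := by
    have hmk : ContinuousOn (fun t : ℝ => ((x₀, t) : ℝ × ℝ)) Vq :=
      (continuous_const.prodMk continuous_id).continuousOn
    exact hφc.comp hmk (fun t ht => ht)
  -- FTC part
  have hA : HasDerivAt (fun y => ∫ t in q₀..y, φx x₀ t) (φx x₀ q₀) q₀ := by
    refine intervalIntegral.integral_hasDerivAt_right
      (by simp) ⟨Vq, hVq_open.mem_nhds hq₀Vq, ?_⟩ ?_
    · exact hcontVq.aestronglyMeasurable hVq_open.measurableSet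
    · exact hcontVq.continuousAt (hVq_open.mem_nhds hq₀Vq)
  have hAw : HasDerivAt (fun x => ∫ t in q₀..w x, φx x₀ t) (φx x₀ q₀ * w') x₀ := by
    have hA' : HasDerivAt (fun y => ∫ t in q₀..y, φx x₀ t) (φx x₀ q₀) (w x₀) := by
      rwa [hwx₀]
    exact hA'.comp x₀ hw
  -- Lipschitz control for the remainder
  have hCD : ContDiffAt ℝ 1 (fun p : ℝ × ℝ => (φx p.1 p.2, φt p.1 p.2)) (x₀, q₀) :=
    hpair.contDiffAt (hUopen.mem_nhds hq₀)
  obtain ⟨L, tset, htmem, hlip⟩ := hCD.exists_lipschitzOnWith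
  obtain ⟨ε, hεpos, hεsub⟩ := Metric.nhds_basis_closedBall.mem_iff.mp htmem
  set R : ℝ → ℝ := fun x => ∫ t in q₀..w x, (φx x t - φx x₀ t) with hR_def
  have hwcont : Tendsto w (nhds x₀) (nhds q₀) := by
    have := hw.continuousAt.tendsto
    rwa [hwx₀] at this
  have hR : HasDerivAt R 0 x₀ := by
    rw [hasDerivAt_iff_isLittleO]
    have hRx₀ : R x₀ = 0 := by simp [hR_def, hwx₀]
    simp only [hRx₀, smul_zero, sub_zero]
    rw [Asymptotics.isLittleO_iff]
    intro c hc
    have ev1 : ∀ᶠ x in nhds x₀, |x - x₀| ≤ ε := by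
      have := Metric.closedBall_mem_nhds x₀ hεpos
      filter_upwards [this] with x hx
      simpa [Real.dist_eq] using Metric.mem_closedBall.mp hx
    have ev2 : ∀ᶠ x in nhds x₀, |w x - q₀| ≤ min ε (c / (L + 1)) := by
      have hpos : (0:ℝ) < min ε (c / (L + 1)) := by
        apply lt_min hεpos
        positivity
      filter_upwards [hwcont (Metric.closedBall_mem_nhds q₀ hpos)] with x hx
      simpa [Real.dist_eq] using hx
    filter_upwards [ev1, ev2] with x h1 h2
    have hkey : ∀ t ∈ Set.uIoc q₀ (w x), ‖φx x t - φx x₀ t‖ ≤ L * |x - x₀| := by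
      intro t ht
      have ht' := Set.uIoc_subset_uIcc ht
      have htq : |t - q₀| ≤ |w x - q₀| := by
        rcases le_total q₀ (w x) with h | h
        · rw [Set.uIcc_of_le h] at ht'
          rw [abs_of_nonneg (by linarith [ht'.1]), abs_of_nonneg (by linarith)]
          linarith [ht'.2]
        · rw [Set.uIcc_of_ge h] at ht'
          rw [abs_of_nonpos (by linarith [ht'.2]), abs_of_nonpos (by linarith)]
          linarith [ht'.1]
      have hmem1 : ((x, t) : ℝ × ℝ) ∈ tset := by
        apply hεsub
        rw [Metric.mem_closedBall, Prod.dist_eq, Real.dist_eq, Real.dist_eq]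
        exact max_le h1 (htq.trans (h2.trans (min_le_left _ _)))
      have hmem2 : ((x₀, t) : ℝ × ℝ) ∈ tset := by
        apply hεsub
        rw [Metric.mem_closedBall, Prod.dist_eq, Real.dist_eq, Real.dist_eq]
        simp only [sub_self, abs_zero]
        exact max_le hεpos.le (htq.trans (h2.trans (min_le_left _ _)))
      have hd := hlip.dist_le_mul _ hmem1 _ hmem2
      rw [Prod.dist_eq, Real.dist_eq, Real.dist_eq] at hd
      simp only [sub_self, abs_zero, max_comm] at hd
      have hcomp : dist (φx x t) (φx x₀ t)
          ≤ dist ((φx x t, φt x t) : ℝ × ℝ) ((φx x₀ t, φt x₀ t) : ℝ × ℝ) := by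
        rw [Prod.dist_eq]; exact le_max_left _ _
      have hxx : (max |x - x₀| 0 : ℝ) = |x - x₀| := max_eq_left (abs_nonneg _)
      rw [Real.norm_eq_abs, ← Real.dist_eq]
      calc dist (φx x t) (φx x₀ t) ≤ _ := hcomp
        _ ≤ L * dist ((x,t) : ℝ × ℝ) ((x₀,t) : ℝ × ℝ) := hlip.dist_le_mul _ hmem1 _ hmem2
        _ = L * |x - x₀| := by
            rw [Prod.dist_eq, Real.dist_eq, Real.dist_eq]
            simp only [sub_self, abs_zero]
            rw [hxx]
    have hb := intervalIntegral.norm_integral_le_of_norm_le_const hkey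
    rw [Real.norm_eq_abs (x - x₀)]
    refine hb.trans ?_
    have h2' : |w x - q₀| ≤ c / (L + 1) := h2.trans (min_le_right _ _)
    have hL0 : (0:ℝ) ≤ L := L.coe_nonneg
    have habs : (0:ℝ) ≤ |x - x₀| := abs_nonneg _
    have hwq : (0:ℝ) ≤ |w x - q₀| := abs_nonneg _
    have hL1 : (0:ℝ) < (L:ℝ) + 1 := by positivity
    have key : (L:ℝ) * (c / ((L:ℝ) + 1)) ≤ c := by
      rw [mul_div_assoc']
      rw [div_le_iff₀ hL1]
      nlinarith
    calc (L : ℝ) * |x - x₀| * |w x - q₀| ≤ (L:ℝ) * |x - x₀| * (c / ((L:ℝ) + 1)) := by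
          apply mul_le_mul_of_nonneg_left h2' (by positivity)
      _ = ((L:ℝ) * (c / ((L:ℝ) + 1))) * |x - x₀| := by ring
      _ ≤ c * |x - x₀| := mul_le_mul_of_nonneg_right key habs
  -- eventual equality
  have hq₀ev : ∀ᶠ x in nhds x₀, ((x, q₀) : ℝ × ℝ) ∈ U := by
    have : ContinuousAt (fun x : ℝ => ((x, q₀) : ℝ × ℝ)) x₀ :=
      (continuous_id.prodMk continuous_const).continuousAt
    exact this (hUopen.mem_nhds hq₀)
  have hwVq : ∀ᶠ x in nhds x₀, w x ∈ Vq := hwcont (hVq_open.mem_nhds hq₀Vq)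
  have hevEq : (fun x => ∫ t in q₀..w x, φx x t)
      =ᶠ[nhds x₀] (fun x => (∫ t in q₀..w x, φx x₀ t) + R x) := by
    filter_upwards [hq₀ev, hwU, hwVq] with x hxq hxw hxv
    have I1 : IntervalIntegrable (φx x) volume q₀ (w x) := calib_intg' hconv hφc hxq hxw
    have I2 : IntervalIntegrable (φx x₀) volume q₀ (w x) := calib_intg' hconv hφc hq₀ hxv
    have := intervalIntegral.integral_sub I1 I2
    simp only [hR_def]
    linarith [this]
  have hfinal := (hAw.add hR).congr_of_eventuallyEq hevEq
  simpa using hfinal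

private lemma calib_hasDerivAt_D (hUopen : IsOpen U)
    (hconv : ∀ x t₁ t₂ t, (x,t₁) ∈ U → (x,t₂) ∈ U → t₁ ≤ t → t ≤ t₂ → (x,t) ∈ U)
    (hpair : ContDiffOn ℝ 1 (fun p : ℝ × ℝ => (φx p.1 p.2, φt p.1 p.2)) U)
    (hc1 : ∀ p ∈ U, deriv (fun y : ℝ => φx y p.2) p.1 + deriv (fun s : ℝ => φt p.1 s) p.2 = 0)
    {x₀ p₀ q₀ u' v' : ℝ} {uf vf : ℝ → ℝ}
    (hp₀U : (x₀, p₀) ∈ U) (hq₀U : (x₀, q₀) ∈ U)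
    (hu : HasDerivAt uf u' x₀) (hux₀ : uf x₀ = p₀)
    (hv : HasDerivAt vf v' x₀) (hvx₀ : vf x₀ = q₀)
    (huU : ∀ᶠ x in nhds x₀, (x, uf x) ∈ U) (hvU : ∀ᶠ x in nhds x₀, (x, vf x) ∈ U) :
    HasDerivAt (fun x => ∫ t in uf x..vf x, φx x t)
      ((φx x₀ q₀ * v' - φt x₀ q₀) - (φx x₀ p₀ * u' - φt x₀ p₀)) x₀ := by
  have hφc : ContinuousOn (fun p : ℝ × ℝ => φx p.1 p.2) U :=
    continuous_fst.comp_continuousOn hpair.continuousOn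
  have hT1 : HasDerivAt (fun x => ∫ t in p₀..uf x, φx x t) (φx x₀ p₀ * u') x₀ :=
    calib_hasDerivAt_T hUopen hconv hpair hp₀U hu hux₀ huU
  have hT3 : HasDerivAt (fun x => ∫ t in q₀..vf x, φx x t) (φx x₀ q₀ * v') x₀ :=
    calib_hasDerivAt_T hUopen hconv hpair hq₀U hv hvx₀ hvU
  have hM : HasDerivAt (fun x => ∫ t in p₀..q₀, φx x t)
      (∫ t in p₀..q₀, calibDx φx φt (x₀, t)) x₀ :=
    calib_hasDerivAt_M hUopen hconv hpair hp₀U hq₀U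
  have hMval : ∫ t in p₀..q₀, calibDx φx φt (x₀, t) = -(φt x₀ q₀ - φt x₀ p₀) :=
    calib_int_Dx hUopen hconv hpair hc1 hp₀U hq₀U
  rw [hMval] at hM
  -- eventual equality
  have hp₀ev : ∀ᶠ x in nhds x₀, ((x, p₀) : ℝ × ℝ) ∈ U :=
    ((continuous_id.prodMk continuous_const).continuousAt) (hUopen.mem_nhds hp₀U)
  have hq₀ev : ∀ᶠ x in nhds x₀, ((x, q₀) : ℝ × ℝ) ∈ U :=
    ((continuous_id.prodMk continuous_const).continuousAt) (hUopen.mem_nhds hq₀U)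
  have hevEq : (fun x => ∫ t in uf x..vf x, φx x t)
      =ᶠ[nhds x₀] (fun x => ((∫ t in p₀..q₀, φx x t) + (∫ t in q₀..vf x, φx x t))
          - (∫ t in p₀..uf x, φx x t)) := by
    filter_upwards [hp₀ev, hq₀ev, huU, hvU] with x hxp hxq hxu hxv
    have I1 : IntervalIntegrable (φx x) volume (uf x) p₀ := calib_intg' hconv hφc hxu hxp
    have I2 : IntervalIntegrable (φx x) volume p₀ q₀ := calib_intg' hconv hφc hxp hxq
    have I3 : IntervalIntegrable (φx x) volume q₀ (vf x) := calib_intg' hconv hφc hxq hxv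
    have e1 := intervalIntegral.integral_add_adjacent_intervals I1 I2
    have e2 := intervalIntegral.integral_add_adjacent_intervals (I1.trans I2) I3
    have e3 : ∫ t in uf x..p₀, φx x t = - ∫ t in p₀..uf x, φx x t :=
      intervalIntegral.integral_symm _ _
    show _ = ((∫ t in p₀..q₀, φx x t) + (∫ t in q₀..vf x, φx x t)) - (∫ t in p₀..uf x, φx x t)
    linarith
  have hfinal := ((hM.add hT3).sub hT1).congr_of_eventuallyEq hevEq
  have e : (φx x₀ q₀ * v' - φt x₀ q₀) - (φx x₀ p₀ * u' - φt x₀ p₀)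
      = -(φt x₀ q₀ - φt x₀ p₀) + φx x₀ q₀ * v' - φx x₀ p₀ * u' := by ring
  rw [e]
  exact hfinal

end CalibDeriv


section CalibStage4

private lemma calib_lim_eq {a : ℝ} (v : PiecewiseC1 a) {x : ℝ}
    (hx : x ∈ Set.Ioo 0 a \ (v.S : Set ℝ)) : v.limL x = v.f x ∧ v.limR x = v.f x := by
  have hca : ContinuousAt v.f x := (v.hasDeriv x hx).continuousAt
  constructor
  · exact tendsto_nhds_unique (v.tendsto_limL x ⟨hx.1.1, hx.1.2.le⟩)
      (hca.tendsto.mono_left nhdsWithin_le_nhds)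
  · exact tendsto_nhds_unique (v.tendsto_limR x ⟨hx.1.1.le, hx.1.2⟩)
      (hca.tendsto.mono_left nhdsWithin_le_nhds)

private lemma calib_avoid (S : Finset ℝ) {s : ℝ} {l : Filter ℝ} (hl : l ≤ nhds s)
    (hne : ∀ᶠ x in l, x ≠ s) : ∀ᶠ x in l, x ∉ (S : Set ℝ) := by
  have hcl : IsClosed ((S : Set ℝ) \ {s}) :=
    (S.finite_toSet.subset Set.diff_subset).isClosed
  have hsmem : s ∈ ((S : Set ℝ) \ {s})ᶜ := by simp
  have hev : ∀ᶠ x in nhds s, x ∈ ((S : Set ℝ) \ {s})ᶜ :=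
    hcl.isOpen_compl.eventually_mem hsmem
  filter_upwards [hl hev, hne] with x hx hxne hmem
  exact hx ⟨hmem, hxne⟩

private lemma calib_mem_f {a : ℝ} {U : Set (ℝ × ℝ)} (v : PiecewiseC1 a) (hv : v.GraphIn U)
    {x : ℝ} (hx : x ∈ Set.Ioo 0 a \ (v.S : Set ℝ)) : (x, v.f x) ∈ U := by
  have hxS : x ∉ v.S := fun h => hx.2 (Finset.mem_coe.mpr h)
  have h1 : v.lower x = v.f x := by rw [PiecewiseC1.lower, if_neg hxS]
  have h2 : v.upper x = v.f x := by rw [PiecewiseC1.upper, if_neg hxS]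
  exact hv x hx.1 (v.f x) (le_of_eq h1) (ge_of_eq h2)

private lemma calib_mem_lim {a : ℝ} {U : Set (ℝ × ℝ)} (v : PiecewiseC1 a) (hv : v.GraphIn U)
    {x : ℝ} (hx : x ∈ Set.Ioo 0 a) : (x, v.limL x) ∈ U ∧ (x, v.limR x) ∈ U := by
  by_cases hxS : x ∈ v.S
  · have h1 : v.lower x = min (v.limL x) (v.limR x) := by rw [PiecewiseC1.lower, if_pos hxS]
    have h2 : v.upper x = max (v.limL x) (v.limR x) := by rw [PiecewiseC1.upper, if_pos hxS]
    constructor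
    · exact hv x hx _ (h1 ▸ min_le_left _ _) (h2 ▸ le_max_left _ _)
    · exact hv x hx _ (h1 ▸ min_le_right _ _) (h2 ▸ le_max_right _ _)
  · have hx' : x ∈ Set.Ioo 0 a \ (v.S : Set ℝ) := ⟨hx, fun h => hxS (Finset.mem_coe.mp h)⟩
    obtain ⟨hL, hR⟩ := calib_lim_eq v hx'
    rw [hL, hR]
    exact ⟨calib_mem_f v hv hx', calib_mem_f v hv hx'⟩

private lemma calib_jump_int {a : ℝ} {φx : ℝ → ℝ → ℝ} (v : PiecewiseC1 a) {s : ℝ}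
    (hs : s ∈ Set.Ioo 0 a) :
    ∫ t in v.limL s..v.limR s, φx s t = v.nu s * ∫ t in v.lower s..v.upper s, φx s t := by
  by_cases hsS : s ∈ v.S
  · have hne : v.limL s ≠ v.limR s := (v.jump_iff s hs).mpr hsS
    have hl : v.lower s = min (v.limL s) (v.limR s) := by rw [PiecewiseC1.lower, if_pos hsS]
    have hu : v.upper s = max (v.limL s) (v.limR s) := by rw [PiecewiseC1.upper, if_pos hsS]
    rcases hne.lt_or_gt with h | h
    · rw [hl, hu, min_eq_left h.le, max_eq_right h.le, PiecewiseC1.nu,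
        Real.sign_of_pos (by linarith : (0:ℝ) < v.limR s - v.limL s), one_mul]
    · rw [hl, hu, min_eq_right h.le, max_eq_left h.le, PiecewiseC1.nu,
        Real.sign_of_neg (by linarith : v.limR s - v.limL s < 0),
        intervalIntegral.integral_symm]
      ring
  · have heq : v.limL s = v.limR s := by
      by_contra hne
      exact hsS ((v.jump_iff s hs).mp hne)
    rw [PiecewiseC1.nu, ← heq, sub_self, Real.sign_zero, zero_mul, heq,
      intervalIntegral.integral_same]

private lemma calib_nu_zero {a : ℝ} (v : PiecewiseC1 a) {s : ℝ}
    (hs : s ∈ Set.Ioo 0 a) (hsS : s ∉ v.S) : v.nu s = 0 := by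
  have heq : v.limL s = v.limR s := by
    by_contra hne
    exact hsS ((v.jump_iff s hs).mp hne)
  rw [PiecewiseC1.nu, ← heq, sub_self, Real.sign_zero]

private lemma calib_ofReal_sum_le {α : Type*} (s : Finset α) (f : α → ℝ) :
    ENNReal.ofReal (∑ i ∈ s, f i) ≤ ∑ i ∈ s, ENNReal.ofReal (f i) := by
  induction s using Finset.cons_induction with
  | empty => simp
  | cons b s hb ih =>
    rw [Finset.sum_cons, Finset.sum_cons]
    exact ENNReal.ofReal_add_le.trans (add_le_add le_rfl ih)

private lemma calib_ofReal_max (r : ℝ) : ENNReal.ofReal (max r 0) = ENNReal.ofReal r := by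
  rcases le_total r 0 with h | h
  · rw [max_eq_right h, ENNReal.ofReal_zero, eq_comm, ENNReal.ofReal_eq_zero]; exact h
  · rw [max_eq_left h]

private lemma calib_integrable_g {a : ℝ} (ha : 0 < a) {U : Set (ℝ × ℝ)} {φx φt : ℝ → ℝ → ℝ}
    (hφc : ContinuousOn (fun p : ℝ × ℝ => φx p.1 p.2) U)
    (hφtc : ContinuousOn (fun p : ℝ × ℝ => φt p.1 p.2) U)
    {C : ℝ} (hC : ∀ p ∈ U, |φx p.1 p.2| ≤ C ∧ |φt p.1 p.2| ≤ C)
    (v : PiecewiseC1 a) (hv : v.GraphIn U) :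
    IntegrableOn (fun x => φx x (v.f x) * v.f' x - φt x (v.f x)) (Set.Ioo 0 a) volume := by
  obtain ⟨M, hM⟩ := calib_bdd v.S 0 a ha v.S_sub v.f' v.derivCont v.deriv_limL v.deriv_limR
  have hSnull : volume (v.S : Set ℝ) = 0 := (v.S.countable_toSet).measure_zero _
  have hopen : IsOpen (Set.Ioo 0 a \ (v.S : Set ℝ)) :=
    isOpen_Ioo.sdiff v.S.finite_toSet.isClosed
  have hfc : ContinuousOn v.f (Set.Ioo 0 a \ (v.S : Set ℝ)) :=
    fun x hx => ((v.hasDeriv x hx).continuousAt).continuousWithinAt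
  have hmap : ∀ x ∈ Set.Ioo 0 a \ (v.S : Set ℝ), ((x, v.f x) : ℝ × ℝ) ∈ U :=
    fun x hx => calib_mem_f v hv hx
  have hgc : ContinuousOn (fun x => φx x (v.f x) * v.f' x - φt x (v.f x))
      (Set.Ioo 0 a \ (v.S : Set ℝ)) := by
    have h1 : ContinuousOn (fun x => ((x, v.f x) : ℝ × ℝ)) (Set.Ioo 0 a \ (v.S : Set ℝ)) :=
      continuousOn_id.prodMk hfc
    exact ((hφc.comp h1 hmap).mul v.derivCont).sub (hφtc.comp h1 hmap)
  have hres : volume.restrict (Set.Ioo 0 a \ (v.S : Set ℝ)) = volume.restrict (Set.Ioo 0 a) := by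
    apply Measure.restrict_congr_set
    rw [MeasureTheory.diff_ae_eq_self]
    exact measure_mono_null Set.inter_subset_right hSnull
  have hmeas : AEStronglyMeasurable (fun x => φx x (v.f x) * v.f' x - φt x (v.f x))
      (volume.restrict (Set.Ioo 0 a)) := by
    have := hgc.aestronglyMeasurable (μ := volume) hopen.measurableSet
    rwa [hres] at this
  have hae1 : ∀ᵐ x ∂(volume.restrict (Set.Ioo 0 a)), x ∈ Set.Ioo 0 a :=
    ae_restrict_mem measurableSet_Ioo
  have hae2 : ∀ᵐ x ∂(volume.restrict (Set.Ioo 0 a)), x ∉ (v.S : Set ℝ) :=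
    ae_restrict_of_ae (MeasureTheory.measure_eq_zero_iff_ae_notMem.mp hSnull)
  have hbd : ∀ᵐ x ∂(volume.restrict (Set.Ioo 0 a)),
      ‖φx x (v.f x) * v.f' x - φt x (v.f x)‖ ≤ C * M + C := by
    filter_upwards [hae1, hae2] with x h1 h2
    have hxU := hmap x ⟨h1, h2⟩
    have hb1 : |φx x (v.f x)| ≤ C := (hC _ hxU).1
    have hb2 : |φt x (v.f x)| ≤ C := (hC _ hxU).2
    have hb3 : |v.f' x| ≤ M := hM x ⟨h1, h2⟩
    have hC0 : (0:ℝ) ≤ C := (abs_nonneg _).trans hb1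
    rw [Real.norm_eq_abs]
    calc |φx x (v.f x) * v.f' x - φt x (v.f x)|
        ≤ |φx x (v.f x) * v.f' x| + |φt x (v.f x)| := abs_sub _ _
      _ = |φx x (v.f x)| * |v.f' x| + |φt x (v.f x)| := by rw [abs_mul]
      _ ≤ C * M + C := by
          have := mul_le_mul hb1 hb3 (abs_nonneg _) hC0
          linarith
  exact Integrable.mono' (integrableOn_const measure_Ioo_lt_top.ne) hmeas hbd

end CalibStage4

/-- **Theorem 03.1, one-dimensional case**: the calibration criterion for general
free discontinuity functionals; no regularity or convexity is assumed on `f`, `ψ`.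
The extended-real conditions `φˣ·w ≤ φᵗ + f` and `ν·∫φˣ ≤ ψ` are expressed via
`ENNReal.ofReal`, the equalities (a2), (b2) together with the sign conditions. -/
theorem statement_2
    (a : ℝ) (ha : 0 < a)
    (f : ℝ → ℝ → ℝ → ℝ≥0∞) (hf_meas : Measurable (fun p : ℝ × ℝ × ℝ => f p.1 p.2.1 p.2.2))
    (ψ : ℝ → ℝ → ℝ → ℝ → ℝ≥0∞)
    (hψ_meas : Measurable (fun p : ℝ × ℝ × ℝ × ℝ => ψ p.1 p.2.1 p.2.2.1 p.2.2.2))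
    (τ₁ τ₂ : ℝ → EReal)
    (hτ₁ : ContinuousOn τ₁ (Set.Icc 0 a)) (hτ₂ : ContinuousOn τ₂ (Set.Icc 0 a))
    (hττ : ∀ x ∈ Set.Icc 0 a, τ₁ x ≤ τ₂ x)
    (U : Set (ℝ × ℝ))
    (hU : U = {p : ℝ × ℝ | p.1 ∈ Set.Ioo 0 a ∧ τ₁ p.1 < (p.2 : EReal) ∧ (p.2 : EReal) < τ₂ p.1})
    (u : PiecewiseC1 a) (hu : u.GraphIn U)
    (φx φt : ℝ → ℝ → ℝ)
    (hφ_C1 : ContDiffOn ℝ 1 (fun p : ℝ × ℝ => (φx p.1 p.2, φt p.1 p.2)) U)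
    (hφ_bdd : ∃ C : ℝ, ∀ p ∈ U, |φx p.1 p.2| ≤ C ∧ |φt p.1 p.2| ≤ C)
    -- (a1): φˣ(x,t)·w ≤ φᵗ(x,t) + f(x,t,w)
    (ha1 : ∀ᵐ x ∂(volume.restrict (Set.Ioo 0 a)), ∀ t : ℝ,
      τ₁ x < (t : EReal) → (t : EReal) < τ₂ x → ∀ w : ℝ,
      ENNReal.ofReal (φx x t * w - φt x t) ≤ f x t w)
    -- (a2): φˣ(x,u(x))·u'(x) = φᵗ(x,u(x)) + f(x,u(x),u'(x))
    (ha2 : ∀ᵐ x ∂(volume.restrict (Set.Ioo 0 a)),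
      0 ≤ φx x (u.f x) * u.f' x - φt x (u.f x) ∧
      f x (u.f x) (u.f' x) = ENNReal.ofReal (φx x (u.f x) * u.f' x - φt x (u.f x)))
    -- (b1): ν·∫_{t₁}^{t₂} φˣ(x,t) dt ≤ ψ(x,t₁,t₂,ν)
    (hb1 : ∀ x ∈ Set.Ioo 0 a, ∀ t₁ t₂ : ℝ, τ₁ x < (t₁ : EReal) → t₁ < t₂ →
      (t₂ : EReal) < τ₂ x → ∀ ν : ℝ, ν = -1 ∨ ν = 1 →
      ENNReal.ofReal (ν * ∫ t in t₁..t₂, φx x t) ≤ ψ x t₁ t₂ ν)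
    -- (b2): ν_u(x)·∫_{u⁻}^{u⁺} φˣ(x,t) dt = ψ(x,u⁻(x),u⁺(x),ν_u(x))
    (hb2 : ∀ x ∈ u.S,
      0 ≤ u.nu x * ∫ t in u.lower x..u.upper x, φx x t ∧
      ψ x (u.lower x) (u.upper x) (u.nu x) =
        ENNReal.ofReal (u.nu x * ∫ t in u.lower x..u.upper x, φx x t))
    -- (c1)
    (hc1 : ∀ p ∈ U, deriv (fun y : ℝ => φx y p.2) p.1 + deriv (fun s : ℝ => φt p.1 s) p.2 = 0) :
    ∀ v : PiecewiseC1 a, v.GraphIn U →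
      v.limR 0 = u.limR 0 → v.limL a = u.limL a →
      Fgen a f ψ u ≤ Fgen a f ψ v := by
  intro v hv hv0 hva
  classical
  obtain ⟨C, hC⟩ := hφ_bdd
  -- continuity of τ₁, τ₂ inside (0,a)
  have hτ1c : ∀ x ∈ Set.Ioo 0 a, ContinuousAt τ₁ x := fun x hx =>
    (hτ₁ x (Set.Ioo_subset_Icc_self hx)).continuousAt
      (mem_nhds_iff.mpr ⟨Set.Ioo 0 a, Set.Ioo_subset_Icc_self, isOpen_Ioo, hx⟩)
  have hτ2c : ∀ x ∈ Set.Ioo 0 a, ContinuousAt τ₂ x := fun x hx =>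
    (hτ₂ x (Set.Ioo_subset_Icc_self hx)).continuousAt
      (mem_nhds_iff.mpr ⟨Set.Ioo 0 a, Set.Ioo_subset_Icc_self, isOpen_Ioo, hx⟩)
  -- U is open
  have hUopen : IsOpen U := by
    rw [hU, isOpen_iff_mem_nhds]
    rintro ⟨x, t⟩ ⟨hx, h1, h2⟩
    have o1 : IsOpen {r : EReal × EReal | r.1 < r.2} := isOpen_lt continuous_fst continuous_snd
    have c1 : ContinuousAt (fun q : ℝ × ℝ => ((τ₁ q.1, ((q.2 : ℝ) : EReal)) : EReal × EReal))
        (x, t) :=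
      ((hτ1c x hx).comp continuousAt_fst).prodMk
        (continuous_coe_real_ereal.continuousAt.comp continuousAt_snd)
    have c2 : ContinuousAt (fun q : ℝ × ℝ => ((((q.2 : ℝ) : EReal), τ₂ q.1) : EReal × EReal))
        (x, t) :=
      (continuous_coe_real_ereal.continuousAt.comp continuousAt_snd).prodMk
        ((hτ2c x hx).comp continuousAt_fst)
    have m0 : {q : ℝ × ℝ | q.1 ∈ Set.Ioo 0 a} ∈ nhds (x, t) :=
      continuousAt_fst.preimage_mem_nhds (isOpen_Ioo.mem_nhds hx)
    have m1 := c1.preimage_mem_nhds (o1.mem_nhds (by exact h1))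
    have m2 := c2.preimage_mem_nhds (o1.mem_nhds (by exact h2))
    filter_upwards [m0, m1, m2] with q hq0 hq1 hq2
    exact ⟨hq0, hq1, hq2⟩
  -- vertical convexity of U
  have hconv : ∀ x t₁ t₂ t, (x,t₁) ∈ U → (x,t₂) ∈ U → t₁ ≤ t → t ≤ t₂ → (x,t) ∈ U := by
    intro x t₁ t₂ t h1 h2 hle1 hle2
    rw [hU] at h1 h2 ⊢
    exact ⟨h1.1, lt_of_lt_of_le h1.2.1 (EReal.coe_le_coe_iff.mpr hle1),
      lt_of_le_of_lt (EReal.coe_le_coe_iff.mpr hle2) h2.2.2⟩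
  have hφc : ContinuousOn (fun p : ℝ × ℝ => φx p.1 p.2) U :=
    continuous_fst.comp_continuousOn hφ_C1.continuousOn
  have hφtc : ContinuousOn (fun p : ℝ × ℝ => φt p.1 p.2) U :=
    continuous_snd.comp_continuousOn hφ_C1.continuousOn
  have hCx : ∀ p ∈ U, |φx p.1 p.2| ≤ C := fun p hp => (hC p hp).1
  -- integrability of the two integrands
  have hIu : IntegrableOn (fun x => φx x (u.f x) * u.f' x - φt x (u.f x))
      (Set.Ioo 0 a) volume := calib_integrable_g ha hφc hφtc hC u hu
  have hIv : IntegrableOn (fun x => φx x (v.f x) * v.f' x - φt x (v.f x))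
      (Set.Ioo 0 a) volume := calib_integrable_g ha hφc hφtc hC v hv
  -- the union of jump sets
  have hSsub : ∀ s ∈ u.S ∪ v.S, s ∈ Set.Ioo 0 a := by
    intro s hs
    rcases Finset.mem_union.mp hs with h | h
    · exact u.S_sub s h
    · exact v.S_sub s h
  have hcoeS : ((u.S ∪ v.S : Finset ℝ) : Set ℝ) = (u.S : Set ℝ) ∪ (v.S : Set ℝ) :=
    Finset.coe_union _ _
  have hopenS : IsOpen (Set.Ioo 0 a \ ((u.S ∪ v.S : Finset ℝ) : Set ℝ)) :=
    isOpen_Ioo.sdiff (u.S ∪ v.S).finite_toSet.isClosed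
  have hmemsplit : ∀ x ∈ Set.Ioo 0 a \ ((u.S ∪ v.S : Finset ℝ) : Set ℝ),
      x ∈ Set.Ioo 0 a \ (u.S : Set ℝ) ∧ x ∈ Set.Ioo 0 a \ (v.S : Set ℝ) := by
    intro x hx
    rw [hcoeS] at hx
    exact ⟨⟨hx.1, fun h => hx.2 (Set.mem_union_left _ h)⟩,
      ⟨hx.1, fun h => hx.2 (Set.mem_union_right _ h)⟩⟩
  -- derivative of D
  have hDeriv : ∀ x ∈ Set.Ioo 0 a \ ((u.S ∪ v.S : Finset ℝ) : Set ℝ),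
      HasDerivAt (fun y => ∫ t in u.f y..v.f y, φx y t)
        ((φx x (v.f x) * v.f' x - φt x (v.f x)) - (φx x (u.f x) * u.f' x - φt x (u.f x))) x := by
    intro x hx
    obtain ⟨hxu, hxv⟩ := hmemsplit x hx
    have evmem : ∀ᶠ y in nhds x, y ∈ Set.Ioo 0 a \ ((u.S ∪ v.S : Finset ℝ) : Set ℝ) :=
      hopenS.eventually_mem hx
    have huU : ∀ᶠ y in nhds x, (y, u.f y) ∈ U :=
      evmem.mono (fun y hy => calib_mem_f u hu (hmemsplit y hy).1)
    have hvU : ∀ᶠ y in nhds x, (y, v.f y) ∈ U :=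
      evmem.mono (fun y hy => calib_mem_f v hv (hmemsplit y hy).2)
    exact calib_hasDerivAt_D hUopen hconv hφ_C1 hc1
      (calib_mem_f u hu hxu) (calib_mem_f v hv hxv)
      (u.hasDeriv x hxu) rfl (v.hasDeriv x hxv) rfl huU hvU
  -- interval-integrability of the derivative
  have hIntD' : IntervalIntegrable
      (fun y => (φx y (v.f y) * v.f' y - φt y (v.f y)) - (φx y (u.f y) * u.f' y - φt y (u.f y)))
      volume 0 a := by
    rw [intervalIntegrable_iff_integrableOn_Ioo_of_le ha.le]
    exact hIv.sub hIu
  -- tendsto facts at interior jump points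
  have hjump : ∀ s ∈ u.S ∪ v.S,
      Tendsto (fun y => ∫ t in u.f y..v.f y, φx y t) (nhdsWithin s (Set.Iio s))
        (nhds (∫ t in u.limL s..v.limL s, φx s t)) ∧
      Tendsto (fun y => ∫ t in u.f y..v.f y, φx y t) (nhdsWithin s (Set.Ioi s))
        (nhds (∫ t in u.limR s..v.limR s, φx s t)) := by
    intro s hsS
    have hs := hSsub s hsS
    have eL : ∀ᶠ x in nhdsWithin s (Set.Iio s),
        x ∈ Set.Ioo 0 a \ (u.S : Set ℝ) ∧ x ∈ Set.Ioo 0 a \ (v.S : Set ℝ) := by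
      have e1 : ∀ᶠ x in nhdsWithin s (Set.Iio s), x ∈ Set.Iio s := eventually_mem_nhdsWithin
      have e2 : ∀ᶠ x in nhdsWithin s (Set.Iio s), x ∈ Set.Ioi (0:ℝ) :=
        (isOpen_Ioi.eventually_mem hs.1).filter_mono nhdsWithin_le_nhds
      have ene : ∀ᶠ x in nhdsWithin s (Set.Iio s), x ≠ s := e1.mono fun x hx => ne_of_lt hx
      have eS1 := calib_avoid u.S nhdsWithin_le_nhds ene
      have eS2 := calib_avoid v.S nhdsWithin_le_nhds ene
      filter_upwards [e1, e2, eS1, eS2] with x h1 h2 h3 h4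
      exact ⟨⟨⟨h2, h1.trans hs.2⟩, h3⟩, ⟨⟨h2, h1.trans hs.2⟩, h4⟩⟩
    have eR : ∀ᶠ x in nhdsWithin s (Set.Ioi s),
        x ∈ Set.Ioo 0 a \ (u.S : Set ℝ) ∧ x ∈ Set.Ioo 0 a \ (v.S : Set ℝ) := by
      have e1 : ∀ᶠ x in nhdsWithin s (Set.Ioi s), x ∈ Set.Ioi s := eventually_mem_nhdsWithin
      have e2 : ∀ᶠ x in nhdsWithin s (Set.Ioi s), x ∈ Set.Iio a :=
        (isOpen_Iio.eventually_mem hs.2).filter_mono nhdsWithin_le_nhds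
      have ene : ∀ᶠ x in nhdsWithin s (Set.Ioi s), x ≠ s := e1.mono fun x hx => (ne_of_lt hx).symm
      have eS1 := calib_avoid u.S nhdsWithin_le_nhds ene
      have eS2 := calib_avoid v.S nhdsWithin_le_nhds ene
      filter_upwards [e1, e2, eS1, eS2] with x h1 h2 h3 h4
      exact ⟨⟨⟨hs.1.trans h1, h2⟩, h3⟩, ⟨⟨hs.1.trans h1, h2⟩, h4⟩⟩
    constructor
    · exact calib_tendsto_D hUopen hconv hφc hCx nhdsWithin_le_nhds
        (calib_mem_lim u hu hs).1 (calib_mem_lim v hv hs).1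
        (u.tendsto_limL s ⟨hs.1, hs.2.le⟩) (v.tendsto_limL s ⟨hs.1, hs.2.le⟩)
        (eL.mono fun x hx => calib_mem_f u hu hx.1)
        (eL.mono fun x hx => calib_mem_f v hv hx.2)
    · exact calib_tendsto_D hUopen hconv hφc hCx nhdsWithin_le_nhds
        (calib_mem_lim u hu hs).2 (calib_mem_lim v hv hs).2
        (u.tendsto_limR s ⟨hs.1.le, hs.2⟩) (v.tendsto_limR s ⟨hs.1.le, hs.2⟩)
        (eR.mono fun x hx => calib_mem_f u hu hx.1)
        (eR.mono fun x hx => calib_mem_f v hv hx.2)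
  -- tendsto 0 at the endpoints
  have hbdd_ev : ∀ (l : Filter ℝ),
      (∀ᶠ x in l, x ∈ Set.Ioo 0 a \ (u.S : Set ℝ) ∧ x ∈ Set.Ioo 0 a \ (v.S : Set ℝ)) →
      ∀ᶠ x in l, ‖∫ t in u.f x..v.f x, φx x t‖ ≤ C * |v.f x - u.f x| := by
    intro l hev
    filter_upwards [hev] with x hx
    refine intervalIntegral.norm_integral_le_of_norm_le_const (fun t ht => ?_)
    have hmem : ((x, t) : ℝ × ℝ) ∈ U :=
      calib_seg hconv (calib_mem_f u hu hx.1) (calib_mem_f v hv hx.2) t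
        (Set.uIoc_subset_uIcc ht)
    exact hCx _ hmem
  have h0ev : ∀ᶠ x in nhdsWithin 0 (Set.Ioi (0:ℝ)),
      x ∈ Set.Ioo 0 a \ (u.S : Set ℝ) ∧ x ∈ Set.Ioo 0 a \ (v.S : Set ℝ) := by
    have e1 : ∀ᶠ x in nhdsWithin 0 (Set.Ioi (0:ℝ)), x ∈ Set.Ioi (0:ℝ) := eventually_mem_nhdsWithin
    have e2 : ∀ᶠ x in nhdsWithin 0 (Set.Ioi (0:ℝ)), x ∈ Set.Iio a :=
      (isOpen_Iio.eventually_mem ha).filter_mono nhdsWithin_le_nhds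
    have ene : ∀ᶠ x in nhdsWithin 0 (Set.Ioi (0:ℝ)), x ≠ 0 := e1.mono fun x hx => (ne_of_lt hx).symm
    have eS1 := calib_avoid u.S nhdsWithin_le_nhds ene
    have eS2 := calib_avoid v.S nhdsWithin_le_nhds ene
    filter_upwards [e1, e2, eS1, eS2] with x h1 h2 h3 h4
    exact ⟨⟨⟨h1, h2⟩, h3⟩, ⟨⟨h1, h2⟩, h4⟩⟩
  have haev : ∀ᶠ x in nhdsWithin a (Set.Iio a),
      x ∈ Set.Ioo 0 a \ (u.S : Set ℝ) ∧ x ∈ Set.Ioo 0 a \ (v.S : Set ℝ) := by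
    have e1 : ∀ᶠ x in nhdsWithin a (Set.Iio a), x ∈ Set.Iio a := eventually_mem_nhdsWithin
    have e2 : ∀ᶠ x in nhdsWithin a (Set.Iio a), x ∈ Set.Ioi (0:ℝ) :=
      (isOpen_Ioi.eventually_mem ha).filter_mono nhdsWithin_le_nhds
    have ene : ∀ᶠ x in nhdsWithin a (Set.Iio a), x ≠ a := e1.mono fun x hx => ne_of_lt hx
    have eS1 := calib_avoid u.S nhdsWithin_le_nhds ene
    have eS2 := calib_avoid v.S nhdsWithin_le_nhds ene
    filter_upwards [e1, e2, eS1, eS2] with x h1 h2 h3 h4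
    exact ⟨⟨⟨h2, h1⟩, h3⟩, ⟨⟨h2, h1⟩, h4⟩⟩
  have htend0 : Tendsto (fun y => ∫ t in u.f y..v.f y, φx y t)
      (nhdsWithin 0 (Set.Ioi (0:ℝ))) (nhds (∫ t in (u.limR 0)..(v.limR 0), φx 0 t)) := by
    have hval : (∫ t in (u.limR 0)..(v.limR 0), φx 0 t) = 0 := by
      rw [hv0, intervalIntegral.integral_same]
    rw [hval]
    have hlim : Tendsto (fun x => C * |v.f x - u.f x|) (nhdsWithin 0 (Set.Ioi (0:ℝ)))
        (nhds (C * |v.limR 0 - u.limR 0|)) :=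
      tendsto_const_nhds.mul
        (((v.tendsto_limR 0 ⟨le_rfl, ha⟩).sub (u.tendsto_limR 0 ⟨le_rfl, ha⟩)).abs)
    rw [hv0, sub_self, abs_zero, mul_zero] at hlim
    exact squeeze_zero_norm' (hbdd_ev _ h0ev) hlim
  have htenda : Tendsto (fun y => ∫ t in u.f y..v.f y, φx y t)
      (nhdsWithin a (Set.Iio a)) (nhds (∫ t in u.limL a..v.limL a, φx a t)) := by
    have hval : (∫ t in u.limL a..v.limL a, φx a t) = 0 := by
      rw [hva, intervalIntegral.integral_same]
    rw [hval]
    have hlim : Tendsto (fun x => C * |v.f x - u.f x|) (nhdsWithin a (Set.Iio a))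
        (nhds (C * |v.limL a - u.limL a|)) :=
      tendsto_const_nhds.mul
        (((v.tendsto_limL a ⟨ha, le_rfl⟩).sub (u.tendsto_limL a ⟨ha, le_rfl⟩)).abs)
    rw [hva, sub_self, abs_zero, mul_zero] at hlim
    exact squeeze_zero_norm' (hbdd_ev _ haev) hlim
  -- the FTC identity
  have hFTC := calib_ftc_jump (u.S ∪ v.S) 0 a ha hSsub
    (fun y => ∫ t in u.f y..v.f y, φx y t)
    (fun y => (φx y (v.f y) * v.f' y - φt y (v.f y)) - (φx y (u.f y) * u.f' y - φt y (u.f y)))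
    (fun s => ∫ t in u.limL s..v.limL s, φx s t)
    (fun s => ∫ t in u.limR s..v.limR s, φx s t)
    hDeriv hIntD' htend0 htenda hjump
  -- endpoint values vanish
  have hDL_a : (∫ t in u.limL a..v.limL a, φx a t) = 0 := by
    rw [hva, intervalIntegral.integral_same]
  have hDR_0 : (∫ t in (u.limR 0)..(v.limR 0), φx 0 t) = 0 := by
    rw [hv0, intervalIntegral.integral_same]
  -- jump values
  have hjumpval : ∀ s ∈ u.S ∪ v.S,
      (∫ t in u.limR s..v.limR s, φx s t) - (∫ t in u.limL s..v.limL s, φx s t)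
      = (v.nu s * ∫ t in v.lower s..v.upper s, φx s t)
        - (u.nu s * ∫ t in u.lower s..u.upper s, φx s t) := by
    intro s hsS
    have hs := hSsub s hsS
    obtain ⟨hmUL, hmUR⟩ := calib_mem_lim u hu hs
    obtain ⟨hmVL, hmVR⟩ := calib_mem_lim v hv hs
    have I1 : IntervalIntegrable (φx s) volume (u.limR s) (u.limL s) :=
      calib_intg hconv hφc hmUR hmUL
    have I2 : IntervalIntegrable (φx s) volume (u.limL s) (v.limL s) :=
      calib_intg hconv hφc hmUL hmVL
    have I3 : IntervalIntegrable (φx s) volume (v.limL s) (v.limR s) :=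
      calib_intg hconv hφc hmVL hmVR
    have e1 := intervalIntegral.integral_add_adjacent_intervals I1 I2
    have e2 := intervalIntegral.integral_add_adjacent_intervals (I1.trans I2) I3
    have e3 : (∫ t in u.limR s..u.limL s, φx s t) = - ∫ t in u.limL s..u.limR s, φx s t :=
      intervalIntegral.integral_symm _ _
    have e4 := calib_jump_int (φx := φx) u hs
    have e5 := calib_jump_int (φx := φx) v hs
    rw [← e4, ← e5]
    linarith
  -- sums over the union restrict to the individual jump sets
  have hsumv : ∑ s ∈ u.S ∪ v.S, (v.nu s * ∫ t in v.lower s..v.upper s, φx s t)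
      = ∑ s ∈ v.S, (v.nu s * ∫ t in v.lower s..v.upper s, φx s t) := by
    symm
    apply Finset.sum_subset Finset.subset_union_right
    intro s hsS hsv
    rw [calib_nu_zero v (hSsub s hsS) hsv, zero_mul]
  have hsumu : ∑ s ∈ u.S ∪ v.S, (u.nu s * ∫ t in u.lower s..u.upper s, φx s t)
      = ∑ s ∈ u.S, (u.nu s * ∫ t in u.lower s..u.upper s, φx s t) := by
    symm
    apply Finset.sum_subset Finset.subset_union_left
    intro s hsS hsu
    rw [calib_nu_zero u (hSsub s hsS) hsu, zero_mul]
  have hsum : ∑ s ∈ u.S ∪ v.S,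
      ((∫ t in u.limR s..v.limR s, φx s t) - (∫ t in u.limL s..v.limL s, φx s t))
      = (∑ s ∈ v.S, (v.nu s * ∫ t in v.lower s..v.upper s, φx s t))
        - ∑ s ∈ u.S, (u.nu s * ∫ t in u.lower s..u.upper s, φx s t) := by
    rw [Finset.sum_congr rfl hjumpval, Finset.sum_sub_distrib, hsumv, hsumu]
  -- rewrite left-hand side as difference of integrals over Ioo
  have hLHS : (∫ y in (0:ℝ)..a,
      ((φx y (v.f y) * v.f' y - φt y (v.f y)) - (φx y (u.f y) * u.f' y - φt y (u.f y))))
      = (∫ x in Set.Ioo 0 a, (φx x (v.f x) * v.f' x - φt x (v.f x)))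
        - ∫ x in Set.Ioo 0 a, (φx x (u.f x) * u.f' x - φt x (u.f x)) := by
    rw [intervalIntegral.integral_of_le ha.le, MeasureTheory.integral_Ioc_eq_integral_Ioo]
    exact MeasureTheory.integral_sub hIv hIu
  -- the key identity
  have key : (∫ x in Set.Ioo 0 a, (φx x (v.f x) * v.f' x - φt x (v.f x)))
        + (∑ s ∈ v.S, (v.nu s * ∫ t in v.lower s..v.upper s, φx s t))
      = (∫ x in Set.Ioo 0 a, (φx x (u.f x) * u.f' x - φt x (u.f x)))
        + ∑ s ∈ u.S, (u.nu s * ∫ t in u.lower s..u.upper s, φx s t) := by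
    rw [hLHS] at hFTC
    beta_reduce at hFTC
    rw [hDL_a, hDR_0, hsum] at hFTC
    linarith
  -- a.e. membership facts
  have hae1 : ∀ᵐ x ∂(volume.restrict (Set.Ioo 0 a)), x ∈ Set.Ioo 0 a :=
    ae_restrict_mem measurableSet_Ioo
  have hae2 : ∀ᵐ x ∂(volume.restrict (Set.Ioo 0 a)), x ∉ (v.S : Set ℝ) :=
    ae_restrict_of_ae (MeasureTheory.measure_eq_zero_iff_ae_notMem.mp
      ((v.S.countable_toSet).measure_zero _))
  -- Fgen u equals ofReal of the calibration value
  have hgu0 : 0 ≤ᵐ[volume.restrict (Set.Ioo 0 a)]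
      (fun x => φx x (u.f x) * u.f' x - φt x (u.f x)) := ha2.mono fun x hx => hx.1
  have hJu0 : (0:ℝ) ≤ ∑ s ∈ u.S, (u.nu s * ∫ t in u.lower s..u.upper s, φx s t) :=
    Finset.sum_nonneg fun s hs => (hb2 s hs).1
  have hFu : Fgen a f ψ u = ENNReal.ofReal
      ((∫ x in Set.Ioo 0 a, (φx x (u.f x) * u.f' x - φt x (u.f x)))
        + ∑ s ∈ u.S, (u.nu s * ∫ t in u.lower s..u.upper s, φx s t)) := by
    have h1 : (∫⁻ x in Set.Ioo 0 a, f x (u.f x) (u.f' x))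
        = ENNReal.ofReal (∫ x in Set.Ioo 0 a, (φx x (u.f x) * u.f' x - φt x (u.f x))) := by
      have hcongr : (∫⁻ x in Set.Ioo 0 a, f x (u.f x) (u.f' x))
          = ∫⁻ x in Set.Ioo 0 a, ENNReal.ofReal (φx x (u.f x) * u.f' x - φt x (u.f x)) :=
        lintegral_congr_ae (ha2.mono fun x hx => hx.2)
      rw [hcongr, ← MeasureTheory.ofReal_integral_eq_lintegral_ofReal hIu hgu0]
    have h2 : (∑ x ∈ u.S, ψ x (u.lower x) (u.upper x) (u.nu x))
        = ENNReal.ofReal (∑ s ∈ u.S, (u.nu s * ∫ t in u.lower s..u.upper s, φx s t)) := by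
      rw [ENNReal.ofReal_sum_of_nonneg (fun s hs => (hb2 s hs).1)]
      exact Finset.sum_congr rfl fun s hs => (hb2 s hs).2
    rw [Fgen, h1, h2,
      ← ENNReal.ofReal_add (MeasureTheory.integral_nonneg_of_ae hgu0) hJu0]
  -- lower bound for Fgen v
  have hFv : ENNReal.ofReal
      ((∫ x in Set.Ioo 0 a, (φx x (v.f x) * v.f' x - φt x (v.f x)))
        + ∑ s ∈ v.S, (v.nu s * ∫ t in v.lower s..v.upper s, φx s t)) ≤ Fgen a f ψ v := by
    have hterm1 : ENNReal.ofReal (∫ x in Set.Ioo 0 a, (φx x (v.f x) * v.f' x - φt x (v.f x)))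
        ≤ ∫⁻ x in Set.Ioo 0 a, f x (v.f x) (v.f' x) := by
      have hIvp : Integrable (fun x => max (φx x (v.f x) * v.f' x - φt x (v.f x)) 0)
          (volume.restrict (Set.Ioo 0 a)) := hIv.pos_part
      have s1 : ENNReal.ofReal (∫ x in Set.Ioo 0 a, (φx x (v.f x) * v.f' x - φt x (v.f x)))
          ≤ ENNReal.ofReal (∫ x in Set.Ioo 0 a,
              max (φx x (v.f x) * v.f' x - φt x (v.f x)) 0) :=
        ENNReal.ofReal_le_ofReal
          (MeasureTheory.integral_mono hIv hIvp (fun x => le_max_left _ _))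
      have s2 : ENNReal.ofReal (∫ x in Set.Ioo 0 a,
            max (φx x (v.f x) * v.f' x - φt x (v.f x)) 0)
          = ∫⁻ x in Set.Ioo 0 a,
              ENNReal.ofReal (max (φx x (v.f x) * v.f' x - φt x (v.f x)) 0) :=
        MeasureTheory.ofReal_integral_eq_lintegral_ofReal hIvp
          (MeasureTheory.ae_of_all _ fun x => le_max_right _ _)
      have s3 : (∫⁻ x in Set.Ioo 0 a,
            ENNReal.ofReal (max (φx x (v.f x) * v.f' x - φt x (v.f x)) 0))
          = ∫⁻ x in Set.Ioo 0 a,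
              ENNReal.ofReal (φx x (v.f x) * v.f' x - φt x (v.f x)) :=
        lintegral_congr fun x => calib_ofReal_max _
      have s4 : (∫⁻ x in Set.Ioo 0 a,
            ENNReal.ofReal (φx x (v.f x) * v.f' x - φt x (v.f x)))
          ≤ ∫⁻ x in Set.Ioo 0 a, f x (v.f x) (v.f' x) := by
        refine lintegral_mono_ae ?_
        filter_upwards [hae1, hae2, ha1] with x h1 h2 h3
        have hmem : ((x, v.f x) : ℝ × ℝ) ∈ U := calib_mem_f v hv ⟨h1, h2⟩
        rw [hU] at hmem
        exact h3 (v.f x) hmem.2.1 hmem.2.2 (v.f' x)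
      calc ENNReal.ofReal (∫ x in Set.Ioo 0 a, (φx x (v.f x) * v.f' x - φt x (v.f x)))
          ≤ _ := s1
        _ = _ := s2
        _ = _ := s3
        _ ≤ _ := s4
    have hterm2 : ENNReal.ofReal (∑ s ∈ v.S, (v.nu s * ∫ t in v.lower s..v.upper s, φx s t))
        ≤ ∑ x ∈ v.S, ψ x (v.lower x) (v.upper x) (v.nu x) := by
      refine (calib_ofReal_sum_le _ _).trans (Finset.sum_le_sum fun s hsv => ?_)
      have hs := v.S_sub s hsv
      have hne : v.limL s ≠ v.limR s := (v.jump_iff s hs).mpr hsv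
      have hl : v.lower s = min (v.limL s) (v.limR s) := by rw [PiecewiseC1.lower, if_pos hsv]
      have hup : v.upper s = max (v.limL s) (v.limR s) := by rw [PiecewiseC1.upper, if_pos hsv]
      have hlu : v.lower s < v.upper s := by rw [hl, hup]; exact min_lt_max.mpr hne
      have hlow_le : v.lower s ≤ v.upper s := hlu.le
      have hmlow : ((s, v.lower s) : ℝ × ℝ) ∈ U := hv s hs _ le_rfl hlow_le
      have hmup : ((s, v.upper s) : ℝ × ℝ) ∈ U := hv s hs _ hlow_le le_rfl
      rw [hU] at hmlow hmup
      have hν : v.nu s = -1 ∨ v.nu s = 1 := by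
        rcases hne.lt_or_gt with h | h
        · right
          rw [PiecewiseC1.nu, Real.sign_of_pos (by linarith : (0:ℝ) < v.limR s - v.limL s)]
        · left
          rw [PiecewiseC1.nu, Real.sign_of_neg (by linarith : v.limR s - v.limL s < 0)]
      exact hb1 s hs (v.lower s) (v.upper s) hmlow.2.1 hlu hmup.2.2 (v.nu s) hν
    calc ENNReal.ofReal _ ≤
        ENNReal.ofReal (∫ x in Set.Ioo 0 a, (φx x (v.f x) * v.f' x - φt x (v.f x)))
          + ENNReal.ofReal (∑ s ∈ v.S, (v.nu s * ∫ t in v.lower s..v.upper s, φx s t)) :=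
        ENNReal.ofReal_add_le
      _ ≤ (∫⁻ x in Set.Ioo 0 a, f x (v.f x) (v.f' x))
          + ∑ x ∈ v.S, ψ x (v.lower x) (v.upper x) (v.nu x) := add_le_add hterm1 hterm2
      _ = Fgen a f ψ v := rfl
  rw [hFu, ← key]
  exact hFv
end CalibAux
end

section
/- Let a>0, α>0, β≥0, g∈L^∞(0,a), let τ₁,τ₂:[0,a]→[−∞,+∞] be continuous with τ₁≤τ₂ and U:={(x,t)∈(0,a)×ℝ : τ₁(x)<t<τ₂(x)}. Let φ=(φ^x,φ^t):U→ℝ×ℝ be a bounded Borel vector field satisfying: (a1) (1/4)|φ^x(x,t)|² ≤ φ^t(x,t)+β|t−g(x)|² for a.e. x and all τ₁(x)<t<τ₂(x); (b1) |∫_{t₁}^{t₂}φ^x(x,t)dt| ≤ α for all x and all τ₁(x)<t₁<t₂<τ₂(x). Then for every u piecewise C¹ with finite jump set on (0,a) with graph Γ_u⊂U: F(u) ≥ ∫₀ᵃ [φ^x(x,u(x))u'(x) − φ^t(x,u(x))] dx + Σ_{x∈S_u} ν_u(x)·∫_{u⁻(x)}^{u⁺(x)} φ^x(x,t) dt. 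-/
open MeasureTheory Set Filter

lemma bdd_of_onesided (a : ℝ) (S : Finset ℝ) (h : ℝ → ℝ)
    (hL : ∀ x ∈ Set.Ioc 0 a, ∃ L : ℝ, Tendsto h (nhdsWithin x (Set.Iio x)) (nhds L))
    (hR : ∀ x ∈ Set.Ico 0 a, ∃ L : ℝ, Tendsto h (nhdsWithin x (Set.Ioi x)) (nhds L)) :
    ∃ M : ℝ, ∀ y ∈ Set.Ioo 0 a \ (S : Set ℝ), |h y| ≤ M := by
  classical
  set E := Set.Ioo 0 a \ (S : Set ℝ) with hE
  -- local bounds on deleted neighborhoods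
  have key : ∀ x ∈ Set.Icc 0 a, ∃ V : Set ℝ, V ∈ nhds x ∧ ∃ M : ℝ,
      ∀ y ∈ V ∩ E, y ≠ x → |h y| ≤ M := by
    intro x hx
    -- right side
    have right : ∃ V₁ : Set ℝ, V₁ ∈ nhds x ∧ ∃ M₁ : ℝ, ∀ y ∈ V₁ ∩ E, x < y → |h y| ≤ M₁ := by
      by_cases hxa : x < a
      · obtain ⟨L, hLt⟩ := hR x ⟨(by exact fun h' => absurd h' (not_lt.mpr hx.1) : ¬ x < 0) |> fun _ => hx.1, hxa⟩
        have : ∀ᶠ y in nhdsWithin x (Set.Ioi x), |h y| ≤ |L| + 1 := by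
          have := hLt (Metric.ball_mem_nhds L one_pos)
          filter_upwards [this] with y hy
          have : |h y - L| < 1 := by simpa [Real.dist_eq] using hy
          calc |h y| ≤ |h y - L| + |L| := by simpa using abs_add_le (h y - L) L
          _ ≤ |L| + 1 := by linarith
        rw [eventually_nhdsWithin_iff] at this
        obtain ⟨V, hV, hVsub⟩ := eventually_iff_exists_mem.mp this
        exact ⟨V, hV, |L| + 1, fun y hy hxy => hVsub y hy.1 hxy⟩
      · refine ⟨Set.univ, univ_mem, 0, fun y hy hxy => absurd (hy.2.1.2) ?_⟩
        exact not_lt.mpr (le_trans (not_lt.mp hxa) hxy.le)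
    have left : ∃ V₂ : Set ℝ, V₂ ∈ nhds x ∧ ∃ M₂ : ℝ, ∀ y ∈ V₂ ∩ E, y < x → |h y| ≤ M₂ := by
      by_cases hx0 : 0 < x
      · obtain ⟨L, hLt⟩ := hL x ⟨hx0, hx.2⟩
        have : ∀ᶠ y in nhdsWithin x (Set.Iio x), |h y| ≤ |L| + 1 := by
          have := hLt (Metric.ball_mem_nhds L one_pos)
          filter_upwards [this] with y hy
          have : |h y - L| < 1 := by simpa [Real.dist_eq] using hy
          calc |h y| ≤ |h y - L| + |L| := by simpa using abs_add_le (h y - L) L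
          _ ≤ |L| + 1 := by linarith
        rw [eventually_nhdsWithin_iff] at this
        obtain ⟨V, hV, hVsub⟩ := eventually_iff_exists_mem.mp this
        exact ⟨V, hV, |L| + 1, fun y hy hxy => hVsub y hy.1 hxy⟩
      · refine ⟨Set.univ, univ_mem, 0, fun y hy hxy => absurd hy.2.1.1 ?_⟩
        exact not_lt.mpr (le_trans hxy.le (not_lt.mp hx0))
    obtain ⟨V₁, hV₁, M₁, hM₁⟩ := right
    obtain ⟨V₂, hV₂, M₂, hM₂⟩ := left
    refine ⟨V₁ ∩ V₂, inter_mem hV₁ hV₂, max M₁ M₂, fun y hy hyx => ?_⟩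
    rcases lt_or_gt_of_ne hyx with hlt | hgt
    · exact le_trans (hM₂ y ⟨hy.1.2, hy.2⟩ hlt) (le_max_right _ _)
    · exact le_trans (hM₁ y ⟨hy.1.1, hy.2⟩ hgt) (le_max_left _ _)
  choose V hVmem M hM using key
  have hcomp : IsCompact (Set.Icc 0 a) := isCompact_Icc
  obtain ⟨t, hcov⟩ := hcomp.elim_nhds_subcover' (fun x hx => V x hx) (fun x hx => hVmem x hx)
  refine ⟨∑ x ∈ t, (|M x.1 x.2| + |h x.1|), fun y hy => ?_⟩
  have hyIcc : y ∈ Set.Icc 0 a := ⟨hy.1.1.le, hy.1.2.le⟩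
  have := hcov hyIcc
  simp only [Set.mem_iUnion] at this
  obtain ⟨x, hxt, hyV⟩ := this
  have hterm : |h y| ≤ |M x.1 x.2| + |h x.1| := by
    by_cases hyx : y = x.1
    · subst hyx; linarith [abs_nonneg (M x.1 x.2)]
    · calc |h y| ≤ M x.1 x.2 := hM x.1 x.2 y ⟨hyV, hy⟩ hyx
        _ ≤ |M x.1 x.2| := le_abs_self _
        _ ≤ _ := le_add_of_nonneg_right (abs_nonneg _)
  refine le_trans hterm (Finset.single_le_sum (f := fun i : (Set.Icc 0 a) => |M i.1 i.2| + |h i.1|) (fun i _ => by positivity) hxt)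


/-- **Lemma 3.7 (inequality part), one-dimensional case.**
If the bounded Borel field `φ` satisfies (a1) and (b1) on `U`, then for every
piecewise `C¹` function `u` with graph contained in `U`, the Mumford–Shah energy
dominates the flux of `φ` through the complete graph of `u`. -/
theorem statement_3
    (a α β : ℝ) (ha : 0 < a) (hα : 0 < α) (hβ : 0 ≤ β)
    (g : ℝ → ℝ) (hg_meas : Measurable g) (hg_bdd : ∃ C : ℝ, ∀ x ∈ Set.Ioo 0 a, |g x| ≤ C)
    (τ₁ τ₂ : ℝ → EReal)
    (hτ₁ : ContinuousOn τ₁ (Set.Icc 0 a)) (hτ₂ : ContinuousOn τ₂ (Set.Icc 0 a))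
    (hττ : ∀ x ∈ Set.Icc 0 a, τ₁ x ≤ τ₂ x)
    (U : Set (ℝ × ℝ))
    (hU : U = {p : ℝ × ℝ | p.1 ∈ Set.Ioo 0 a ∧ τ₁ p.1 < (p.2 : EReal) ∧ (p.2 : EReal) < τ₂ p.1})
    (φx φt : ℝ → ℝ → ℝ)
    (hφ_meas : Measurable (fun p : ℝ × ℝ => (φx p.1 p.2, φt p.1 p.2)))
    (hφ_bdd : ∃ C : ℝ, ∀ p ∈ U, |φx p.1 p.2| ≤ C ∧ |φt p.1 p.2| ≤ C)
    -- (a1)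
    (ha1 : ∀ᵐ x ∂(volume.restrict (Set.Ioo 0 a)), ∀ t : ℝ,
      τ₁ x < (t : EReal) → (t : EReal) < τ₂ x →
      (1 / 4) * (φx x t) ^ 2 ≤ φt x t + β * (t - g x) ^ 2)
    -- (b1)
    (hb1 : ∀ x ∈ Set.Ioo 0 a, ∀ t₁ t₂ : ℝ, τ₁ x < (t₁ : EReal) → t₁ < t₂ →
      (t₂ : EReal) < τ₂ x → |∫ t in t₁..t₂, φx x t| ≤ α) :
    ∀ u : PiecewiseC1 a, u.GraphIn U →
      (∫ x in Set.Ioo 0 a, (φx x (u.f x) * u.f' x - φt x (u.f x)))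
        + ∑ x ∈ u.S, u.nu x * ∫ t in u.lower x..u.upper x, φx x t
      ≤ MS a α β g u := by
  classical
  intro u hGraph
  set E : Set ℝ := Set.Ioo 0 a \ (u.S : Set ℝ) with hEdef
  have hSmeas : MeasurableSet (u.S : Set ℝ) := (u.S.finite_toSet).measurableSet
  have hEmeas : MeasurableSet E := measurableSet_Ioo.diff hSmeas
  have hS0 : volume (u.S : Set ℝ) = 0 := (u.S.countable_toSet).measure_zero _
  have hae : (Set.Ioo 0 a : Set ℝ) =ᵐ[volume] E := by
    apply MeasureTheory.ae_eq_set.mpr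
    constructor
    · refine measure_mono_null (fun x hx => ?_) hS0
      by_contra hxS
      exact hx.2 ⟨hx.1, hxS⟩
    · refine measure_mono_null (fun x hx => absurd hx.1.1 hx.2) hS0
  have hres : volume.restrict (Set.Ioo 0 a) = volume.restrict E :=
    Measure.restrict_congr_set hae
  haveI : IsFiniteMeasure (volume.restrict E) := by
    constructor
    rw [Measure.restrict_apply_univ]
    refine lt_of_le_of_lt (measure_mono Set.diff_subset) ?_
    rw [Real.volume_Ioo]; exact ENNReal.ofReal_lt_top
  -- bounds
  obtain ⟨Mf, hMf⟩ := bdd_of_onesided a u.S u.f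
    (fun x hx => ⟨u.limL x, u.tendsto_limL x hx⟩)
    (fun x hx => ⟨u.limR x, u.tendsto_limR x hx⟩)
  obtain ⟨Mf', hMf'⟩ := bdd_of_onesided a u.S u.f' u.deriv_limL u.deriv_limR
  obtain ⟨Cg, hCg⟩ := hg_bdd
  obtain ⟨Cφ, hCφ⟩ := hφ_bdd
  -- membership of the graph in U off the jump set
  have hmemU : ∀ x ∈ E, (x, u.f x) ∈ U := by
    intro x hx
    have hxS : x ∉ u.S := by simpa using hx.2
    have hl : u.lower x = u.f x := by simp [PiecewiseC1.lower, hxS]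
    have hu : u.upper x = u.f x := by simp [PiecewiseC1.upper, hxS]
    exact hGraph x hx.1 (u.f x) (by rw [hl]) (by rw [hu])
  -- measurability
  have hfc : ContinuousOn u.f E := fun x hx =>
    ((u.hasDeriv x hx).continuousAt).continuousWithinAt
  have hfm : AEMeasurable u.f (volume.restrict E) := hfc.aemeasurable hEmeas
  have hf'm : AEMeasurable u.f' (volume.restrict E) := u.derivCont.aemeasurable hEmeas
  have hpair : AEMeasurable (fun x => (x, u.f x)) (volume.restrict E) :=
    aemeasurable_id.prodMk hfm
  have hφxm : AEMeasurable (fun x => φx x (u.f x)) (volume.restrict E) :=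
    (measurable_fst.comp hφ_meas).comp_aemeasurable hpair
  have hφtm : AEMeasurable (fun x => φt x (u.f x)) (volume.restrict E) :=
    (measurable_snd.comp hφ_meas).comp_aemeasurable hpair
  -- integrability
  have hint_h : Integrable (fun x => φx x (u.f x) * u.f' x - φt x (u.f x))
      (volume.restrict E) := by
    refine Integrable.mono' (integrable_const (Cφ * Mf' + Cφ))
      ((hφxm.mul hf'm).sub hφtm).aestronglyMeasurable ?_
    filter_upwards [ae_restrict_mem hEmeas] with x hx
    rw [Real.norm_eq_abs]
    obtain ⟨hb1', hb2'⟩ := hCφ _ (hmemU x hx)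
    have h1 := hMf' x hx
    have h2 : |φx x (u.f x) * u.f' x - φt x (u.f x)| ≤
        |φx x (u.f x)| * |u.f' x| + |φt x (u.f x)| := by
      calc |φx x (u.f x) * u.f' x - φt x (u.f x)|
          ≤ |φx x (u.f x) * u.f' x| + |φt x (u.f x)| := abs_sub _ _
        _ = _ := by rw [abs_mul]
    have h3 : |φx x (u.f x)| * |u.f' x| ≤ Cφ * Mf' := by
      apply mul_le_mul hb1' h1 (abs_nonneg _) (le_trans (abs_nonneg _) hb1')
    linarith
  have hint_f'2 : Integrable (fun x => (u.f' x) ^ 2) (volume.restrict E) := by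
    refine Integrable.mono' (integrable_const (Mf' ^ 2))
      ((hf'm.pow_const 2).aestronglyMeasurable) ?_
    filter_upwards [ae_restrict_mem hEmeas] with x hx
    have h1 := hMf' x hx
    rw [Real.norm_eq_abs, abs_pow]
    exact pow_le_pow_left₀ (abs_nonneg _) h1 2
  have hint_fg2 : Integrable (fun x => (u.f x - g x) ^ 2) (volume.restrict E) := by
    refine Integrable.mono' (integrable_const ((Mf + Cg) ^ 2))
      (((hfm.sub hg_meas.aemeasurable).pow_const 2).aestronglyMeasurable) ?_
    filter_upwards [ae_restrict_mem hEmeas] with x hx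
    have h1 := hMf x hx
    have h2 := hCg x hx.1
    rw [Real.norm_eq_abs, abs_pow]
    refine pow_le_pow_left₀ (abs_nonneg _) ?_ 2
    calc |u.f x - g x| ≤ |u.f x| + |g x| := abs_sub _ _
      _ ≤ Mf + Cg := add_le_add h1 h2
  -- pointwise a.e. inequality
  have hae1 := ha1
  rw [hres] at hae1
  have hptwise : ∀ᵐ x ∂(volume.restrict E),
      φx x (u.f x) * u.f' x - φt x (u.f x) ≤ (u.f' x) ^ 2 + β * (u.f x - g x) ^ 2 := by
    filter_upwards [ae_restrict_mem hEmeas, hae1] with x hx hx1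
    have hUm := hmemU x hx
    rw [hU] at hUm
    obtain ⟨-, hl, hr⟩ := hUm
    have := hx1 (u.f x) hl hr
    nlinarith [sq_nonneg (u.f' x - φx x (u.f x) / 2)]
  have hIle : (∫ x, (φx x (u.f x) * u.f' x - φt x (u.f x)) ∂(volume.restrict E))
      ≤ ∫ x, ((u.f' x) ^ 2 + β * (u.f x - g x) ^ 2) ∂(volume.restrict E) :=
    integral_mono_ae hint_h (hint_f'2.add (hint_fg2.const_mul β)) hptwise
  have hsplit : (∫ x, ((u.f' x) ^ 2 + β * (u.f x - g x) ^ 2) ∂(volume.restrict E))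
      = (∫ x, (u.f' x) ^ 2 ∂(volume.restrict E))
        + β * ∫ x, (u.f x - g x) ^ 2 ∂(volume.restrict E) := by
    rw [integral_add hint_f'2 (hint_fg2.const_mul β), integral_const_mul]
  -- jump part
  have hjump : ∀ x ∈ u.S, u.nu x * (∫ t in u.lower x..u.upper x, φx x t) ≤ α := by
    intro x hxS
    have hxIoo := u.S_sub x hxS
    have hne : u.limL x ≠ u.limR x := (u.jump_iff x hxIoo).mpr hxS
    have hlt : u.lower x < u.upper x := by
      simp only [PiecewiseC1.lower, PiecewiseC1.upper, if_pos hxS]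
      exact min_lt_max.mpr hne
    have h1 := hGraph x hxIoo (u.lower x) le_rfl hlt.le
    have h2 := hGraph x hxIoo (u.upper x) hlt.le le_rfl
    rw [hU] at h1 h2
    have hb := hb1 x hxIoo (u.lower x) (u.upper x) h1.2.1 hlt h2.2.2
    have hnu : |u.nu x| ≤ 1 := by
      rcases Real.sign_apply_eq (u.limR x - u.limL x) with h | h | h <;>
        simp [PiecewiseC1.nu, h]
    calc u.nu x * (∫ t in u.lower x..u.upper x, φx x t)
        ≤ |u.nu x * (∫ t in u.lower x..u.upper x, φx x t)| := le_abs_self _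
      _ = |u.nu x| * |∫ t in u.lower x..u.upper x, φx x t| := abs_mul _ _
      _ ≤ 1 * α := mul_le_mul hnu hb (abs_nonneg _) zero_le_one
      _ = α := one_mul _
  have hsum : (∑ x ∈ u.S, u.nu x * ∫ t in u.lower x..u.upper x, φx x t)
      ≤ α * (u.S.card : ℝ) := by
    calc (∑ x ∈ u.S, u.nu x * ∫ t in u.lower x..u.upper x, φx x t)
        ≤ ∑ _x ∈ u.S, α := Finset.sum_le_sum hjump
      _ = (u.S.card : ℝ) * α := by rw [Finset.sum_const, nsmul_eq_mul]
      _ = α * (u.S.card : ℝ) := mul_comm _ _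
  show (∫ x, _ ∂(volume.restrict (Set.Ioo 0 a))) + _ ≤ MS a α β g u
  rw [MS, hres]
  linarith [hIle, hsum, hsplit.le, hsplit.ge]
end
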